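/- arXiv:2406.00274 — 8 statements merged into one kernel-verified Lean document; each statement's English description precedes it below -/
import Mathlib

section
/- For every x ∈ X, the Moreau envelope satisfies the gradient dominance property: f_{2r}(x) − f* ≤ (L/(2r) + C) · 2r‖x − x̃(x)‖ (note that 2r‖x − x̃(x)‖ equals the norm of the gradient of f_{2r} at x). -/
open scoped RealInnerProductSpace
set_option maxHeartbeats 1000000 in

/-- the Moreau envelope of an `ℓ`-weakly convex, `L`-Lipschitz,
gradient-dominated function is itself gradient dominated:
`f_{2r}(x) − f* ≤ (L/(2r) + C) · 2r‖x − x̃(x)‖` for every `x ∈ X`. -/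
theorem moreau_envelope_gradient_dominance
    {E : Type*} [NormedAddCommGroup E] [InnerProductSpace ℝ E] [FiniteDimensional ℝ E]
    (X : Set E) (hXne : X.Nonempty) (hXcpt : IsCompact X) (hXconv : Convex ℝ X)
    (ℓ L r C : ℝ) (hℓ : 0 < ℓ) (hL : 0 < L) (hr : ℓ < r) (hC : 0 < C)
    (f : E → ℝ) (hfc : Continuous f)
    (hflip : ∀ x ∈ X, ∀ y ∈ X, |f x - f y| ≤ L * ‖x - y‖)
    (hfwc : ConvexOn ℝ X (fun x => f x + ℓ / 2 * ‖x‖ ^ 2))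
    (fstar : ℝ) (xmin : E) (hxmin : xmin ∈ X)
    (hxminle : ∀ x ∈ X, f xmin ≤ f x) (hfstar : fstar = f xmin)
    -- gradient dominance: `f x − f* ≤ C‖v + w‖` for every `ℓ`-subgradient `v` of `f`
    -- at `x ∈ X` and every `w` in the normal cone of `X` at `x`
    (hgd : ∀ x ∈ X, ∀ v w : E,
      (∀ z ∈ X, f x + ⟪v, z - x⟫ - ℓ / 2 * ‖z - x‖ ^ 2 ≤ f z) →
      (∀ y ∈ X, ⟪w, y - x⟫ ≤ 0) →
      f x - fstar ≤ C * ‖v + w‖)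
    -- Moreau envelope `env = f_{2r}` together with the proximal point `xt = x̃`
    (env : E → ℝ) (xt : E → E)
    (hxt : ∀ x : E, xt x ∈ X ∧
      (∀ z ∈ X, f (xt x) + r * ‖xt x - x‖ ^ 2 ≤ f z + r * ‖z - x‖ ^ 2) ∧
      env x = f (xt x) + r * ‖xt x - x‖ ^ 2) :
    ∀ x ∈ X, env x - fstar ≤ (L / (2 * r) + C) * (2 * r * ‖x - xt x‖) := by
  intro x hx
  obtain ⟨hmem, hopt, henv⟩ := hxt x
  set y := xt x with hy
  have hrpos : (0:ℝ) < r := hℓ.trans hr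
  -- v is an ℓ-subgradient of f at y
  have hsub : ∀ z ∈ X, f y + ⟪(2*r) • (x - y), z - y⟫ - ℓ / 2 * ‖z - y‖ ^ 2 ≤ f z := by
    intro z hz
    have hN : (0:ℝ) ≤ ‖z - y‖ ^ 2 := by positivity
    -- for every t ∈ (0,1], the inequality holds up to a residual of size t(r-ℓ/2)N
    have key : ∀ t : ℝ, 0 < t → t ≤ 1 →
        f y + ⟪(2*r) • (x - y), z - y⟫ - ℓ / 2 * ‖z - y‖ ^ 2
          ≤ f z + t * (r - ℓ/2) * ‖z - y‖ ^ 2 := by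
      intro t ht0 ht1
      set zt := (1 - t) • y + t • z with hzt
      have hztX : zt ∈ X := hXconv hmem hz (by linarith) (le_of_lt ht0) (by ring)
      have h1 : f y + r * ‖y - x‖ ^ 2 ≤ f zt + r * ‖zt - x‖ ^ 2 := hopt zt hztX
      have h2 : f zt + ℓ / 2 * ‖zt‖ ^ 2
          ≤ (1 - t) * (f y + ℓ / 2 * ‖y‖ ^ 2) + t * (f z + ℓ / 2 * ‖z‖ ^ 2) := by
        have := hfwc.2 hmem hz (by linarith : (0:ℝ) ≤ 1 - t) (le_of_lt ht0) (by ring)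
        simpa using this
      have e1 : ‖zt - x‖ ^ 2 = ‖y - x‖ ^ 2 + 2 * t * ⟪y - x, z - y⟫ + t^2 * ‖z - y‖ ^ 2 := by
        simp only [hzt, ← real_inner_self_eq_norm_sq, inner_sub_left, inner_sub_right,
          inner_add_left, inner_add_right, real_inner_smul_left, real_inner_smul_right,
          real_inner_comm z y, real_inner_comm x y, real_inner_comm z x]
        ring
      have e2 : ‖zt‖ ^ 2 = (1-t) * ‖y‖ ^ 2 + t * ‖z‖ ^ 2 - t * (1-t) * ‖z - y‖ ^ 2 := by
        simp only [hzt, ← real_inner_self_eq_norm_sq, inner_sub_left, inner_sub_right,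
          inner_add_left, inner_add_right, real_inner_smul_left, real_inner_smul_right,
          real_inner_comm z y]
        ring
      have e3 : ⟪(2*r) • (x - y), z - y⟫ = - (2 * r * ⟪y - x, z - y⟫) := by
        rw [real_inner_smul_left, show x - y = -(y - x) from (neg_sub y x).symm,
          inner_neg_left]
        ring
      rw [e1] at h1
      rw [e2] at h2
      set I := ⟪y - x, z - y⟫ with hI
      set N := ‖z - y‖ ^ 2 with hNdef
      have hA : f y ≤ f zt + 2*r*t*I + r*t^2*N := by nlinarith [h1]
      have hB : f zt ≤ (1-t)*(f y) + t*(f z) + ℓ/2*(t*(1-t)*N) := by nlinarith [h2]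
      have hcomb : t * (f y + (- (2*r*I)) - ℓ/2*N) ≤ t * (f z + t*(r - ℓ/2)*N) := by
        nlinarith [hA, hB]
      have hfy : f y + (- (2*r*I)) - ℓ/2*N ≤ f z + t*(r - ℓ/2)*N :=
        (mul_le_mul_iff_right₀ ht0).mp hcomb
      rw [e3]
      linarith [hfy]
    -- take t → 0 via an ε-argument
    refine le_of_forall_pos_le_add ?_
    intro ε hε
    set D := (r - ℓ/2) * ‖z - y‖ ^ 2 with hD
    have hD0 : 0 ≤ D := by
      have : (0:ℝ) < r - ℓ/2 := by linarith
      positivity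
    set t := min 1 (ε / (D + 1)) with htdef
    have ht0 : 0 < t := lt_min one_pos (by positivity)
    have ht1 : t ≤ 1 := min_le_left _ _
    have hbound := key t ht0 ht1
    have : t * (r - ℓ/2) * ‖z - y‖ ^ 2 ≤ ε := by
      have h1 : t ≤ ε / (D + 1) := min_le_right _ _
      have h2 : t * D ≤ (ε / (D + 1)) * D := by
        apply mul_le_mul_of_nonneg_right h1 hD0
      have h3 : (ε / (D + 1)) * D ≤ ε := by
        rw [div_mul_eq_mul_div, div_le_iff₀ (by positivity)]
        nlinarith
      calc t * (r - ℓ/2) * ‖z - y‖ ^ 2 = t * D := by rw [hD]; ring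
        _ ≤ ε := le_trans h2 h3
    linarith
  -- normal cone: w = 0
  have hnc : ∀ z ∈ X, ⟪(0:E), z - y⟫ ≤ 0 := by
    intro z hz; simp
  have hmain := hgd y hmem ((2*r) • (x - y)) 0 hsub hnc
  have hnorm : ‖(2*r) • (x - y) + 0‖ = 2 * r * ‖x - y‖ := by
    rw [add_zero, norm_smul, Real.norm_eq_abs, abs_of_pos (by linarith)]
  rw [hnorm] at hmain
  -- bound r‖y - x‖² ≤ L‖x - y‖ using Lipschitz and optimality at z = x
  have hoptx := hopt x hx
  have hlip : f x - f y ≤ L * ‖x - y‖ := by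
    have := hflip x hx y hmem
    exact (abs_le.mp this).2
  have hq : r * ‖y - x‖ ^ 2 ≤ L * ‖x - y‖ := by
    simp only [sub_self, norm_zero] at hoptx
    nlinarith [hoptx]
  have hfinal : env x - fstar ≤ L * ‖x - y‖ + C * (2 * r * ‖x - y‖) := by
    rw [henv]; linarith
  have : (L / (2 * r) + C) * (2 * r * ‖x - y‖) = L * ‖x - y‖ + C * (2 * r * ‖x - y‖) := by
    field_simp
  linarith [hfinal, this.ge, this.le]
end

section
/- (Regional exponential growth) For every ζ > 0 and every π ∈ Π with φ_{2ℓ}(π) − φ* ≥ ζ, one has φ(π) − φ* ≥ ζ · exp(dist(π, Π*_ℓ(ζ))/C). -/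
open scoped RealInnerProductSpace

set_option maxHeartbeats 2000000 in
/-- Regional exponential growth: for every `ζ > 0` and every `π ∈ Π` with
`φ_{2ℓ}(π) − φ* ≥ ζ`, one has `φ(π) − φ* ≥ ζ · exp(dist(π, Π*_ℓ(ζ))/C)`. -/
theorem regional_exponential_growth
    {E : Type*} [NormedAddCommGroup E] [InnerProductSpace ℝ E] [FiniteDimensional ℝ E]
    (Pi : Set E) (hPine : Pi.Nonempty) (hPicpt : IsCompact Pi) (hPiconv : Convex ℝ Pi)
    (ℓ : ℝ) (hℓ : 0 < ℓ)
    (φ : E → ℝ) (hφc : Continuous φ)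
    (hφwc : ConvexOn ℝ Pi (fun π => φ π + ℓ / 2 * ‖π‖ ^ 2))
    -- Moreau envelope `env = φ_{2ℓ}` and proximal point `pt = π̃`
    (env : E → ℝ) (pt : E → E)
    (hpt : ∀ π : E, pt π ∈ Pi ∧
      (∀ z ∈ Pi, φ (pt π) + ℓ * ‖π - pt π‖ ^ 2 ≤ φ z + ℓ * ‖π - z‖ ^ 2) ∧
      env π = φ (pt π) + ℓ * ‖π - pt π‖ ^ 2)
    (φstar : ℝ) (πmin : E) (hπmin : πmin ∈ Pi)
    (hπminle : ∀ π ∈ Pi, φ πmin ≤ φ π) (hφstar : φstar = φ πmin)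
    -- gradient-dominance-like property
    (C : ℝ) (hC : 0 < C)
    (hgd : ∀ π ∈ Pi, φ π - φstar ≤ 2 * ℓ * C * ‖π - pt π‖) :
    ∀ ζ : ℝ, 0 < ζ → ∀ π ∈ Pi, ζ ≤ env π - φstar →
      ζ * Real.exp (Metric.infDist π {π' ∈ Pi | env π' - φstar < ζ} / C) ≤ φ π - φstar := by
  classical
  intro ζ hζ π hπ hζle
  set S : Set E := {π' ∈ Pi | env π' - φstar < ζ} with hSdef
  set D : ℝ := Metric.infDist π S with hDdef
  set M : ℝ := Metric.diam Pi with hMdef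
  have hM0 : 0 ≤ M := Metric.diam_nonneg
  have henv_le : ∀ y ∈ Pi, env y ≤ φ y := by
    intro y hy
    obtain ⟨h1, h2, h3⟩ := hpt y
    have h4 := h2 y hy
    simp only [sub_self, norm_zero] at h4
    rw [h3]
    nlinarith [h4]
  have henv_ge : ∀ y : E, φstar ≤ env y := by
    intro y
    obtain ⟨h1, h2, h3⟩ := hpt y
    have h4 := hπminle _ h1
    have h5 : (0:ℝ) ≤ ℓ * ‖y - pt y‖ ^ 2 := by positivity
    rw [h3, hφstar]; linarith
  have hse : ∀ y ∈ Pi, env y - φstar ≤ 2 * ℓ * C * ‖y - pt y‖ := by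
    intro y hy
    have := hgd y hy
    have := henv_le y hy
    linarith
  -- Main lemma for a fixed damping parameter `t`
  have main : ∀ t : ℝ, 0 < t → t ≤ 1 → t * ζ ≤ ℓ * C ^ 2 →
      ζ * Real.exp ((2 - t) / (2 * C) * (D - t * M)) ≤ φ π - φstar := by
    intro t ht ht1 htζ
    obtain ⟨α, hαdef⟩ : ∃ a : ℝ, a = (2 - t) / (2 * C) := ⟨_, rfl⟩
    have hα : 2 * C * α = 2 - t := by
      rw [hαdef]; field_simp
    have hα0 : 0 ≤ α := hαdef ▸ div_nonneg (by linarith) (by linarith)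
    have hαpos : 0 < α := hαdef ▸ div_pos (by linarith) (by linarith)
    obtain ⟨x, hx0, hxs⟩ : ∃ x : ℕ → E, x 0 = π ∧
        ∀ k, x (k+1) = x k + t • (pt (x k) - x k) :=
      ⟨fun k => (fun y => y + t • (pt y - y))^[k] π, rfl,
        fun k => Function.iterate_succ_apply' _ k π⟩
    have hxPi : ∀ k, x k ∈ Pi := by
      intro k; induction k with
      | zero => rw [hx0]; exact hπ
      | succ n ih =>
        have h1 := (hpt (x n)).1
        have h2 : x (n+1) = (1 - t) • x n + t • pt (x n) := by
          rw [hxs]; module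
        rw [h2]
        exact hPiconv ih h1 (by linarith) ht.le (by ring)
    obtain ⟨s, hs_eq⟩ : ∃ s : ℕ → ℝ, ∀ k, s k = ‖x k - pt (x k)‖ := ⟨_, fun _ => rfl⟩
    have hs0 : ∀ k, 0 ≤ s k := fun k => (hs_eq k) ▸ norm_nonneg _
    have hsM : ∀ k, s k ≤ M := by
      intro k
      rw [hs_eq, ← dist_eq_norm]
      exact Metric.dist_le_diam_of_mem hPicpt.isBounded (hxPi k) (hpt (x k)).1
    have hstep : ∀ k, env (x (k+1)) ≤ env (x k) - ℓ * t * (2 - t) * s k ^ 2 := by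
      intro k
      obtain ⟨hp1, hp2, hp3⟩ := hpt (x (k+1))
      have h5 : x (k+1) - pt (x k) = (1 - t) • (x k - pt (x k)) := by
        rw [hxs]; module
      have h6 : env (x (k+1)) ≤ φ (pt (x k)) + ℓ * ‖x (k+1) - pt (x k)‖ ^ 2 := by
        rw [hp3]; exact hp2 _ (hpt (x k)).1
      rw [h5] at h6
      have h7 : ‖(1 - t) • (x k - pt (x k))‖ ^ 2 = (1 - t) ^ 2 * s k ^ 2 := by
        rw [norm_smul, Real.norm_eq_abs, mul_pow, sq_abs, hs_eq]
      rw [h7] at h6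
      have h8 : env (x k) = φ (pt (x k)) + ℓ * s k ^ 2 := by
        rw [hs_eq]; exact (hpt (x k)).2.2
      calc env (x (k+1)) ≤ φ (pt (x k)) + ℓ * ((1 - t) ^ 2 * s k ^ 2) := h6
        _ = env (x k) - ℓ * t * (2 - t) * s k ^ 2 := by rw [h8]; ring
    have hrec : ∀ k, env (x (k+1)) - φstar ≤ (env (x k) - φstar) * (1 - α * (t * s k)) := by
      intro k
      have h1 := hstep k
      have h2 : env (x k) - φstar ≤ 2 * ℓ * C * s k := by
        rw [hs_eq]; exact hse _ (hxPi k)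
      have h3 := henv_ge (x k)
      have hprod : 0 ≤ α * t * s k * (2 * ℓ * C * s k - (env (x k) - φstar)) :=
        mul_nonneg (mul_nonneg (mul_nonneg hα0 ht.le) (hs0 k)) (by linarith)
      have hα2 : ℓ * t * (2 - t) * s k ^ 2 = 2 * ℓ * C * α * t * s k ^ 2 := by
        rw [← hα]; ring
      nlinarith [h1, hprod, hα2]
    have hexp1 : ∀ u : ℝ, (1 - u) * Real.exp u ≤ 1 := by
      intro u
      have h1 : -u + 1 ≤ Real.exp (-u) := Real.add_one_le_exp (-u)
      have h2 : 0 < Real.exp u := Real.exp_pos u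
      have h3 : Real.exp (-u) * Real.exp u = 1 := by
        rw [← Real.exp_add]; simp
      nlinarith
    have hchain : ∀ k, (env (x k) - φstar) * Real.exp (α * ∑ j ∈ Finset.range k, t * s j)
        ≤ env π - φstar := by
      intro k; induction k with
      | zero => simp [hx0]
      | succ n ih =>
        have h1 := hrec n
        have h2 : (env (x (n+1)) - φstar) * Real.exp (α * (t * s n)) ≤ env (x n) - φstar := by
          have hu := hexp1 (α * (t * s n))
          have he := henv_ge (x (n+1))
          have hep := Real.exp_pos (α * (t * s n))
          nlinarith [henv_ge (x n)]
        calc (env (x (n+1)) - φstar) * Real.exp (α * ∑ j ∈ Finset.range (n+1), t * s j)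
            = ((env (x (n+1)) - φstar) * Real.exp (α * (t * s n))) *
              Real.exp (α * ∑ j ∈ Finset.range n, t * s j) := by
              rw [Finset.sum_range_succ, mul_add, Real.exp_add]; ring
          _ ≤ (env (x n) - φstar) * Real.exp (α * ∑ j ∈ Finset.range n, t * s j) :=
              mul_le_mul_of_nonneg_right h2 (Real.exp_pos _).le
          _ ≤ env π - φstar := ih
    have he0 : ζ ≤ env (x 0) - φstar := by rw [hx0]; exact hζle
    have hterm : ∃ n, env (x n) - φstar < ζ := by
      by_contra hcon
      push_neg at hcon
      obtain ⟨β, hβ⟩ : ∃ β : ℝ, 2 * ℓ * C * β = α * t * ζ :=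
        ⟨α * t * ζ / (2 * ℓ * C), by field_simp⟩
      have hβ0 : 0 < β := by
        nlinarith [mul_pos (mul_pos hαpos ht) hζ, mul_pos (mul_pos two_pos hℓ) hC]
      have hCα : C * α ≤ 1 := by nlinarith
      have hβhalf : β ≤ 1 / 2 := by
        nlinarith [mul_le_mul_of_nonneg_right htζ hα0, mul_pos hℓ hC]
      have hdecay : ∀ n, env (x n) - φstar ≤ (env (x 0) - φstar) * (1 - β) ^ n := by
        intro n; induction n with
        | zero => simp
        | succ m ih =>
          have h1 := hrec m
          have h2 : env (x m) - φstar ≤ 2 * ℓ * C * s m := by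
            rw [hs_eq]; exact hse _ (hxPi m)
          have h3 := hcon m
          have hβle : β ≤ α * (t * s m) := by
            have h4 : α * t * ζ ≤ α * t * (2 * ℓ * C * s m) :=
              mul_le_mul_of_nonneg_left (by linarith) (mul_nonneg hα0 ht.le)
            nlinarith [mul_pos hℓ hC]
          have h4 : env (x (m+1)) - φstar ≤ (env (x m) - φstar) * (1 - β) := by
            nlinarith [henv_ge (x m)]
          calc env (x (m+1)) - φstar ≤ (env (x m) - φstar) * (1 - β) := h4
            _ ≤ (env (x 0) - φstar) * (1 - β) ^ m * (1 - β) :=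
                mul_le_mul_of_nonneg_right ih (by linarith)
            _ = (env (x 0) - φstar) * (1 - β) ^ (m + 1) := by ring
      have he0pos : 0 < env (x 0) - φstar := lt_of_lt_of_le hζ he0
      obtain ⟨n, hn⟩ := exists_pow_lt_of_lt_one (div_pos hζ he0pos)
        (show (1:ℝ) - β < 1 by linarith)
      have hfalse : env (x n) - φstar < ζ := by
        calc env (x n) - φstar ≤ (env (x 0) - φstar) * (1 - β) ^ n := hdecay n
          _ < (env (x 0) - φstar) * (ζ / (env (x 0) - φstar)) :=
              mul_lt_mul_of_pos_left hn he0pos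
          _ = ζ := by field_simp
      exact absurd hfalse (not_lt.2 (hcon n))
    obtain ⟨K, hK, hKmin⟩ : ∃ K : ℕ, (env (x K) - φstar < ζ) ∧
        ∀ j, j < K → ζ ≤ env (x j) - φstar := by
      refine ⟨Nat.find hterm, Nat.find_spec hterm, fun j hj => ?_⟩
      exact le_of_not_gt (Nat.find_min hterm hj)
    have hKpos : 0 < K := by
      rcases Nat.eq_zero_or_pos K with h | h
      · rw [h] at hK; linarith
      · exact h
    obtain ⟨K', hKK⟩ : ∃ K', K = K' + 1 := ⟨K - 1, (Nat.succ_pred_eq_of_pos hKpos).symm⟩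
    have hK' : ζ ≤ env (x K') - φstar := hKmin K' (by omega)
    have hxK_S : x K ∈ S := ⟨hxPi _, hK⟩
    have hd1 : D ≤ dist π (x K) := Metric.infDist_le_dist_of_mem hxK_S
    have hdj : ∀ j, dist (x j) (x (j+1)) = t * s j := by
      intro j
      rw [dist_eq_norm, hxs]
      have h9 : x j - (x j + t • (pt (x j) - x j)) = t • (x j - pt (x j)) := by
        module
      rw [h9, norm_smul, Real.norm_eq_abs, abs_of_pos ht, hs_eq]
    have hsum : D ≤ (∑ j ∈ Finset.range K', t * s j) + t * M := by
      calc D ≤ dist π (x K) := hd1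
        _ = dist (x 0) (x K) := by rw [hx0]
        _ ≤ ∑ j ∈ Finset.range K, dist (x j) (x (j+1)) := dist_le_range_sum_dist x K
        _ = ∑ j ∈ Finset.range K, t * s j := Finset.sum_congr rfl fun j _ => hdj j
        _ = (∑ j ∈ Finset.range K', t * s j) + t * s K' := by
            rw [hKK, Finset.sum_range_succ]
        _ ≤ (∑ j ∈ Finset.range K', t * s j) + t * M := by
            have := hsM K'
            nlinarith
    have hfinal := hchain K'
    have h1 : ζ * Real.exp (α * ∑ j ∈ Finset.range K', t * s j) ≤ env π - φstar :=
      le_trans (mul_le_mul_of_nonneg_right hK' (Real.exp_pos _).le) hfinal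
    have h2 : Real.exp (α * (D - t * M)) ≤ Real.exp (α * ∑ j ∈ Finset.range K', t * s j) :=
      Real.exp_le_exp.2 (mul_le_mul_of_nonneg_left (by linarith) hα0)
    have h3 : env π - φstar ≤ φ π - φstar := by linarith [henv_le π hπ]
    rw [← hαdef]
    calc ζ * Real.exp (α * (D - t * M))
        ≤ ζ * Real.exp (α * ∑ j ∈ Finset.range K', t * s j) :=
          mul_le_mul_of_nonneg_left h2 hζ.le
      _ ≤ env π - φstar := h1
      _ ≤ φ π - φstar := h3
  -- Take the limit `t → 0⁺`
  have hcont : ContinuousAt (fun t : ℝ => ζ * Real.exp ((2 - t) / (2 * C) * (D - t * M))) 0 := by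
    fun_prop
  have hval : ζ * Real.exp ((2 - (0:ℝ)) / (2 * C) * (D - 0 * M)) = ζ * Real.exp (D / C) := by
    congr 2
    field_simp
    ring
  have hlim : Filter.Tendsto (fun t : ℝ => ζ * Real.exp ((2 - t) / (2 * C) * (D - t * M)))
      (nhdsWithin 0 (Set.Ioi 0)) (nhds (ζ * Real.exp (D / C))) := by
    rw [← hval]
    exact hcont.continuousWithinAt.tendsto
  refine le_of_tendsto hlim ?_
  have hmem : Set.Ioc (0:ℝ) (min 1 (ℓ * C ^ 2 / ζ)) ∈ nhdsWithin (0:ℝ) (Set.Ioi 0) :=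
    Ioc_mem_nhdsGT_of_mem ⟨le_refl 0, lt_min one_pos (by positivity)⟩
  filter_upwards [hmem] with t htt
  refine main t htt.1 (le_trans htt.2 (min_le_left _ _)) ?_
  have h5 : t ≤ ℓ * C ^ 2 / ζ := le_trans htt.2 (min_le_right _ _)
  rw [le_div_iff₀ hζ] at h5
  linarith
end

section
/- For all p, p' ∈ 𝒫 and all π̄, π̄' ∈ E₁, p̄ ∈ E₂: ‖π(p',π̄,p̄) − π(p,π̄,p̄)‖ ≤ κ₁‖p'−p‖ and ‖π(p,π̄',p̄) − π(p,π̄,p̄)‖ ≤ κ₂‖π̄−π̄'‖. -/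
open scoped RealInnerProductSpace
open Set Filter Topology

section Helpers

variable {E : Type*} [NormedAddCommGroup E] [InnerProductSpace ℝ E] [CompleteSpace E]

/-- Derivative along a line of a function admitting a gradient everywhere. -/
lemma hasDerivAt_line {g : E → ℝ} {G : E → E} (hG : ∀ x, HasGradientAt g (G x) x)
    (x v : E) (t : ℝ) :
    HasDerivAt (fun s : ℝ => g (x + s • v)) ⟪G (x + t • v), v⟫ t := by
  have hc : HasDerivAt (fun s : ℝ => x + s • v) v t := by
    simpa using ((hasDerivAt_id t).smul_const v).const_add x
  have h := (hG (x + t • v)).hasFDerivAt.comp_hasDerivAt t hc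
  simpa [InnerProductSpace.toDual_apply_apply, Function.comp_def] using h

/-- Quadratic growth at a constrained minimizer of `g + (r/2)‖·-πb‖²` when the gradient of `g`
is `ℓ`-Lipschitz on the convex set `P` and `ℓ < r`. -/
lemma quad_growth {g : E → ℝ} {G : E → E} (hG : ∀ x, HasGradientAt g (G x) x)
    {P : Set E} (hPconv : Convex ℝ P) {ℓ r : ℝ} (hr : ℓ < r)
    (hlip : ∀ x ∈ P, ∀ y ∈ P, ‖G x - G y‖ ≤ ℓ * ‖x - y‖)
    (πb : E) {xm : E} (hxm : xm ∈ P)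
    (hmin : ∀ y ∈ P, g xm + r/2 * ‖xm - πb‖^2 ≤ g y + r/2 * ‖y - πb‖^2)
    {x : E} (hx : x ∈ P) :
    (r - ℓ)/2 * ‖x - xm‖^2 ≤ (g x + r/2 * ‖x - πb‖^2) - (g xm + r/2 * ‖xm - πb‖^2) := by
  set d := x - xm with hd
  set a := xm - πb with ha
  set ψ : ℝ → ℝ := fun t => g (xm + t • d) +
      r/2*(‖a‖^2 + 2*t*⟪a,d⟫ + t^2*‖d‖^2) - (r-ℓ)*‖d‖^2*t^2/2 with hψ
  have hz : ∀ t ∈ Icc (0:ℝ) 1, xm + t • d ∈ P := fun t ht =>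
    hPconv.add_smul_sub_mem hxm hx ht
  have hψd : ∀ t : ℝ, HasDerivAt ψ
      (⟪G (xm + t • d), d⟫ + r/2*(2*⟪a,d⟫ + 2*t*‖d‖^2) - (r-ℓ)*‖d‖^2*t) t := by
    intro t
    have h1 := hasDerivAt_line hG xm d t
    have hs : HasDerivAt (fun s : ℝ => s^2) (2*t) t := by simpa using hasDerivAt_pow 2 t
    have hp : HasDerivAt (fun s : ℝ => ‖a‖^2 + 2*s*⟪a,d⟫ + s^2*‖d‖^2)
        (2*⟪a,d⟫ + 2*t*‖d‖^2) t := by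
      have hl : HasDerivAt (fun s : ℝ => 2*s*⟪a,d⟫) (2*⟪a,d⟫) t := by
        have := ((hasDerivAt_id t).const_mul (2:ℝ)).mul_const ⟪a,d⟫
        exact this.congr_deriv (by ring)
      have := ((hasDerivAt_const t (‖a‖^2)).add hl).add (hs.mul_const (‖d‖^2))
      exact this.congr_deriv (by ring)
    have h2 := hp.const_mul (r/2)
    have h3 : HasDerivAt (fun s : ℝ => (r-ℓ)*‖d‖^2*s^2/2) ((r-ℓ)*‖d‖^2*t) t := by
      have := (hs.const_mul ((r-ℓ)*‖d‖^2)).div_const 2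
      exact this.congr_deriv (by ring)
    exact (h1.add h2).sub h3
  have hdiffψ : Differentiable ℝ ψ := fun t => (hψd t).differentiableAt
  have hderiv : deriv ψ = fun t => ⟪G (xm + t • d), d⟫ + r/2*(2*⟪a,d⟫ + 2*t*‖d‖^2)
      - (r-ℓ)*‖d‖^2*t := funext fun t => (hψd t).deriv
  have hmono : MonotoneOn (deriv ψ) (interior (Icc (0:ℝ) 1)) := by
    rw [interior_Icc]
    intro s hs' t ht' hst
    rw [hderiv]
    simp only
    have hzs : xm + s • d ∈ P := hz s ⟨hs'.1.le, hs'.2.le⟩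
    have hzt : xm + t • d ∈ P := hz t ⟨ht'.1.le, ht'.2.le⟩
    have hnl := hlip _ hzs _ hzt
    have hsub : (xm + s • d) - (xm + t • d) = (s - t) • d := by
      rw [sub_smul]; abel
    rw [hsub] at hnl
    have hnn : ‖(s - t) • d‖ = (t - s) * ‖d‖ := by
      rw [norm_smul, Real.norm_eq_abs, abs_sub_comm, abs_of_nonneg (sub_nonneg.2 hst)]
    rw [hnn] at hnl
    have hcs : ⟪G (xm + s • d) - G (xm + t • d), d⟫
        ≤ ‖G (xm + s • d) - G (xm + t • d)‖ * ‖d‖ := real_inner_le_norm _ _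
    rw [inner_sub_left] at hcs
    have h5 : ‖G (xm + s • d) - G (xm + t • d)‖ * ‖d‖ ≤ ℓ * ((t - s) * ‖d‖) * ‖d‖ :=
      mul_le_mul_of_nonneg_right hnl (norm_nonneg d)
    nlinarith [sq_nonneg ‖d‖]
  have hconvex : ConvexOn ℝ (Icc (0:ℝ) 1) ψ :=
    MonotoneOn.convexOn_of_deriv (convex_Icc 0 1) hdiffψ.continuous.continuousOn
      (hdiffψ.differentiableOn) hmono
  have hψ0 : ψ 0 = g xm + r/2 * ‖xm - πb‖^2 := by
    simp [hψ, ha]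
  have hxpb : x - πb = a + d := by rw [ha, hd]; abel
  have hψ1 : ψ 1 = (g x + r/2 * ‖x - πb‖^2) - (r-ℓ)*‖d‖^2/2 := by
    have h1 : xm + (1:ℝ) • d = x := by rw [hd]; simp
    have h2 : ‖x - πb‖^2 = ‖a‖^2 + 2*⟪a,d⟫ + ‖d‖^2 := by
      rw [hxpb, norm_add_sq_real]
    rw [hψ]
    simp only [h1, one_pow, mul_one, one_mul]
    rw [h2]
  have hKey : ∀ t ∈ Ioo (0:ℝ) 1, (r-ℓ)/2*‖d‖^2*(1-t)
      ≤ (g x + r/2 * ‖x - πb‖^2) - (g xm + r/2 * ‖xm - πb‖^2) := by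
    intro t ht
    have hcc := hconvex.2 (left_mem_Icc.2 zero_le_one) (right_mem_Icc.2 zero_le_one)
      (sub_nonneg.2 ht.2.le) ht.1.le (by ring)
    have hteq : (1-t) • (0:ℝ) + t • (1:ℝ) = t := by simp
    rw [hteq] at hcc
    have hmin' := hmin _ (hz t ⟨ht.1.le, ht.2.le⟩)
    have hzt : g (xm + t • d) + r/2 * ‖(xm + t • d) - πb‖^2
        = ψ t + (r-ℓ)*‖d‖^2*t^2/2 := by
      have h1 : (xm + t • d) - πb = a + t • d := by rw [ha]; abel
      have h2 : ‖(xm + t • d) - πb‖^2 = ‖a‖^2 + 2*(t*⟪a,d⟫) + t^2*‖d‖^2 := by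
        rw [h1, norm_add_sq_real, real_inner_smul_right, norm_smul, Real.norm_eq_abs,
          mul_pow, sq_abs]
      rw [h2, hψ]; ring
    rw [hψ0, hψ1] at hcc
    rw [hzt] at hmin'
    have haa : ‖a‖^2 = ‖xm - πb‖^2 := by rw [ha]
    rw [haa] at hmin'
    simp only [smul_eq_mul] at hcc
    nlinarith [hcc, hmin', ht.1]
  have hten : Tendsto (fun t : ℝ => (r-ℓ)/2*‖d‖^2*(1-t)) (𝓝[>] (0:ℝ))
      (𝓝 ((r-ℓ)/2*‖d‖^2)) := by
    have hc : Continuous fun t : ℝ => (r-ℓ)/2*‖d‖^2*(1-t) :=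
      continuous_const.mul (continuous_const.sub continuous_id)
    have h0 := hc.tendsto 0
    simp only [sub_zero, mul_one] at h0
    exact h0.mono_left nhdsWithin_le_nhds
  refine le_of_tendsto hten ?_
  filter_upwards [Ioo_mem_nhdsGT_of_mem (by constructor <;> norm_num : (0:ℝ) ∈ Ico (0:ℝ) 1)]
    with t ht using hKey t ht

lemma cancel_aux {μ c s dd : ℝ} (hμ : 0 < μ) (hc : 0 ≤ c) (hdd : 0 ≤ dd) (hs : 0 ≤ s)
    (h : μ*dd^2 ≤ c*dd*s) : dd ≤ c/μ*s := by
  rcases eq_or_lt_of_le hdd with h0 | h0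
  · rw [← h0]
    exact mul_nonneg (div_nonneg hc hμ.le) hs
  · have h1 : μ*dd ≤ c*s := le_of_mul_le_mul_right (by nlinarith) h0
    rw [div_mul_eq_mul_div, le_div_iff₀ hμ]
    nlinarith

end Helpers

/-- The regularized function `χ(π,p,π̄,p̄) = f(π,p) + (r₁/2)‖π−π̄‖² − (r₂/2)‖p−p̄‖²`. -/
noncomputable def chi {E₁ E₂ : Type*} [NormedAddCommGroup E₁] [NormedAddCommGroup E₂]
    (f : E₁ → E₂ → ℝ) (r₁ r₂ : ℝ) (π : E₁) (p : E₂) (πb : E₁) (pb : E₂) : ℝ :=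
  f π p + r₁ / 2 * ‖π - πb‖ ^ 2 - r₂ / 2 * ‖p - pb‖ ^ 2

/-- Lipschitz continuity of the primal minimizer `π(p,π̄,p̄)` in `p` and `π̄`:
`‖π(p',π̄,p̄) − π(p,π̄,p̄)‖ ≤ κ₁‖p'−p‖` and `‖π(p,π̄',p̄) − π(p,π̄,p̄)‖ ≤ κ₂‖π̄−π̄'‖`. -/
theorem primal_minimizer_lipschitz
    {E₁ : Type*} [NormedAddCommGroup E₁] [InnerProductSpace ℝ E₁] [FiniteDimensional ℝ E₁]
    {E₂ : Type*} [NormedAddCommGroup E₂] [InnerProductSpace ℝ E₂] [FiniteDimensional ℝ E₂]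
    (P : Set E₁) (Q : Set E₂)
    (hPne : P.Nonempty) (hPcpt : IsCompact P) (hPconv : Convex ℝ P)
    (hQne : Q.Nonempty) (hQcpt : IsCompact Q) (hQconv : Convex ℝ Q)
    (f : E₁ → E₂ → ℝ) (hf : ContDiff ℝ 1 (fun q : E₁ × E₂ => f q.1 q.2))
    (gπ : E₁ → E₂ → E₁) (gp : E₁ → E₂ → E₂)
    (hgπ : ∀ π p, HasGradientAt (fun π' => f π' p) (gπ π p) π)
    (hgp : ∀ π p, HasGradientAt (fun p' => f π p') (gp π p) p)
    (ℓ₁ ℓ₂ : ℝ) (hℓ₁ : 0 < ℓ₁) (hℓ₂ : 0 < ℓ₂)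
    (hlipπ : ∀ π ∈ P, ∀ π' ∈ P, ∀ p ∈ Q, ∀ p' ∈ Q,
      ‖gπ π p - gπ π' p'‖ ≤ ℓ₁ * (‖π - π'‖ + ‖p - p'‖))
    (hlipp : ∀ π ∈ P, ∀ π' ∈ P, ∀ p ∈ Q, ∀ p' ∈ Q,
      ‖gp π p - gp π' p'‖ ≤ ℓ₂ * (‖π - π'‖ + ‖p - p'‖))
    (r₁ r₂ : ℝ) (hr₁ : ℓ₁ < r₁) (hr₂ : (ℓ₂ / (r₁ - ℓ₁) + 2) * ℓ₂ < r₂)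
    -- `πsel p π̄ p̄` is the (unique) minimizer of `π ↦ χ(π,p,π̄,p̄)` over `Π`
    (πsel : E₂ → E₁ → E₂ → E₁)
    (hπsel : ∀ p ∈ Q, ∀ (πb : E₁) (pb : E₂), πsel p πb pb ∈ P ∧
      ∀ π' ∈ P, chi f r₁ r₂ (πsel p πb pb) p πb pb ≤ chi f r₁ r₂ π' p πb pb) :
    ∀ p ∈ Q, ∀ p' ∈ Q, ∀ (πb πb' : E₁) (pb : E₂),
      ‖πsel p' πb pb - πsel p πb pb‖ ≤ (ℓ₂ / (r₁ - ℓ₁) + 1) * ‖p' - p‖ ∧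
      ‖πsel p πb' pb - πsel p πb pb‖ ≤ r₁ / (r₁ - ℓ₁) * ‖πb - πb'‖ := by
  intro p hp p' hp' πb πb' pb
  have hμ : 0 < r₁ - ℓ₁ := sub_pos.2 hr₁
  have hr₁0 : 0 < r₁ := hℓ₁.trans hr₁
  obtain ⟨hm1, hmin1⟩ := hπsel p hp πb pb
  obtain ⟨hm2, hmin2⟩ := hπsel p' hp' πb pb
  obtain ⟨hm3, hmin3⟩ := hπsel p hp πb' pb
  set π₁ := πsel p πb pb with hπ₁
  set π₂ := πsel p' πb pb with hπ₂
  set π₃ := πsel p πb' pb with hπ₃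
  -- translate `chi`-minimality into minimality of the regularized function
  have hminF : ∀ (q : E₂) (bb : E₁) (xm : E₁),
      (∀ y ∈ P, chi f r₁ r₂ xm q bb pb ≤ chi f r₁ r₂ y q bb pb) →
      ∀ y ∈ P, f xm q + r₁/2 * ‖xm - bb‖^2 ≤ f y q + r₁/2 * ‖y - bb‖^2 := by
    intro q bb xm h y hy
    have := h y hy
    unfold chi at this
    linarith
  -- Lipschitz property of `gπ` in `π` for a fixed `p`
  have hlipfix : ∀ q ∈ Q, ∀ u ∈ P, ∀ v ∈ P, ‖gπ u q - gπ v q‖ ≤ ℓ₁ * ‖u - v‖ := by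
    intro q hq u hu v hv
    have := hlipπ u hu v hv q hq q hq
    simpa using this
  -- difference bound in the `p` variable using `gp`
  have hdiff_bound : ∀ u ∈ P, ∀ v ∈ P,
      (f v p - f u p) - (f v p' - f u p') ≤ ℓ₂ * ‖v - u‖ * ‖p - p'‖ := by
    intro u hu v hv
    set w := p - p' with hw
    set C := ℓ₂ * ‖v - u‖ * ‖w‖ with hC
    set θ : ℝ → ℝ := fun t => f v (p' + t • w) - f u (p' + t • w) - C * t with hθ
    have hθd : ∀ t : ℝ, HasDerivAt θ
        (⟪gp v (p' + t • w), w⟫ - ⟪gp u (p' + t • w), w⟫ - C) t := by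
      intro t
      have h1 := hasDerivAt_line (fun q => hgp v q) p' w t
      have h2 := hasDerivAt_line (fun q => hgp u q) p' w t
      have h3 : HasDerivAt (fun s : ℝ => C * s) C t := by
        simpa using (hasDerivAt_id t).const_mul C
      exact (h1.sub h2).sub h3
    have hdiffθ : Differentiable ℝ θ := fun t => (hθd t).differentiableAt
    have hanti : AntitoneOn θ (Icc (0:ℝ) 1) := by
      apply antitoneOn_of_deriv_nonpos (convex_Icc 0 1) hdiffθ.continuous.continuousOn
        hdiffθ.differentiableOn
      intro t ht
      rw [interior_Icc] at ht
      rw [(hθd t).deriv]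
      have hq : p' + t • w ∈ Q := hQconv.add_smul_sub_mem hp' hp ⟨ht.1.le, ht.2.le⟩
      have hcs : ⟪gp v (p' + t • w) - gp u (p' + t • w), w⟫
          ≤ ‖gp v (p' + t • w) - gp u (p' + t • w)‖ * ‖w‖ := real_inner_le_norm _ _
      rw [inner_sub_left] at hcs
      have hl := hlipp v hv u hu (p' + t • w) hq (p' + t • w) hq
      simp only [sub_self, norm_zero, add_zero] at hl
      have h5 : ‖gp v (p' + t • w) - gp u (p' + t • w)‖ * ‖w‖ ≤ ℓ₂ * ‖v - u‖ * ‖w‖ :=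
        mul_le_mul_of_nonneg_right hl (norm_nonneg w)
      rw [hC]
      linarith
    have h10 := hanti (left_mem_Icc.2 zero_le_one) (right_mem_Icc.2 zero_le_one) zero_le_one
    have he1 : p' + (1:ℝ) • w = p := by rw [hw]; simp
    have he0 : p' + (0:ℝ) • w = p' := by simp
    rw [hθ] at h10
    simp only [he1, he0, mul_one, mul_zero, sub_zero] at h10
    rw [hC, hw] at h10 ⊢
    linarith
  constructor
  · -- Lipschitz in p
    have hq1 := quad_growth (fun y => hgπ y p) hPconv hr₁ (hlipfix p hp) πb hm1
      (hminF p πb π₁ hmin1) hm2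
    have hq2 := quad_growth (fun y => hgπ y p') hPconv hr₁ (hlipfix p' hp') πb hm2
      (hminF p' πb π₂ hmin2) hm1
    have hD := hdiff_bound π₁ hm1 π₂ hm2
    have hnc : ‖π₁ - π₂‖ = ‖π₂ - π₁‖ := norm_sub_rev _ _
    rw [hnc] at hq2
    have hsum : (r₁-ℓ₁) * ‖π₂ - π₁‖^2 ≤ ℓ₂ * ‖π₂ - π₁‖ * ‖p' - p‖ := by
      have hpn : ‖p - p'‖ = ‖p' - p‖ := norm_sub_rev _ _
      rw [hpn] at hD
      linarith
    have hcancel := cancel_aux hμ hℓ₂.le (norm_nonneg (π₂ - π₁)) (norm_nonneg (p' - p)) hsum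
    have hsplit : (ℓ₂/(r₁-ℓ₁)+1) * ‖p' - p‖ = ℓ₂/(r₁-ℓ₁) * ‖p' - p‖ + ‖p' - p‖ := by ring
    rw [hsplit]
    linarith [norm_nonneg (p' - p)]
  · -- Lipschitz in πb
    have hq1 := quad_growth (fun y => hgπ y p) hPconv hr₁ (hlipfix p hp) πb hm1
      (hminF p πb π₁ hmin1) hm3
    have hq2 := quad_growth (fun y => hgπ y p) hPconv hr₁ (hlipfix p hp) πb' hm3
      (hminF p πb' π₃ hmin3) hm1
    have hnc : ‖π₁ - π₃‖ = ‖π₃ - π₁‖ := norm_sub_rev _ _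
    rw [hnc] at hq2
    have hip : ∀ u v : E₁, ‖u - v‖^2 = ‖u‖^2 - 2*⟪u,v⟫ + ‖v‖^2 := fun u v =>
      norm_sub_sq_real u v
    have halg : (r₁/2*‖π₃ - πb‖^2 - r₁/2*‖π₃ - πb'‖^2)
        - (r₁/2*‖π₁ - πb‖^2 - r₁/2*‖π₁ - πb'‖^2) = r₁ * ⟪π₃ - π₁, πb' - πb⟫ := by
      rw [hip π₃ πb, hip π₃ πb', hip π₁ πb, hip π₁ πb', inner_sub_left,
        inner_sub_right, inner_sub_right]
      ring
    have hcs := real_inner_le_norm (π₃ - π₁) (πb' - πb)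
    have h6 : r₁ * ⟪π₃ - π₁, πb' - πb⟫ ≤ r₁ * (‖π₃ - π₁‖ * ‖πb' - πb‖) :=
      mul_le_mul_of_nonneg_left hcs hr₁0.le
    have hbn : ‖πb' - πb‖ = ‖πb - πb'‖ := norm_sub_rev _ _
    have hsum : (r₁-ℓ₁) * ‖π₃ - π₁‖^2 ≤ r₁ * ‖π₃ - π₁‖ * ‖πb - πb'‖ := by
      rw [hbn] at h6
      nlinarith [hq1, hq2, halg, h6]
    exact cancel_aux hμ hr₁0.le (norm_nonneg (π₃ - π₁)) (norm_nonneg (πb - πb')) hsum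
end

section
/- For all π, π' ∈ Π, π̄ ∈ E₁ and p̄, p̄' ∈ E₂: ‖p(π,π̄,p̄) − p(π',π̄,p̄)‖ ≤ κ₄‖π−π'‖, ‖p(π,π̄,p̄) − p(π,π̄,p̄')‖ ≤ κ₅‖p̄−p̄'‖, and ‖p(π̄,p̄) − p(π̄,p̄')‖ ≤ κ₅‖p̄−p̄'‖. -/
open scoped RealInnerProductSpace

private lemma nonneg_of_forall_small {A C : ℝ} (hC : 0 ≤ C)
    (h : ∀ t : ℝ, 0 < t → t ≤ 1 → 0 ≤ A + t * C) : 0 ≤ A := by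
  by_contra hA
  push_neg at hA
  have ht0 : 0 < min 1 (-A / (2 * (C + 1))) :=
    lt_min one_pos (div_pos (by linarith) (by linarith))
  have h1 := h _ ht0 (min_le_left _ _)
  have h2 : min 1 (-A / (2 * (C + 1))) ≤ -A / (2 * (C + 1)) := min_le_right _ _
  have h3 : min 1 (-A / (2 * (C + 1))) * C ≤ (-A / (2 * (C + 1))) * C :=
    mul_le_mul_of_nonneg_right h2 hC
  have h4 : (-A / (2 * (C + 1))) * C ≤ -A / 2 := by
    rw [div_mul_eq_mul_div, div_le_div_iff₀ (by linarith) (by norm_num)]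
    nlinarith
  linarith

private lemma norm_sq_expand {E : Type*} [NormedAddCommGroup E] [InnerProductSpace ℝ E]
    (x y b : E) : ‖y - b‖ ^ 2 = ‖x - b‖ ^ 2 + 2 * ⟪x - b, y - x⟫ + ‖y - x‖ ^ 2 := by
  have h : y - b = (x - b) + (y - x) := by abel
  rw [h, norm_add_sq_real]

private lemma norm_sq_expand_t {E : Type*} [NormedAddCommGroup E] [InnerProductSpace ℝ E]
    (x d b : E) (t : ℝ) :
    ‖x + t • d - b‖ ^ 2 = ‖x - b‖ ^ 2 + 2 * (t * ⟪x - b, d⟫) + t ^ 2 * ‖d‖ ^ 2 := by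
  have h : x + t • d - b = (x - b) + t • d := by abel
  rw [h, norm_add_sq_real, real_inner_smul_right, norm_smul, Real.norm_eq_abs, mul_pow, sq_abs]

private lemma line_hasDerivAt {E : Type*} [NormedAddCommGroup E] [InnerProductSpace ℝ E]
    [CompleteSpace E]
    (h : E → ℝ) (g : E → E) (hg : ∀ x, HasGradientAt h (g x) x)
    (x d : E) (t : ℝ) :
    HasDerivAt (fun s : ℝ => h (x + s • d)) ⟪g (x + t • d), d⟫ t := by
  have hc : HasDerivAt (fun s : ℝ => x + s • d) d t := by
    simpa using ((hasDerivAt_id t).smul_const d).const_add x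
  have := (hg (x + t • d)).hasFDerivAt.comp_hasDerivAt t hc
  simp at this
  exact this

private lemma quad_upper_aux {E : Type*} [NormedAddCommGroup E] [InnerProductSpace ℝ E]
    [CompleteSpace E]
    (h : E → ℝ) (g : E → E) (hg : ∀ x, HasGradientAt h (g x) x)
    {L : ℝ} (x y : E)
    (hlip : ∀ t ∈ Set.Icc (0:ℝ) 1, ‖g (x + t • (y - x)) - g x‖ ≤ L * (t * ‖y - x‖)) :
    h y ≤ h x + ⟪g x, y - x⟫ + L / 2 * ‖y - x‖ ^ 2 := by
  set d := y - x with hd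
  set ψ : ℝ → ℝ := fun t => h (x + t • d) - t * ⟪g x, d⟫ - L * t ^ 2 / 2 * ‖d‖ ^ 2 with hψ
  have hder : ∀ t : ℝ,
      HasDerivAt ψ (⟪g (x + t • d), d⟫ - ⟪g x, d⟫ - L * t * ‖d‖ ^ 2) t := by
    intro t
    have h1 := line_hasDerivAt h g hg x d t
    have h2 : HasDerivAt (fun s : ℝ => s * ⟪g x, d⟫) ⟪g x, d⟫ t := by
      simpa using (hasDerivAt_id t).mul_const (⟪g x, d⟫)
    have h3 : HasDerivAt (fun s : ℝ => L * s ^ 2 / 2 * ‖d‖ ^ 2) (L * t * ‖d‖ ^ 2) t := by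
      have hp : HasDerivAt (fun s : ℝ => s ^ 2) (2 * t) t := by
        simpa using hasDerivAt_pow 2 t
      have := ((hp.const_mul L).div_const 2).mul_const (‖d‖ ^ 2)
      refine this.congr_deriv ?_
      ring
    exact (h1.sub h2).sub h3
  have hmono : AntitoneOn ψ (Set.Icc 0 1) := by
    apply antitoneOn_of_deriv_nonpos (convex_Icc 0 1)
    · exact fun t _ => ((hder t).differentiableAt).continuousAt.continuousWithinAt
    · intro t ht
      rw [interior_Icc] at ht
      exact ((hder t).differentiableAt).differentiableWithinAt
    · intro t ht
      rw [interior_Icc] at ht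
      rw [(hder t).deriv]
      have hdiff : ⟪g (x + t • d), d⟫ - ⟪g x, d⟫ = ⟪g (x + t • d) - g x, d⟫ := by
        rw [inner_sub_left]
      have hcs : ⟪g (x + t • d) - g x, d⟫ ≤ ‖g (x + t • d) - g x‖ * ‖d‖ :=
        real_inner_le_norm _ _
      have hl := hlip t ⟨ht.1.le, ht.2.le⟩
      have hl2 : ‖g (x + t • d) - g x‖ * ‖d‖ ≤ L * (t * ‖d‖) * ‖d‖ :=
        mul_le_mul_of_nonneg_right hl (norm_nonneg _)
      rw [hdiff]
      nlinarith [norm_nonneg d]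
  have hle := hmono (Set.mem_Icc.2 ⟨le_refl 0, zero_le_one⟩)
    (Set.mem_Icc.2 ⟨zero_le_one, le_refl 1⟩) zero_le_one
  have h0 : ψ 0 = h x := by simp [hψ]
  have h1 : ψ 1 = h y - ⟪g x, d⟫ - L / 2 * ‖d‖ ^ 2 := by
    simp only [hψ, one_smul, one_pow, one_mul]
    rw [add_sub_cancel]
    ring_nf
  rw [h0, h1] at hle
  linarith

private lemma quad_lower_aux {E : Type*} [NormedAddCommGroup E] [InnerProductSpace ℝ E]
    [CompleteSpace E]
    (h : E → ℝ) (g : E → E) (hg : ∀ x, HasGradientAt h (g x) x)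
    {L : ℝ} (x y : E)
    (hlip : ∀ t ∈ Set.Icc (0:ℝ) 1, ‖g (x + t • (y - x)) - g x‖ ≤ L * (t * ‖y - x‖)) :
    h x + ⟪g x, y - x⟫ - L / 2 * ‖y - x‖ ^ 2 ≤ h y := by
  have hg' : ∀ z, HasGradientAt (fun w => -(h w)) (-(g z)) z := by
    intro z
    have := (hg z).hasFDerivAt.neg
    have h2 := this.hasGradientAt
    simp at h2
    exact h2
  have := quad_upper_aux (fun w => -(h w)) (fun z => -(g z)) hg' (L := L) x y ?_
  · simp only [inner_neg_left] at this
    linarith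
  · intro t ht
    have e : -g (x + t • (y - x)) - -g x = -(g (x + t • (y - x)) - g x) := by abel
    rw [e, norm_neg]
    exact hlip t ht

private lemma final_step {E : Type*} [NormedAddCommGroup E] [InnerProductSpace ℝ E]
    {r₂ ℓ₂ : ℝ} (hr₂ℓ : 0 < r₂ - ℓ₂) (hr₂ : 0 < r₂)
    {p₁ p₂ pb pb' : E} {g₁ g₂ : E}
    (h1 : ⟪g₁, p₂ - p₁⟫ - r₂ * ⟪p₁ - pb, p₂ - p₁⟫ ≤ 0)
    (h2 : ⟪g₂, p₁ - p₂⟫ - r₂ * ⟪p₂ - pb', p₁ - p₂⟫ ≤ 0)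
    (hS : ⟪g₁ - g₂, p₁ - p₂⟫ ≤ ℓ₂ * ‖p₁ - p₂‖ ^ 2) :
    ‖p₁ - p₂‖ ≤ r₂ / (r₂ - ℓ₂) * ‖pb - pb'‖ := by
  have e : p₂ - p₁ = -(p₁ - p₂) := by abel
  rw [e, inner_neg_right, inner_neg_right] at h1
  have hsub : ⟪p₁ - pb, p₁ - p₂⟫ - ⟪p₂ - pb', p₁ - p₂⟫
      = ‖p₁ - p₂‖ ^ 2 - ⟪pb - pb', p₁ - p₂⟫ := by
    rw [← inner_sub_left]
    have e2 : p₁ - pb - (p₂ - pb') = (p₁ - p₂) - (pb - pb') := by abel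
    rw [e2, inner_sub_left, real_inner_self_eq_norm_sq]
  have hinner1 : ⟪g₁, p₁ - p₂⟫ - ⟪g₂, p₁ - p₂⟫ = ⟪g₁ - g₂, p₁ - p₂⟫ :=
    (inner_sub_left _ _ _).symm
  have hcs : ⟪pb - pb', p₁ - p₂⟫ ≤ ‖pb - pb'‖ * ‖p₁ - p₂‖ := real_inner_le_norm _ _
  rw [div_mul_eq_mul_div, le_div_iff₀ hr₂ℓ]
  rcases eq_or_lt_of_le (norm_nonneg (p₁ - p₂)) with h0 | h0
  · rw [← h0, zero_mul]
    positivity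
  · nlinarith [mul_le_mul_of_nonneg_left hcs hr₂.le, h0]

private lemma nonneg_of_mul {t X : ℝ} (ht : 0 < t) (h : 0 ≤ t * X) : 0 ≤ X := by
  by_contra hX
  push_neg at hX
  nlinarith

private lemma combine_S {F11 F12 F21 F22 A B n1 n2 L S : ℝ}
    (hi : F12 ≤ F11 + -A + L / 2 * S)
    (hii : F21 ≤ F22 + B + L / 2 * S)
    (hiii : F11 + n1 ≤ F21 + n2)
    (hiv : F22 + n2 ≤ F12 + n1) :
    A - B ≤ L * S := by linarith
/-- Lipschitz bounds for the dual maximizer: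
`‖p(π,π̄,p̄) − p(π',π̄,p̄)‖ ≤ κ₄‖π−π'‖`, `‖p(π,π̄,p̄) − p(π,π̄,p̄')‖ ≤ κ₅‖p̄−p̄'‖`, and
`‖p(π̄,p̄) − p(π̄,p̄')‖ ≤ κ₅‖p̄−p̄'‖`. -/
theorem dual_maximizer_lipschitz
    {E₁ : Type*} [NormedAddCommGroup E₁] [InnerProductSpace ℝ E₁] [FiniteDimensional ℝ E₁]
    {E₂ : Type*} [NormedAddCommGroup E₂] [InnerProductSpace ℝ E₂] [FiniteDimensional ℝ E₂]
    (P : Set E₁) (Q : Set E₂)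
    (hPne : P.Nonempty) (hPcpt : IsCompact P) (hPconv : Convex ℝ P)
    (hQne : Q.Nonempty) (hQcpt : IsCompact Q) (hQconv : Convex ℝ Q)
    (f : E₁ → E₂ → ℝ) (hf : ContDiff ℝ 1 (fun q : E₁ × E₂ => f q.1 q.2))
    (gπ : E₁ → E₂ → E₁) (gp : E₁ → E₂ → E₂)
    (hgπ : ∀ π p, HasGradientAt (fun π' => f π' p) (gπ π p) π)
    (hgp : ∀ π p, HasGradientAt (fun p' => f π p') (gp π p) p)
    (ℓ₁ ℓ₂ : ℝ) (hℓ₁ : 0 < ℓ₁) (hℓ₂ : 0 < ℓ₂)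
    (hlipπ : ∀ π ∈ P, ∀ π' ∈ P, ∀ p ∈ Q, ∀ p' ∈ Q,
      ‖gπ π p - gπ π' p'‖ ≤ ℓ₁ * (‖π - π'‖ + ‖p - p'‖))
    (hlipp : ∀ π ∈ P, ∀ π' ∈ P, ∀ p ∈ Q, ∀ p' ∈ Q,
      ‖gp π p - gp π' p'‖ ≤ ℓ₂ * (‖π - π'‖ + ‖p - p'‖))
    (r₁ r₂ : ℝ) (hr₁ : ℓ₁ < r₁) (hr₂ : (ℓ₂ / (r₁ - ℓ₁) + 2) * ℓ₂ < r₂)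
    -- `psel π π̄ p̄` is the unique maximizer of `p ↦ χ(π,p,π̄,p̄)` over `𝒫`
    (psel : E₁ → E₁ → E₂ → E₂)
    (hpsel : ∀ π ∈ P, ∀ (πb : E₁) (pb : E₂), psel π πb pb ∈ Q ∧
      ∀ p' ∈ Q, chi f r₁ r₂ π p' πb pb ≤ chi f r₁ r₂ π (psel π πb pb) πb pb)
    -- `πsel2 π̄ p̄` is the unique minimizer over `Π` of `π ↦ max_{p∈𝒫} χ(π,p,π̄,p̄)`
    (πsel2 : E₁ → E₂ → E₁)
    (hπsel2 : ∀ (πb : E₁) (pb : E₂), πsel2 πb pb ∈ P ∧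
      ∀ π' ∈ P, sSup ((fun p => chi f r₁ r₂ (πsel2 πb pb) p πb pb) '' Q) ≤
        sSup ((fun p => chi f r₁ r₂ π' p πb pb) '' Q)) :
    ∀ π ∈ P, ∀ π' ∈ P, ∀ (πb : E₁) (pb pb' : E₂),
      ‖psel π πb pb - psel π' πb pb‖ ≤ (ℓ₁ + r₂ - ℓ₂) / (r₂ - ℓ₂) * ‖π - π'‖ ∧
      ‖psel π πb pb - psel π πb pb'‖ ≤ r₂ / (r₂ - ℓ₂) * ‖pb - pb'‖ ∧
      ‖psel (πsel2 πb pb) πb pb - psel (πsel2 πb pb') πb pb'‖ ≤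
        r₂ / (r₂ - ℓ₂) * ‖pb - pb'‖ := by
  have hr₁ℓ : (0:ℝ) < r₁ - ℓ₁ := by linarith
  have hdiv : 0 < ℓ₂ / (r₁ - ℓ₁) := div_pos hℓ₂ hr₁ℓ
  have h2ℓ : 2 * ℓ₂ < r₂ := by nlinarith
  have hr₂ℓ : (0:ℝ) < r₂ - ℓ₂ := by linarith
  have hr₂pos : (0:ℝ) < r₂ := by linarith
  -- quadratic upper/lower bounds in the second variable
  have fquad_p_ub : ∀ π ∈ P, ∀ p ∈ Q, ∀ q ∈ Q,
      f π q ≤ f π p + ⟪gp π p, q - p⟫ + ℓ₂ / 2 * ‖q - p‖ ^ 2 := by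
    intro π hπ p hp q hq
    apply quad_upper_aux (fun p' => f π p') (gp π) (hgp π)
    intro t ht
    have hz : p + t • (q - p) ∈ Q := hQconv.add_smul_sub_mem hp hq ht
    calc ‖gp π (p + t • (q - p)) - gp π p‖
        ≤ ℓ₂ * (‖π - π‖ + ‖p + t • (q - p) - p‖) := hlipp π hπ π hπ _ hz p hp
      _ = ℓ₂ * (t * ‖q - p‖) := by
          rw [sub_self, norm_zero, zero_add, add_sub_cancel_left, norm_smul,
            Real.norm_eq_abs, abs_of_nonneg ht.1]
  have fquad_p_lb : ∀ π ∈ P, ∀ p ∈ Q, ∀ q ∈ Q,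
      f π p + ⟪gp π p, q - p⟫ - ℓ₂ / 2 * ‖q - p‖ ^ 2 ≤ f π q := by
    intro π hπ p hp q hq
    apply quad_lower_aux (fun p' => f π p') (gp π) (hgp π)
    intro t ht
    have hz : p + t • (q - p) ∈ Q := hQconv.add_smul_sub_mem hp hq ht
    calc ‖gp π (p + t • (q - p)) - gp π p‖
        ≤ ℓ₂ * (‖π - π‖ + ‖p + t • (q - p) - p‖) := hlipp π hπ π hπ _ hz p hp
      _ = ℓ₂ * (t * ‖q - p‖) := by
          rw [sub_self, norm_zero, zero_add, add_sub_cancel_left, norm_smul,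
            Real.norm_eq_abs, abs_of_nonneg ht.1]
  -- quadratic bounds in the first variable
  have fquad_π_ub : ∀ p ∈ Q, ∀ π ∈ P, ∀ π' ∈ P,
      f π' p ≤ f π p + ⟪gπ π p, π' - π⟫ + ℓ₁ / 2 * ‖π' - π‖ ^ 2 := by
    intro p hp π hπ π' hπ'
    apply quad_upper_aux (fun w => f w p) (fun w => gπ w p) (fun w => hgπ w p)
    intro t ht
    have hz : π + t • (π' - π) ∈ P := hPconv.add_smul_sub_mem hπ hπ' ht
    calc ‖gπ (π + t • (π' - π)) p - gπ π p‖
        ≤ ℓ₁ * (‖π + t • (π' - π) - π‖ + ‖p - p‖) := hlipπ _ hz π hπ p hp p hp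
      _ = ℓ₁ * (t * ‖π' - π‖) := by
          rw [sub_self, norm_zero, add_zero, add_sub_cancel_left, norm_smul,
            Real.norm_eq_abs, abs_of_nonneg ht.1]
  have fquad_π_lb : ∀ p ∈ Q, ∀ π ∈ P, ∀ π' ∈ P,
      f π p + ⟪gπ π p, π' - π⟫ - ℓ₁ / 2 * ‖π' - π‖ ^ 2 ≤ f π' p := by
    intro p hp π hπ π' hπ'
    apply quad_lower_aux (fun w => f w p) (fun w => gπ w p) (fun w => hgπ w p)
    intro t ht
    have hz : π + t • (π' - π) ∈ P := hPconv.add_smul_sub_mem hπ hπ' ht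
    calc ‖gπ (π + t • (π' - π)) p - gπ π p‖
        ≤ ℓ₁ * (‖π + t • (π' - π) - π‖ + ‖p - p‖) := hlipπ _ hz π hπ p hp p hp
      _ = ℓ₁ * (t * ‖π' - π‖) := by
          rw [sub_self, norm_zero, add_zero, add_sub_cancel_left, norm_smul,
            Real.norm_eq_abs, abs_of_nonneg ht.1]
  -- first-order optimality (variational inequality) for `psel`
  have hVI : ∀ π ∈ P, ∀ (πb : E₁) (pb : E₂), ∀ q ∈ Q,
      ⟪gp π (psel π πb pb), q - psel π πb pb⟫
        - r₂ * ⟪psel π πb pb - pb, q - psel π πb pb⟫ ≤ 0 := by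
    intro π hπ πb pb q hq
    obtain ⟨hp₀Q, hmax⟩ := hpsel π hπ πb pb
    set p₀ := psel π πb pb with hp₀def
    set d := q - p₀ with hdef
    have key : ∀ t : ℝ, 0 < t → t ≤ 1 →
        0 ≤ -(⟪gp π p₀, d⟫ - r₂ * ⟪p₀ - pb, d⟫) + t * ((ℓ₂ + r₂) / 2 * ‖d‖ ^ 2) := by
      intro t ht0 ht1
      have hpt : p₀ + t • d ∈ Q := hQconv.add_smul_sub_mem hp₀Q hq ⟨ht0.le, ht1⟩
      have hle := hmax _ hpt
      simp only [chi] at hle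
      have hlb := fquad_p_lb π hπ p₀ hp₀Q _ hpt
      rw [add_sub_cancel_left, real_inner_smul_right, norm_smul,
        Real.norm_eq_abs, abs_of_nonneg ht0.le] at hlb
      have hnorm := norm_sq_expand_t p₀ d pb t
      rw [hnorm] at hle
      have hmul : 0 ≤ t * (-(⟪gp π p₀, d⟫ - r₂ * ⟪p₀ - pb, d⟫)
          + t * ((ℓ₂ + r₂) / 2 * ‖d‖ ^ 2)) := by nlinarith [hle, hlb]
      exact nonneg_of_mul ht0 hmul
    have := nonneg_of_forall_small (by positivity) key
    linarith
  -- core Lipschitz estimate in the first argument (with the same πb, pb)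
  have core1 : ∀ π ∈ P, ∀ π' ∈ P, ∀ (πb : E₁) (pb : E₂),
      (r₂ - ℓ₂) * ‖psel π πb pb - psel π' πb pb‖ ≤ ℓ₂ * ‖π - π'‖ := by
    intro π hπ π' hπ' πb pb
    have hp₁Q := (hpsel π hπ πb pb).1
    have hp₂Q := (hpsel π' hπ' πb pb).1
    set p₁ := psel π πb pb with hp1def
    set p₂ := psel π' πb pb with hp2def
    have h1 := hVI π hπ πb pb p₂ hp₂Q
    have h2 := hVI π' hπ' πb pb p₁ hp₁Q
    have e : p₂ - p₁ = -(p₁ - p₂) := by abel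
    rw [e, inner_neg_right, inner_neg_right] at h1
    have hsub : ⟪p₁ - pb, p₁ - p₂⟫ - ⟪p₂ - pb, p₁ - p₂⟫ = ‖p₁ - p₂‖ ^ 2 := by
      rw [← inner_sub_left]
      have e2 : p₁ - pb - (p₂ - pb) = p₁ - p₂ := by abel
      rw [e2, real_inner_self_eq_norm_sq]
    have hinner : ⟪gp π p₁, p₁ - p₂⟫ - ⟪gp π' p₂, p₁ - p₂⟫
        = ⟪gp π p₁ - gp π' p₂, p₁ - p₂⟫ := (inner_sub_left _ _ _).symm
    have hcs : ⟪gp π p₁ - gp π' p₂, p₁ - p₂⟫ ≤ ‖gp π p₁ - gp π' p₂‖ * ‖p₁ - p₂‖ :=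
      real_inner_le_norm _ _
    have hl := hlipp π hπ π' hπ' p₁ hp₁Q p₂ hp₂Q
    have hl2 : ‖gp π p₁ - gp π' p₂‖ * ‖p₁ - p₂‖
        ≤ ℓ₂ * (‖π - π'‖ + ‖p₁ - p₂‖) * ‖p₁ - p₂‖ :=
      mul_le_mul_of_nonneg_right hl (norm_nonneg _)
    have hmain : r₂ * ‖p₁ - p₂‖ ^ 2
        ≤ ℓ₂ * ‖π - π'‖ * ‖p₁ - p₂‖ + ℓ₂ * ‖p₁ - p₂‖ ^ 2 := by
      nlinarith [h1, h2, hsub, hinner, hcs, hl2]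
    rcases eq_or_lt_of_le (norm_nonneg (p₁ - p₂)) with h0 | h0
    · rw [← h0, mul_zero]
      positivity
    · nlinarith [hmain, h0]
  -- the sSup over Q is attained at psel
  have hφ : ∀ π' ∈ P, ∀ (πb : E₁) (pb : E₂),
      sSup ((fun p => chi f r₁ r₂ π' p πb pb) '' Q)
        = chi f r₁ r₂ π' (psel π' πb pb) πb pb := by
    intro π' hπ' πb pb
    obtain ⟨hm, hmax⟩ := hpsel π' hπ' πb pb
    apply IsGreatest.csSup_eq
    refine ⟨⟨_, hm, rfl⟩, ?_⟩
    rintro y ⟨p, hp, rfl⟩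
    exact hmax p hp
  -- variational inequality for πsel2
  have hVIπ : ∀ (πb : E₁) (pb : E₂), ∀ π ∈ P,
      0 ≤ ⟪gπ (πsel2 πb pb) (psel (πsel2 πb pb) πb pb), π - πsel2 πb pb⟫
          + r₁ * ⟪πsel2 πb pb - πb, π - πsel2 πb pb⟫ := by
    intro πb pb π hπ
    obtain ⟨hπ₀P, hmin⟩ := hπsel2 πb pb
    set π₀ := πsel2 πb pb with hπ₀def
    set p₀ := psel π₀ πb pb with hp₀def
    have hp₀Q := (hpsel π₀ hπ₀P πb pb).1
    set δ := π - π₀ with hδdef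
    set K := ℓ₂ / (r₂ - ℓ₂) with hKdef
    have hK0 : 0 ≤ K := le_of_lt (div_pos hℓ₂ hr₂ℓ)
    apply nonneg_of_forall_small (C := (ℓ₁ * K + (ℓ₁ + r₁) / 2) * ‖δ‖ ^ 2)
      (mul_nonneg (by nlinarith [mul_nonneg hℓ₁.le hK0]) (sq_nonneg _))
    intro t ht0 ht1
    have hπtP : π₀ + t • δ ∈ P := hPconv.add_smul_sub_mem hπ₀P hπ ⟨ht0.le, ht1⟩
    set π_t := π₀ + t • δ with hπtdef
    set p_t := psel π_t πb pb with hptdef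
    have hp_tQ := (hpsel π_t hπtP πb pb).1
    have hA := (hpsel π₀ hπ₀P πb pb).2 p_t hp_tQ
    have hB := hmin π_t hπtP
    rw [hφ π₀ hπ₀P πb pb, hφ π_t hπtP πb pb] at hB
    have hAB : chi f r₁ r₂ π₀ p_t πb pb ≤ chi f r₁ r₂ π_t p_t πb pb := le_trans hA hB
    simp only [chi] at hAB
    have hub := fquad_π_ub p_t hp_tQ π₀ hπ₀P π_t hπtP
    have e1 : π_t - π₀ = t • δ := by rw [hπtdef]; abel
    rw [e1, real_inner_smul_right, norm_smul, Real.norm_eq_abs, abs_of_nonneg ht0.le] at hub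
    have hnorm := norm_sq_expand_t π₀ δ πb t
    rw [← hπtdef] at hnorm
    rw [hnorm] at hAB
    have hgd : ⟪gπ π₀ p_t, δ⟫ ≤ ⟪gπ π₀ p₀, δ⟫ + ℓ₁ * K * (t * ‖δ‖) * ‖δ‖ := by
      have hi1 : ⟪gπ π₀ p_t, δ⟫ - ⟪gπ π₀ p₀, δ⟫ = ⟪gπ π₀ p_t - gπ π₀ p₀, δ⟫ :=
        (inner_sub_left _ _ _).symm
      have hi2 : ⟪gπ π₀ p_t - gπ π₀ p₀, δ⟫ ≤ ‖gπ π₀ p_t - gπ π₀ p₀‖ * ‖δ‖ :=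
        real_inner_le_norm _ _
      have hi3 := hlipπ π₀ hπ₀P π₀ hπ₀P p_t hp_tQ p₀ hp₀Q
      rw [sub_self, norm_zero, zero_add] at hi3
      have hi4 : (r₂ - ℓ₂) * ‖p_t - p₀‖ ≤ ℓ₂ * ‖π_t - π₀‖ := core1 π_t hπtP π₀ hπ₀P πb pb
      rw [e1, norm_smul, Real.norm_eq_abs, abs_of_nonneg ht0.le] at hi4
      have hi5 : ‖p_t - p₀‖ ≤ K * (t * ‖δ‖) := by
        rw [hKdef, div_mul_eq_mul_div, le_div_iff₀ hr₂ℓ]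
        linarith [hi4]
      have c1 : ‖gπ π₀ p_t - gπ π₀ p₀‖ * ‖δ‖ ≤ ℓ₁ * ‖p_t - p₀‖ * ‖δ‖ :=
        mul_le_mul_of_nonneg_right hi3 (norm_nonneg δ)
      have c2 : ℓ₁ * ‖p_t - p₀‖ ≤ ℓ₁ * (K * (t * ‖δ‖)) :=
        mul_le_mul_of_nonneg_left hi5 hℓ₁.le
      have c3 : ℓ₁ * ‖p_t - p₀‖ * ‖δ‖ ≤ ℓ₁ * (K * (t * ‖δ‖)) * ‖δ‖ :=
        mul_le_mul_of_nonneg_right c2 (norm_nonneg δ)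
      have c4 : ℓ₁ * (K * (t * ‖δ‖)) * ‖δ‖ = ℓ₁ * K * (t * ‖δ‖) * ‖δ‖ := by ring
      linarith [hi1, hi2, c1, c3, c4.le, c4.ge]
    have hgd_t := mul_le_mul_of_nonneg_left hgd ht0.le
    have hmul : 0 ≤ t * (⟪gπ π₀ p₀, δ⟫ + r₁ * ⟪π₀ - πb, δ⟫
        + t * ((ℓ₁ * K + (ℓ₁ + r₁) / 2) * ‖δ‖ ^ 2)) := by
      linarith [hAB, hub, hgd_t]
    exact nonneg_of_mul ht0 hmul
  -- now the three statements
  intro π hπ π' hπ' πb pb pb'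
  refine ⟨?_, ?_, ?_⟩
  · -- part 1
    have h := core1 π hπ π' hπ' πb pb
    rw [div_mul_eq_mul_div, le_div_iff₀ hr₂ℓ]
    linarith [h, mul_nonneg (by linarith : (0:ℝ) ≤ ℓ₁ + r₂ - 2 * ℓ₂) (norm_nonneg (π - π'))]
  · -- part 2
    have hp₁Q := (hpsel π hπ πb pb).1
    have hp₂Q := (hpsel π hπ πb pb').1
    have h1 := hVI π hπ πb pb (psel π πb pb') hp₂Q
    have h2 := hVI π hπ πb pb' (psel π πb pb) hp₁Q
    apply final_step hr₂ℓ hr₂pos h1 h2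
    have hl := hlipp π hπ π hπ (psel π πb pb) hp₁Q (psel π πb pb') hp₂Q
    rw [sub_self, norm_zero, zero_add] at hl
    calc ⟪gp π (psel π πb pb) - gp π (psel π πb pb'), psel π πb pb - psel π πb pb'⟫
        ≤ ‖gp π (psel π πb pb) - gp π (psel π πb pb')‖ * ‖psel π πb pb - psel π πb pb'‖ :=
          real_inner_le_norm _ _
      _ ≤ ℓ₂ * ‖psel π πb pb - psel π πb pb'‖ * ‖psel π πb pb - psel π πb pb'‖ :=
          mul_le_mul_of_nonneg_right hl (norm_nonneg _)
      _ = ℓ₂ * ‖psel π πb pb - psel π πb pb'‖ ^ 2 := by ring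
  · -- part 3
    have hπ₁P := (hπsel2 πb pb).1
    have hπ₂P := (hπsel2 πb pb').1
    set π₁ := πsel2 πb pb with hπ₁def
    set π₂ := πsel2 πb pb' with hπ₂def
    have hp₁Q := (hpsel π₁ hπ₁P πb pb).1
    have hp₂Q := (hpsel π₂ hπ₂P πb pb').1
    set p₁ := psel π₁ πb pb with hp₁def
    set p₂ := psel π₂ πb pb' with hp₂def
    clear_value π₁ π₂ p₁ p₂
    have h1 := hVI π₁ hπ₁P πb pb p₂ hp₂Q
    have h2 := hVI π₂ hπ₂P πb pb' p₁ hp₁Q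
    rw [← hp₁def] at h1
    rw [← hp₂def] at h2
    apply final_step hr₂ℓ hr₂pos h1 h2
    -- hS : ⟪gp π₁ p₁ - gp π₂ p₂, p₁ - p₂⟫ ≤ ℓ₂ * ‖p₁ - p₂‖ ^ 2
    have hi := fquad_p_ub π₁ hπ₁P p₁ hp₁Q p₂ hp₂Q
    have hii := fquad_p_ub π₂ hπ₂P p₂ hp₂Q p₁ hp₁Q
    have hiii : f π₁ p₁ + r₁ / 2 * ‖π₁ - πb‖ ^ 2 ≤ f π₂ p₁ + r₁ / 2 * ‖π₂ - πb‖ ^ 2 := by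
      have hv := hVIπ πb pb π₂ hπ₂P
      rw [← hπ₁def, ← hp₁def] at hv
      have hlb := fquad_π_lb p₁ hp₁Q π₁ hπ₁P π₂ hπ₂P
      have hn := congrArg (fun z => r₁ / 2 * z) (norm_sq_expand π₁ π₂ πb)
      beta_reduce at hn
      linarith [hv, hlb, hn.le, hn.ge,
        mul_nonneg (by linarith : (0:ℝ) ≤ r₁ - ℓ₁) (sq_nonneg ‖π₂ - π₁‖)]
    have hiv : f π₂ p₂ + r₁ / 2 * ‖π₂ - πb‖ ^ 2 ≤ f π₁ p₂ + r₁ / 2 * ‖π₁ - πb‖ ^ 2 := by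
      have hv := hVIπ πb pb' π₁ hπ₁P
      rw [← hπ₂def, ← hp₂def] at hv
      have hlb := fquad_π_lb p₂ hp₂Q π₂ hπ₂P π₁ hπ₁P
      have hn := congrArg (fun z => r₁ / 2 * z) (norm_sq_expand π₂ π₁ πb)
      beta_reduce at hn
      linarith [hv, hlb, hn.le, hn.ge,
        mul_nonneg (by linarith : (0:ℝ) ≤ r₁ - ℓ₁) (sq_nonneg ‖π₁ - π₂‖)]
    have e1 : p₂ - p₁ = -(p₁ - p₂) := by abel
    rw [e1, inner_neg_right, norm_neg] at hi
    have hinner : ⟪gp π₁ p₁ - gp π₂ p₂, p₁ - p₂⟫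
        = ⟪gp π₁ p₁, p₁ - p₂⟫ - ⟪gp π₂ p₂, p₁ - p₂⟫ := inner_sub_left _ _ _
    rw [hinner]
    exact combine_S hi hii hiii hiv
end

section
/- (Danskin-type smoothness) For each π̄ ∈ E₁ and p̄ ∈ E₂, the marginal function p ↦ φ_π(p,π̄,p̄) is differentiable on E₂ with gradient ∇_p φ_π(p,π̄,p̄) = ∇_p χ(π(p,π̄,p̄), p, π̄, p̄), and this gradient is L_{φπ}-Lipschitz: ‖∇_p φ_π(p,π̄,p̄) − ∇_p φ_π(p',π̄,p̄)‖ ≤ L_{φπ}‖p−p'‖ for all p, p' ∈ E₂. -/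
open scoped RealInnerProductSpace
open InnerProductSpace

section helpers
variable {F : Type*} [NormedAddCommGroup F] [InnerProductSpace ℝ F] [CompleteSpace F]

lemma aux_grad_inner (c x : F) : HasGradientAt (fun y => ⟪c, y⟫) c x := by
  show HasFDerivAt _ (toDual ℝ F c) x
  have : (fun y => ⟪c, y⟫) = ⇑(toDual ℝ F c) := by
    funext y; rw [toDual_apply_apply]
  rw [this]
  exact (toDual ℝ F c).hasFDerivAt

lemma aux_grad_sq (r : ℝ) (c x : F) :
    HasGradientAt (fun y => r / 2 * ‖y - c‖ ^ 2) (r • (x - c)) x := by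
  have h1 : HasFDerivAt (fun y : F => y - c) (ContinuousLinearMap.id ℝ F) x :=
    (hasFDerivAt_id x).sub_const c
  have h2 := (h1.inner ℝ h1).const_mul (r / 2)
  have heq : (fun y : F => r / 2 * ⟪y - c, y - c⟫) = fun y => r / 2 * ‖y - c‖ ^ 2 := by
    funext y; rw [real_inner_self_eq_norm_sq]
  rw [heq] at h2
  have hlin : ((r / 2) • ((fderivInnerCLM ℝ (x - c, x - c)).comp
      ((ContinuousLinearMap.id ℝ F).prod (ContinuousLinearMap.id ℝ F))))
      = toDual ℝ F (r • (x - c)) := by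
    ext v
    simp only [ContinuousLinearMap.smul_apply, ContinuousLinearMap.coe_comp', Function.comp_apply,
      ContinuousLinearMap.prod_apply, ContinuousLinearMap.coe_id', id_eq, fderivInnerCLM_apply,
      toDual_apply_apply, smul_eq_mul, real_inner_smul_left]
    rw [real_inner_comm (x - c) v, inner_sub_left]
    ring
  rw [hlin] at h2
  exact h2

lemma aux_mvt {g : F → ℝ} {G : F → F} {C : ℝ} (a b : F)
    (hg : ∀ x, HasGradientAt g (G x) x) (hC : ∀ x ∈ segment ℝ a b, ‖G x‖ ≤ C) :
    ‖g b - g a‖ ≤ C * ‖b - a‖ := by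
  apply Convex.norm_image_sub_le_of_norm_hasFDerivWithin_le
    (f' := fun x => toDual ℝ F (G x))
    (fun x _ => (hg x).hasFDerivAt.hasFDerivWithinAt)
    (fun x hx => ?_) (convex_segment a b) (left_mem_segment ℝ a b) (right_mem_segment ℝ a b)
  rw [(toDual ℝ F).norm_map]
  exact hC x hx

lemma aux_seg_norm {a b x : F} (hx : x ∈ segment ℝ a b) : ‖x - a‖ ≤ ‖b - a‖ := by
  obtain ⟨s, t, hs, ht, hst, rfl⟩ := hx
  have hs' : s = 1 - t := by linarith
  have : s • a + t • b - a = t • (b - a) := by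
    rw [hs', sub_smul, one_smul, smul_sub]; abel
  rw [this, norm_smul, Real.norm_eq_abs, abs_of_nonneg ht]
  nlinarith [norm_nonneg (b - a)]

end helpers

set_option maxHeartbeats 1000000 in
/-- Danskin-type smoothness: `p ↦ φ_π(p,π̄,p̄) = min_{π∈Π} χ(π,p,π̄,p̄)` is
differentiable with gradient `∇_p χ(π(p,π̄,p̄),p,π̄,p̄)`, and this gradient is
`L_{φπ}`-Lipschitz in `p`. -/
theorem danskin_smoothness_of_partial_min
    {E₁ : Type*} [NormedAddCommGroup E₁] [InnerProductSpace ℝ E₁] [FiniteDimensional ℝ E₁]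
    {E₂ : Type*} [NormedAddCommGroup E₂] [InnerProductSpace ℝ E₂] [FiniteDimensional ℝ E₂]
    (P : Set E₁) (hPne : P.Nonempty) (hPcpt : IsCompact P) (hPconv : Convex ℝ P)
    (f : E₁ → E₂ → ℝ) (hf : ContDiff ℝ 1 (fun q : E₁ × E₂ => f q.1 q.2))
    (gπ : E₁ → E₂ → E₁) (gp : E₁ → E₂ → E₂)
    (hgπ : ∀ π p, HasGradientAt (fun π' => f π' p) (gπ π p) π)
    (hgp : ∀ π p, HasGradientAt (fun p' => f π p') (gp π p) p)
    (ℓ₁ ℓ₂ : ℝ) (hℓ₁ : 0 < ℓ₁) (hℓ₂ : 0 < ℓ₂)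
    (hlipπ : ∀ π ∈ P, ∀ π' ∈ P, ∀ p p' : E₂,
      ‖gπ π p - gπ π' p'‖ ≤ ℓ₁ * (‖π - π'‖ + ‖p - p'‖))
    (hlipp : ∀ π ∈ P, ∀ π' ∈ P, ∀ p p' : E₂,
      ‖gp π p - gp π' p'‖ ≤ ℓ₂ * (‖π - π'‖ + ‖p - p'‖))
    (r₁ r₂ : ℝ) (hr₁ : ℓ₁ < r₁) (hr₂ : 0 < r₂)
    -- `πsel p π̄ p̄` is the unique minimizer of `π ↦ χ(π,p,π̄,p̄)` over `Π`
    (πsel : E₂ → E₁ → E₂ → E₁)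
    (hπsel : ∀ (p : E₂) (πb : E₁) (pb : E₂), πsel p πb pb ∈ P ∧
      ∀ π' ∈ P, chi f r₁ r₂ (πsel p πb pb) p πb pb ≤ chi f r₁ r₂ π' p πb pb) :
    ∀ (πb : E₁) (pb : E₂),
      (∀ p : E₂, HasGradientAt (fun p' => chi f r₁ r₂ (πsel p' πb pb) p' πb pb)
        (gp (πsel p πb pb) p - r₂ • (p - pb)) p) ∧
      (∀ p p' : E₂,
        ‖(gp (πsel p πb pb) p - r₂ • (p - pb)) -
            (gp (πsel p' πb pb) p' - r₂ • (p' - pb))‖ ≤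
          (ℓ₂ * (ℓ₂ / (r₁ - ℓ₁) + 1) + ℓ₂ + r₂) * ‖p - p'‖) := by
  intro πb pb
  set μ := r₁ - ℓ₁ with hμdef
  have hμ : 0 < μ := sub_pos.2 hr₁
  -- gradient of chi in the p-variable
  have hchi_p : ∀ (π : E₁) (p : E₂), HasGradientAt (fun p' => chi f r₁ r₂ π p' πb pb)
      (gp π p - r₂ • (p - pb)) p := by
    intro π p
    have h2 : HasGradientAt (fun p' : E₂ => r₂ / 2 * ‖p' - pb‖ ^ 2) (r₂ • (p - pb)) p :=
      aux_grad_sq r₂ pb p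
    have h3 := ((hgp π p).hasFDerivAt.add_const (r₁ / 2 * ‖π - πb‖ ^ 2)).sub h2.hasFDerivAt
    rw [← map_sub] at h3
    exact h3
  -- gradient of chi in the π-variable
  have hchi_π : ∀ (p : E₂) (x : E₁), HasGradientAt (fun π' => chi f r₁ r₂ π' p πb pb)
      (gπ x p + r₁ • (x - πb)) x := by
    intro p x
    have h2 : HasGradientAt (fun π' : E₁ => r₁ / 2 * ‖π' - πb‖ ^ 2) (r₁ • (x - πb)) x :=
      aux_grad_sq r₁ πb x
    have h3 := ((hgπ x p).hasFDerivAt.add h2.hasFDerivAt).sub_const (r₂ / 2 * ‖p - pb‖ ^ 2)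
    rw [← map_add] at h3
    exact h3
  -- quadratic growth at the minimizer
  have hquad : ∀ (p : E₂) (π₁ : E₁), π₁ ∈ P →
      chi f r₁ r₂ (πsel p πb pb) p πb pb + μ / 2 * ‖π₁ - πsel p πb pb‖ ^ 2 ≤
        chi f r₁ r₂ π₁ p πb pb := by
    intro p π₁ hπ₁
    obtain ⟨hπ₀, hmin⟩ := hπsel p πb pb
    set π₀ := πsel p πb pb with hπ₀def
    set v := π₁ - π₀ with hvdef
    set d := ‖v‖ with hddef
    set h : E₁ → ℝ := fun x => chi f r₁ r₂ x p πb pb with hhdef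
    set G : E₁ → E₁ := fun x => gπ x p + r₁ • (x - πb) with hGdef
    have hG : ∀ x, HasGradientAt h (G x) x := fun x => hchi_π p x
    set c : ℝ → E₁ := fun t => π₀ + t • v with hcdef
    have hc : ∀ t : ℝ, HasDerivAt c v t := by
      intro t
      have := ((hasDerivAt_id t).smul_const v).const_add π₀
      simpa [hcdef] using this
    have hc0 : c 0 = π₀ := by simp [hcdef]
    have hc1 : c 1 = π₁ := by simp [hcdef, hvdef]
    set w : ℝ → ℝ := fun t => h (c t) with hwdef
    have hw : ∀ t : ℝ, HasDerivAt w ⟪G (c t), v⟫ t := by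
      intro t
      have := (hG (c t)).hasFDerivAt.comp_hasDerivAt t (hc t)
      simp only [InnerProductSpace.toDual_apply_apply] at this; exact this
    have hmem : ∀ t ∈ Set.Icc (0:ℝ) 1, c t ∈ P := by
      intro t ht
      have := hPconv hπ₀ hπ₁ (by linarith [ht.2] : (0:ℝ) ≤ 1 - t) ht.1 (by ring)
      have heq : (1 - t) • π₀ + t • π₁ = c t := by
        simp only [hcdef, hvdef, sub_smul, one_smul, smul_sub]; abel
      rwa [heq] at this
    set β := ⟪G π₀, v⟫ with hβdef
    -- difference of gradients along the segment
    have hGdiff : ∀ t ∈ Set.Icc (0:ℝ) 1,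
        ‖gπ (c t) p - gπ π₀ p‖ ≤ ℓ₁ * (t * d) := by
      intro t ht
      have := hlipπ (c t) (hmem t ht) π₀ hπ₀ p p
      have hct : c t - π₀ = t • v := by simp [hcdef]
      have hn : ‖c t - π₀‖ = t * d := by
        rw [hct, norm_smul, Real.norm_eq_abs, abs_of_nonneg ht.1]
      simpa [hn] using this
    have hinner_t : ∀ t ∈ Set.Icc (0:ℝ) 1,
        ⟪G (c t), v⟫ = β + ⟪gπ (c t) p - gπ π₀ p, v⟫ + r₁ * t * (d * d) := by
      intro t ht
      have hct : c t - πb = (π₀ - πb) + t • v := by simp [hcdef]; abel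
      simp only [hGdef, hβdef]
      rw [hct]
      simp only [inner_add_left, inner_sub_left, smul_add, real_inner_smul_left]
      rw [real_inner_self_eq_norm_mul_norm, ← hddef]
      ring
    -- variational inequality: β ≥ 0
    have hβ : 0 ≤ β := by
      set K := (ℓ₁ + r₁) * (d * d) with hKdef
      have hK : 0 ≤ K := mul_nonneg (by linarith) (mul_self_nonneg d)
      have hstep : ∀ t : ℝ, 0 < t → t ≤ 1 → 0 ≤ β + K * t := by
        intro t ht0 ht1
        have hub : ∀ s ∈ interior (Set.Icc (0:ℝ) t), deriv w s ≤ β + K * t := by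
          intro s hs
          rw [interior_Icc] at hs
          have hs1 : s ∈ Set.Icc (0:ℝ) 1 := ⟨le_of_lt hs.1, le_trans (le_of_lt hs.2) ht1⟩
          rw [(hw s).deriv, hinner_t s hs1]
          have h1 : ⟪gπ (c s) p - gπ π₀ p, v⟫ ≤ ℓ₁ * (s * d) * d := by
            refine le_trans (real_inner_le_norm _ _) ?_
            exact mul_le_mul_of_nonneg_right (hGdiff s hs1) (norm_nonneg v)
          have hst : s ≤ t := le_of_lt hs.2
          have hd2 : 0 ≤ d := norm_nonneg v
          simp only [hKdef]
          nlinarith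
        have hle := Convex.image_sub_le_mul_sub_of_deriv_le (convex_Icc 0 t)
          (fun s _ => ((hw s).differentiableAt).continuousAt.continuousWithinAt)
          (fun s _ => ((hw s).differentiableAt).differentiableWithinAt)
          hub 0 (Set.left_mem_Icc.2 (le_of_lt ht0)) t (Set.right_mem_Icc.2 (le_of_lt ht0))
          (le_of_lt ht0)
        have hwt : w 0 ≤ w t := by
          have := hmin (c t) (hmem t ⟨le_of_lt ht0, ht1⟩)
          simpa [hwdef, hc0] using this
        nlinarith
      by_contra hcon
      push_neg at hcon
      set T := -β / (2 * (K + 1)) with hTdef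
      have hTpos : 0 < T := div_pos (by linarith) (by linarith)
      have ht0 : 0 < min 1 T := lt_min one_pos hTpos
      have hst := hstep _ ht0 (min_le_left _ _)
      have hle2 : K * min 1 T ≤ K * T :=
        mul_le_mul_of_nonneg_left (min_le_right _ _) hK
      have h2T : T * (2 * (K + 1)) = -β := div_mul_cancel₀ _ (by linarith)
      nlinarith
    -- monotonicity of the shifted function
    have hu : ∀ t : ℝ, HasDerivAt (fun t => w t - μ / 2 * (d * d) * t ^ 2)
        (⟪G (c t), v⟫ - μ / 2 * (d * d) * (2 * t)) t := by
      intro t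
      have h2 : HasDerivAt (fun t : ℝ => μ / 2 * (d * d) * t ^ 2)
          (μ / 2 * (d * d) * (2 * t)) t := by
        have := (hasDerivAt_pow 2 t).const_mul (μ / 2 * (d * d))
        simpa using this
      exact (hw t).sub h2
    have humono : w 0 - μ / 2 * (d * d) * 0 ^ 2 ≤ w 1 - μ / 2 * (d * d) * 1 ^ 2 := by
      have := Convex.mul_sub_le_image_sub_of_le_deriv (convex_Icc (0:ℝ) 1)
        (fun s _ => ((hu s).differentiableAt).continuousAt.continuousWithinAt)
        (fun s _ => ((hu s).differentiableAt).differentiableWithinAt)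
        (C := 0) (fun s hs => ?_) 0 (Set.left_mem_Icc.2 zero_le_one) 1
        (Set.right_mem_Icc.2 zero_le_one) zero_le_one
      · linarith [this]
      · rw [interior_Icc] at hs
        have hs1 : s ∈ Set.Icc (0:ℝ) 1 := ⟨le_of_lt hs.1, le_of_lt hs.2⟩
        rw [(hu s).deriv, hinner_t s hs1]
        have h1 : -(ℓ₁ * (s * d) * d) ≤ ⟪gπ (c s) p - gπ π₀ p, v⟫ := by
          have ha := abs_real_inner_le_norm (gπ (c s) p - gπ π₀ p) v
          have h2 := mul_le_mul_of_nonneg_right (hGdiff s hs1) (norm_nonneg v)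
          rw [← hddef] at h2
          have h3 := neg_abs_le ⟪gπ (c s) p - gπ π₀ p, v⟫
          linarith
        simp only [hμdef]
        linarith
    have hfin : h π₀ + μ / 2 * (d * d) ≤ h π₁ := by
      have h0 : w 0 = h π₀ := by rw [hwdef]; simp [hc0]
      have h1 : w 1 = h π₁ := by rw [hwdef]; simp [hc1]
      rw [h0, h1] at humono
      norm_num at humono
      linarith
    have hd2 : d * d = ‖π₁ - πsel p πb pb‖ ^ 2 := by rw [hddef, hvdef]; ring
    rw [← hd2]
    exact hfin
  -- Lipschitz property of the selector
  have hsel_lip : ∀ p p' : E₂, ‖πsel p πb pb - πsel p' πb pb‖ ≤ ℓ₂ / μ * ‖p - p'‖ := by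
    intro p p'
    obtain ⟨hπ, hminp⟩ := hπsel p πb pb
    obtain ⟨hπ', hminp'⟩ := hπsel p' πb pb
    set π := πsel p πb pb
    set π' := πsel p' πb pb
    set d := ‖π - π'‖ with hddef
    have hq1 := hquad p π' hπ'
    have hq2 := hquad p' π hπ
    have hrev : ‖π' - π‖ = d := norm_sub_rev π' π
    rw [hrev] at hq1
    have hrev2 : ‖π - π'‖ = d := rfl
    rw [hrev2] at hq2
    -- the cross term
    have hcross : ‖(f π' p - f π p) - (f π' p' - f π p')‖ ≤ ℓ₂ * d * ‖p - p'‖ := by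
      have hgrad : ∀ q : E₂, HasGradientAt (fun q => f π' q - f π q) (gp π' q - gp π q) q := by
        intro q
        have := (hgp π' q).hasFDerivAt.sub (hgp π q).hasFDerivAt
        rw [← map_sub] at this
        exact this
      have hbound : ∀ q ∈ segment ℝ p' p, ‖gp π' q - gp π q‖ ≤ ℓ₂ * d := by
        intro q hq
        have := hlipp π' hπ' π hπ q q
        simpa [hrev] using this
      exact aux_mvt p' p hgrad hbound
    have hsum : μ * (d * d) ≤ ℓ₂ * d * ‖p - p'‖ := by
      have hA : chi f r₁ r₂ π' p πb pb - chi f r₁ r₂ π p πb pb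
          + (chi f r₁ r₂ π p' πb pb - chi f r₁ r₂ π' p' πb pb)
          = (f π' p - f π p) - (f π' p' - f π p') := by
        simp only [chi]; ring
      have habs := le_trans (le_abs_self _) hcross
      nlinarith [hq1, hq2, habs, hA]
    rcases eq_or_lt_of_le (norm_nonneg (π - π')) with h0 | h0
    · rw [hddef, ← h0]
      positivity
    · rw [← hddef] at h0
      rw [div_mul_eq_mul_div, le_div_iff₀ hμ]
      nlinarith [hsum, h0]
  set φ : E₂ → ℝ := fun q => chi f r₁ r₂ (πsel q πb pb) q πb pb with hφdef
  set V : E₂ → E₂ := fun q => gp (πsel q πb pb) q - r₂ • (q - pb) with hVdef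
  -- descent-type bound for chi in p
  have hdesc : ∀ π ∈ P, ∀ p p' : E₂,
      |chi f r₁ r₂ π p' πb pb - chi f r₁ r₂ π p πb pb - ⟪gp π p - r₂ • (p - pb), p' - p⟫| ≤
        (ℓ₂ + r₂) * (‖p' - p‖ * ‖p' - p‖) := by
    intro π hπ p p'
    set v₀ := gp π p - r₂ • (p - pb) with hv₀
    have hgrad : ∀ q, HasGradientAt (fun q => chi f r₁ r₂ π q πb pb - ⟪v₀, q⟫)
        ((gp π q - r₂ • (q - pb)) - v₀) q := by
      intro q
      have h := (hchi_p π q).hasFDerivAt.sub (aux_grad_inner v₀ q).hasFDerivAt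
      rw [← map_sub] at h
      exact h
    have hbound : ∀ q ∈ segment ℝ p p',
        ‖(gp π q - r₂ • (q - pb)) - v₀‖ ≤ (ℓ₂ + r₂) * ‖p' - p‖ := by
      intro q hq
      have hseg := aux_seg_norm hq
      have h1 := hlipp π hπ π hπ q p
      simp only [sub_self, norm_zero, zero_add] at h1
      have heq : (gp π q - r₂ • (q - pb)) - v₀ = (gp π q - gp π p) - r₂ • (q - p) := by
        rw [hv₀]; module
      rw [heq]
      have h2 : ‖r₂ • (q - p)‖ = r₂ * ‖q - p‖ := by
        rw [norm_smul, Real.norm_eq_abs, abs_of_pos hr₂]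
      refine le_trans (norm_sub_le _ _) ?_
      rw [h2]
      nlinarith [norm_nonneg (q - p)]
    have hmvt := aux_mvt p p' hgrad hbound
    have heq2 : chi f r₁ r₂ π p' πb pb - chi f r₁ r₂ π p πb pb - ⟪v₀, p' - p⟫
        = (chi f r₁ r₂ π p' πb pb - ⟪v₀, p'⟫) - (chi f r₁ r₂ π p πb pb - ⟪v₀, p⟫) := by
      rw [inner_sub_right]; ring
    rw [heq2, ← Real.norm_eq_abs]
    calc ‖_‖ ≤ (ℓ₂ + r₂) * ‖p' - p‖ * ‖p' - p‖ := hmvt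
      _ = (ℓ₂ + r₂) * (‖p' - p‖ * ‖p' - p‖) := by ring
  -- key quadratic estimate for the marginal function
  have key : ∀ p p' : E₂, |φ p' - φ p - ⟪V p, p' - p⟫| ≤
      ((ℓ₂ + r₂) + ℓ₂ * (ℓ₂ / μ)) * (‖p' - p‖ * ‖p' - p‖) := by
    intro p p'
    obtain ⟨hπp, hminp⟩ := hπsel p πb pb
    obtain ⟨hπp', hminp'⟩ := hπsel p' πb pb
    have hnn : (0:ℝ) ≤ ‖p' - p‖ * ‖p' - p‖ := mul_self_nonneg _
    have hℓμ : 0 ≤ ℓ₂ * (ℓ₂ / μ) := by positivity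
    have hup : φ p' - φ p - ⟪V p, p' - p⟫ ≤ (ℓ₂ + r₂) * (‖p' - p‖ * ‖p' - p‖) := by
      have h1 := hminp' (πsel p πb pb) hπp
      have h2 := (abs_le.1 (hdesc (πsel p πb pb) hπp p p')).2
      simp only [hφdef, hVdef]
      linarith
    have h3 : -(ℓ₂ * (ℓ₂ / μ) * (‖p' - p‖ * ‖p' - p‖)) ≤
        ⟪(gp (πsel p' πb pb) p - r₂ • (p - pb)) - V p, p' - p⟫ := by
      have hdsel := hsel_lip p' p
      have hdiff : (gp (πsel p' πb pb) p - r₂ • (p - pb)) - V p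
          = gp (πsel p' πb pb) p - gp (πsel p πb pb) p := by
        simp only [hVdef]; abel
      rw [hdiff]
      have hn := hlipp (πsel p' πb pb) hπp' (πsel p πb pb) hπp p p
      simp only [sub_self, norm_zero, add_zero] at hn
      have hnorm : ‖gp (πsel p' πb pb) p - gp (πsel p πb pb) p‖ ≤ ℓ₂ * (ℓ₂ / μ) * ‖p' - p‖ := by
        refine le_trans hn ?_
        rw [mul_assoc]
        exact mul_le_mul_of_nonneg_left hdsel (le_of_lt hℓ₂)
      have hcs := abs_real_inner_le_norm (gp (πsel p' πb pb) p - gp (πsel p πb pb) p) (p' - p)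
      have hcs2 := neg_abs_le ⟪gp (πsel p' πb pb) p - gp (πsel p πb pb) p, p' - p⟫
      have hmul := mul_le_mul_of_nonneg_right hnorm (norm_nonneg (p' - p))
      nlinarith
    have hlow : -(((ℓ₂ + r₂) + ℓ₂ * (ℓ₂ / μ)) * (‖p' - p‖ * ‖p' - p‖)) ≤
        φ p' - φ p - ⟪V p, p' - p⟫ := by
      have h1 := hminp (πsel p' πb pb) hπp'
      have h2 := (abs_le.1 (hdesc (πsel p' πb pb) hπp' p p')).1
      have hsplit : φ p' - φ p - ⟪V p, p' - p⟫ =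
          (chi f r₁ r₂ (πsel p' πb pb) p' πb pb - chi f r₁ r₂ (πsel p' πb pb) p πb pb -
            ⟪gp (πsel p' πb pb) p - r₂ • (p - pb), p' - p⟫)
          + (chi f r₁ r₂ (πsel p' πb pb) p πb pb - φ p)
          + ⟪(gp (πsel p' πb pb) p - r₂ • (p - pb)) - V p, p' - p⟫ := by
        simp only [hφdef, hVdef, inner_sub_left]
        ring
      rw [hsplit]
      have h4 : (0:ℝ) ≤ chi f r₁ r₂ (πsel p' πb pb) p πb pb - φ p := by
        simp only [hφdef]; linarith
      linarith
    rw [abs_le]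
    exact ⟨hlow, by nlinarith⟩
  have hC : 0 < (ℓ₂ + r₂) + ℓ₂ * (ℓ₂ / μ) := by
    have : 0 < ℓ₂ / μ := div_pos hℓ₂ hμ
    nlinarith
  constructor
  · -- differentiability
    intro p
    show HasGradientAt φ (V p) p
    rw [hasGradientAt_iff_isLittleO, Asymptotics.isLittleO_iff]
    intro ε hε
    filter_upwards [Metric.ball_mem_nhds p (div_pos hε hC)] with q hq
    have hkey := key p q
    have hq' : ‖q - p‖ < ε / ((ℓ₂ + r₂) + ℓ₂ * (ℓ₂ / μ)) := by
      rwa [Metric.mem_ball, dist_eq_norm] at hq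
    have hq2 : ‖q - p‖ * ((ℓ₂ + r₂) + ℓ₂ * (ℓ₂ / μ)) < ε := (lt_div_iff₀ hC).1 hq'
    calc |φ q - φ p - ⟪V p, q - p⟫| ≤
        ((ℓ₂ + r₂) + ℓ₂ * (ℓ₂ / μ)) * (‖q - p‖ * ‖q - p‖) := hkey
      _ ≤ ε * ‖q - p‖ := by nlinarith [norm_nonneg (q - p), hq2]
  · -- Lipschitz bound
    intro p p'
    have hdsel := hsel_lip p p'
    have h1 := hlipp (πsel p πb pb) (hπsel p πb pb).1 (πsel p' πb pb) (hπsel p' πb pb).1 p p'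
    have heq : (gp (πsel p πb pb) p - r₂ • (p - pb)) - (gp (πsel p' πb pb) p' - r₂ • (p' - pb))
        = (gp (πsel p πb pb) p - gp (πsel p' πb pb) p') - r₂ • (p - p') := by
      rw [smul_sub, smul_sub, smul_sub]; abel
    rw [heq]
    have h2 : ‖r₂ • (p - p')‖ = r₂ * ‖p - p'‖ := by
      rw [norm_smul, Real.norm_eq_abs, abs_of_pos hr₂]
    refine le_trans (norm_sub_le _ _) ?_
    rw [h2]
    have h3 : ‖gp (πsel p πb pb) p - gp (πsel p' πb pb) p'‖ ≤
        ℓ₂ * (ℓ₂ / μ * ‖p - p'‖ + ‖p - p'‖) := by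
      refine le_trans h1 ?_
      exact mul_le_mul_of_nonneg_left (by linarith) (le_of_lt hℓ₂)
    have hn := norm_nonneg (p - p')
    nlinarith [h3]
end

section
/- Fix π ∈ Π, p ∈ 𝒫, π̄ ∈ E₁, p̄ ∈ E₂, and set π⁺ := Proj_Π(π − τ∇_π χ(π,p,π̄,p̄)) and p⁺ := Proj_𝒫(p + σ∇_p χ(π⁺,p,π̄,p̄)). Then ‖π⁺ − π(p,π̄,p̄)‖ ≤ κ₆‖π⁺−π‖ with κ₆ := (2τr₁+1)/(τ(r₁−ℓ₁)), and ‖p⁺ − p(π⁺,π̄,p̄)‖ ≤ κ₇‖p⁺−p‖ with κ₇ := (2σr₂+1)/(σ(r₂−ℓ₂)). -/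
open scoped RealInnerProductSpace

lemma aux_grad {E : Type*} [NormedAddCommGroup E] [InnerProductSpace ℝ E] [CompleteSpace E]
    {φ : E → ℝ} {g : E} {x : E} (a : E) (c d : ℝ) (hφ : HasGradientAt φ g x) :
    HasGradientAt (fun y => φ y + c / 2 * ‖y - a‖ ^ 2 + d) (g + c • (x - a)) x := by
  rw [hasGradientAt_iff_hasFDerivAt]
  have h2 : HasFDerivAt (fun y : E => ‖y - a‖ ^ 2) (2 • (innerSL ℝ (x - a))) x := by
    simpa using ((hasFDerivAt_id x).sub_const a).norm_sq
  have h3 := (hφ.hasFDerivAt.add (h2.const_mul (c / 2))).add_const d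
  have heq : (InnerProductSpace.toDual ℝ E) (g + c • (x - a)) =
      (InnerProductSpace.toDual ℝ E) g + (c / 2) • (2 : ℕ) • (innerSL ℝ) (x - a) := by
    ext y
    simp [InnerProductSpace.toDual_apply_apply, inner_add_left, real_inner_smul_left]
    ring
  rw [heq]
  exact h3

lemma varineq_min {E : Type*} [NormedAddCommGroup E] [InnerProductSpace ℝ E]
    [CompleteSpace E] {K : Set E} (hK : Convex ℝ K) {φ : E → ℝ} {G : E} {xs : E}
    (hG : HasGradientAt φ G xs) (hxs : xs ∈ K)
    (hmin : ∀ y ∈ K, φ xs ≤ φ y) {y : E} (hy : y ∈ K) :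
    0 ≤ ⟪G, y - xs⟫ := by
  have hcone := sub_mem_posTangentConeAt_of_segment_subset (hK.segment_subset hxs hy)
  have := (isMinOn_iff.mpr hmin).localize.hasFDerivWithinAt_nonneg
    (hG.hasFDerivAt.hasFDerivWithinAt) hcone
  simpa [InnerProductSpace.toDual_apply_apply] using this

lemma varineq_max {E : Type*} [NormedAddCommGroup E] [InnerProductSpace ℝ E]
    [CompleteSpace E] {K : Set E} (hK : Convex ℝ K) {φ : E → ℝ} {G : E} {xs : E}
    (hG : HasGradientAt φ G xs) (hxs : xs ∈ K)
    (hmax : ∀ y ∈ K, φ y ≤ φ xs) {y : E} (hy : y ∈ K) :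
    ⟪G, y - xs⟫ ≤ 0 := by
  have hcone := sub_mem_posTangentConeAt_of_segment_subset (hK.segment_subset hxs hy)
  have := (isMaxOn_iff.mpr hmax).localize.hasFDerivWithinAt_nonpos
    (hG.hasFDerivAt.hasFDerivWithinAt) hcone
  simpa [InnerProductSpace.toDual_apply_apply] using this

lemma key_ineq {E : Type*} [NormedAddCommGroup E] [InnerProductSpace ℝ E]
    {x xp xs gx gxp gxs : E} {τ μ L : ℝ} (hτ : 0 < τ) (hμ : 0 < μ) (hL : 0 ≤ L)
    (hmono : μ * ‖xp - xs‖ ^ 2 ≤ ⟪gxp - gxs, xp - xs⟫)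
    (hvar : 0 ≤ ⟪gxs, xp - xs⟫)
    (hproj : ⟪x - τ • gx - xp, xs - xp⟫ ≤ 0)
    (hlip : ‖gxp - gx‖ ≤ L * ‖xp - x‖) :
    μ * ‖xp - xs‖ ≤ (L + 1 / τ) * ‖xp - x‖ := by
  rcases eq_or_lt_of_le (norm_nonneg (xp - xs)) with h0 | hpos
  · rw [← h0, mul_zero]
    positivity
  have h1 : μ * ‖xp - xs‖ ^ 2 ≤ ⟪gxp, xp - xs⟫ := by
    rw [inner_sub_left] at hmono
    linarith
  have hexp : x - τ • gx - xp = (x - xp) - τ • gx := by module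
  rw [hexp, inner_sub_left, real_inner_smul_left] at hproj
  have h2 : τ * ⟪gx, xp - xs⟫ ≤ ‖xp - x‖ * ‖xp - xs‖ := by
    have ha : ⟪gx, xp - xs⟫ = - ⟪gx, xs - xp⟫ := by
      rw [← inner_neg_right]; congr 1; module
    have hb : ⟪x - xp, xp - xs⟫ = - ⟪x - xp, xs - xp⟫ := by
      rw [← inner_neg_right]; congr 1; module
    have hc := real_inner_le_norm (x - xp) (xp - xs)
    rw [norm_sub_rev x xp] at hc
    nlinarith
  have h3 : ⟪gxp - gx, xp - xs⟫ ≤ L * ‖xp - x‖ * ‖xp - xs‖ := by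
    have := real_inner_le_norm (gxp - gx) (xp - xs)
    nlinarith [norm_nonneg (xp - xs)]
  have h4 : ⟪gxp, xp - xs⟫ = ⟪gxp - gx, xp - xs⟫ + ⟪gx, xp - xs⟫ := by
    rw [inner_sub_left]; ring
  have h2' : ⟪gx, xp - xs⟫ ≤ 1 / τ * (‖xp - x‖ * ‖xp - xs‖) := by
    have hc := mul_le_mul_of_nonneg_left h2 (by positivity : (0:ℝ) ≤ 1 / τ)
    have he : 1 / τ * (τ * ⟪gx, xp - xs⟫) = ⟪gx, xp - xs⟫ := by
      field_simp
    linarith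
  have h5 : μ * ‖xp - xs‖ * ‖xp - xs‖ ≤ ((L + 1 / τ) * ‖xp - x‖) * ‖xp - xs‖ := by
    have hsq : ‖xp - xs‖ ^ 2 = ‖xp - xs‖ * ‖xp - xs‖ := sq (‖xp - xs‖) ▸ rfl
    nlinarith [h1, h2', h3, h4]
  exact le_of_mul_le_mul_right h5 hpos

/-- the projected-gradient iterates are close to the exact minimizer /
maximizer: `‖π⁺ − π(p,π̄,p̄)‖ ≤ κ₆‖π⁺−π‖` and `‖p⁺ − p(π⁺,π̄,p̄)‖ ≤ κ₇‖p⁺−p‖`. -/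
theorem projected_gradient_error_bounds
    {E₁ : Type*} [NormedAddCommGroup E₁] [InnerProductSpace ℝ E₁] [FiniteDimensional ℝ E₁]
    {E₂ : Type*} [NormedAddCommGroup E₂] [InnerProductSpace ℝ E₂] [FiniteDimensional ℝ E₂]
    (P : Set E₁) (Q : Set E₂)
    (hPne : P.Nonempty) (hPcpt : IsCompact P) (hPconv : Convex ℝ P)
    (hQne : Q.Nonempty) (hQcpt : IsCompact Q) (hQconv : Convex ℝ Q)
    (f : E₁ → E₂ → ℝ) (hf : ContDiff ℝ 1 (fun q : E₁ × E₂ => f q.1 q.2))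
    (gπ : E₁ → E₂ → E₁) (gp : E₁ → E₂ → E₂)
    (hgπ : ∀ π p, HasGradientAt (fun π' => f π' p) (gπ π p) π)
    (hgp : ∀ π p, HasGradientAt (fun p' => f π p') (gp π p) p)
    (ℓ₁ ℓ₂ : ℝ) (hℓ₁ : 0 < ℓ₁) (hℓ₂ : 0 < ℓ₂)
    (hlipπ : ∀ π ∈ P, ∀ π' ∈ P, ∀ p ∈ Q, ∀ p' ∈ Q,
      ‖gπ π p - gπ π' p'‖ ≤ ℓ₁ * (‖π - π'‖ + ‖p - p'‖))
    (hlipp : ∀ π ∈ P, ∀ π' ∈ P, ∀ p ∈ Q, ∀ p' ∈ Q,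
      ‖gp π p - gp π' p'‖ ≤ ℓ₂ * (‖π - π'‖ + ‖p - p'‖))
    (r₁ r₂ : ℝ) (hr₁ : ℓ₁ < r₁) (hr₂ : ℓ₂ < r₂)
    (τ σ : ℝ) (hτ : 0 < τ) (hσ : 0 < σ)
    -- metric projections onto `Π` and `𝒫`
    (projP : E₁ → E₁)
    (hprojP : ∀ z : E₁, projP z ∈ P ∧ ∀ y ∈ P, ⟪z - projP z, y - projP z⟫ ≤ 0)
    (projQ : E₂ → E₂)
    (hprojQ : ∀ z : E₂, projQ z ∈ Q ∧ ∀ y ∈ Q, ⟪z - projQ z, y - projQ z⟫ ≤ 0)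
    -- `πsel p π̄ p̄` is the unique minimizer of `π' ↦ χ(π',p,π̄,p̄)` over `Π`
    (πsel : E₂ → E₁ → E₂ → E₁)
    (hπsel : ∀ (p : E₂) (πb : E₁) (pb : E₂), πsel p πb pb ∈ P ∧
      ∀ π' ∈ P, chi f r₁ r₂ (πsel p πb pb) p πb pb ≤ chi f r₁ r₂ π' p πb pb)
    -- `psel π π̄ p̄` is the unique maximizer of `p' ↦ χ(π,p',π̄,p̄)` over `𝒫`
    (psel : E₁ → E₁ → E₂ → E₂)
    (hpsel : ∀ (π : E₁) (πb : E₁) (pb : E₂), psel π πb pb ∈ Q ∧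
      ∀ p' ∈ Q, chi f r₁ r₂ π p' πb pb ≤ chi f r₁ r₂ π (psel π πb pb) πb pb) :
    ∀ π ∈ P, ∀ p ∈ Q, ∀ (πb : E₁) (pb : E₂) (πp : E₁) (pp : E₂),
      πp = projP (π - τ • (gπ π p + r₁ • (π - πb))) →
      pp = projQ (p + σ • (gp πp p - r₂ • (p - pb))) →
      ‖πp - πsel p πb pb‖ ≤ (2 * τ * r₁ + 1) / (τ * (r₁ - ℓ₁)) * ‖πp - π‖ ∧
      ‖pp - psel πp πb pb‖ ≤ (2 * σ * r₂ + 1) / (σ * (r₂ - ℓ₂)) * ‖pp - p‖ := by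
  intro π hπ p hp πb pb πp pp hπp hpp
  have hπpP : πp ∈ P := hπp ▸ (hprojP _).1
  have hppQ : pp ∈ Q := hpp ▸ (hprojQ _).1
  obtain ⟨hπsP, hπsmin⟩ := hπsel p πb pb
  obtain ⟨hpsQ, hpsmax⟩ := hpsel πp πb pb
  set πs := πsel p πb pb with hπsdef
  set ps := psel πp πb pb with hpsdef
  -- gradients of χ in the first variable
  have hgrad1 : ∀ y : E₁, HasGradientAt (fun π' => chi f r₁ r₂ π' p πb pb)
      (gπ y p + r₁ • (y - πb)) y := by
    intro y
    have h := aux_grad πb r₁ (-(r₂ / 2 * ‖p - pb‖ ^ 2)) (hgπ y p)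
    have heq : (fun z => f z p + r₁ / 2 * ‖z - πb‖ ^ 2 + -(r₂ / 2 * ‖p - pb‖ ^ 2))
        = fun π' => chi f r₁ r₂ π' p πb pb := by
      funext z; simp only [chi]; ring
    rwa [heq] at h
  -- gradients of χ in the second variable (at fixed πp)
  have hgrad2 : ∀ y : E₂, HasGradientAt (fun p' => chi f r₁ r₂ πp p' πb pb)
      (gp πp y - r₂ • (y - pb)) y := by
    intro y
    have h := aux_grad pb (-r₂) (r₁ / 2 * ‖πp - πb‖ ^ 2) (hgp πp y)
    have heq : (fun z => f πp z + -r₂ / 2 * ‖z - pb‖ ^ 2 + r₁ / 2 * ‖πp - πb‖ ^ 2)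
        = fun p' => chi f r₁ r₂ πp p' πb pb := by
      funext z; simp only [chi]; ring
    have hG : gp πp y + (-r₂) • (y - pb) = gp πp y - r₂ • (y - pb) := by module
    rw [heq, hG] at h
    exact h
  constructor
  · -- π side
    have hmono1 : (r₁ - ℓ₁) * ‖πp - πs‖ ^ 2 ≤
        ⟪(gπ πp p + r₁ • (πp - πb)) - (gπ πs p + r₁ • (πs - πb)), πp - πs⟫ := by
      have hd : (gπ πp p + r₁ • (πp - πb)) - (gπ πs p + r₁ • (πs - πb))
          = (gπ πp p - gπ πs p) + r₁ • (πp - πs) := by module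
      rw [hd, inner_add_left, real_inner_smul_left, real_inner_self_eq_norm_sq]
      have hl := hlipπ πp hπpP πs hπsP p hp p hp
      simp only [sub_self, norm_zero, add_zero] at hl
      have habs := abs_real_inner_le_norm (gπ πp p - gπ πs p) (πp - πs)
      rw [abs_le] at habs
      nlinarith [norm_nonneg (πp - πs), habs.1]
    have hvar1 : (0:ℝ) ≤ ⟪gπ πs p + r₁ • (πs - πb), πp - πs⟫ :=
      varineq_min hPconv (hgrad1 πs) hπsP hπsmin hπpP
    have hproj1 : ⟪π - τ • (gπ π p + r₁ • (π - πb)) - πp, πs - πp⟫ ≤ 0 := by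
      have h := (hprojP (π - τ • (gπ π p + r₁ • (π - πb)))).2 πs hπsP
      rwa [← hπp] at h
    have hlip1 : ‖(gπ πp p + r₁ • (πp - πb)) - (gπ π p + r₁ • (π - πb))‖
        ≤ (ℓ₁ + r₁) * ‖πp - π‖ := by
      have hd : (gπ πp p + r₁ • (πp - πb)) - (gπ π p + r₁ • (π - πb))
          = (gπ πp p - gπ π p) + r₁ • (πp - π) := by module
      rw [hd]
      have h1 := norm_add_le (gπ πp p - gπ π p) (r₁ • (πp - π))
      have h2 := hlipπ πp hπpP π hπ p hp p hp
      simp only [sub_self, norm_zero, add_zero] at h2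
      have h3 : ‖r₁ • (πp - π)‖ = r₁ * ‖πp - π‖ := by
        rw [norm_smul, Real.norm_eq_abs, abs_of_pos (by linarith)]
      linarith [h1, h2]
    have hkey1 := key_ineq hτ (by linarith : (0:ℝ) < r₁ - ℓ₁)
      (by linarith : (0:ℝ) ≤ ℓ₁ + r₁) hmono1 hvar1 hproj1 hlip1
    have hkey1' : τ * (r₁ - ℓ₁) * ‖πp - πs‖ ≤ (τ * ℓ₁ + τ * r₁ + 1) * ‖πp - π‖ := by
      have h := mul_le_mul_of_nonneg_left hkey1 hτ.le
      have hτ1 : τ * (1 / τ) = 1 := by field_simp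
      have he : τ * ((ℓ₁ + r₁ + 1 / τ) * ‖πp - π‖) = (τ * ℓ₁ + τ * r₁ + 1) * ‖πp - π‖ := by
        linear_combination ‖πp - π‖ * hτ1
      rw [he] at h
      linarith [h]
    rw [div_mul_eq_mul_div, le_div_iff₀ (mul_pos hτ (by linarith : (0:ℝ) < r₁ - ℓ₁))]
    have hextra : 0 ≤ τ * (r₁ - ℓ₁) * ‖πp - π‖ :=
      mul_nonneg (mul_nonneg hτ.le (by linarith)) (norm_nonneg _)
    nlinarith [hkey1', hextra]
  · -- p side
    have hmono2 : (r₂ - ℓ₂) * ‖pp - ps‖ ^ 2 ≤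
        ⟪(r₂ • (pp - pb) - gp πp pp) - (r₂ • (ps - pb) - gp πp ps), pp - ps⟫ := by
      have hd : (r₂ • (pp - pb) - gp πp pp) - (r₂ • (ps - pb) - gp πp ps)
          = r₂ • (pp - ps) - (gp πp pp - gp πp ps) := by module
      rw [hd, inner_sub_left, real_inner_smul_left, real_inner_self_eq_norm_sq]
      have hl := hlipp πp hπpP πp hπpP pp hppQ ps hpsQ
      simp only [sub_self, norm_zero, zero_add] at hl
      have habs := abs_real_inner_le_norm (gp πp pp - gp πp ps) (pp - ps)
      rw [abs_le] at habs
      nlinarith [norm_nonneg (pp - ps), habs.2]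
    have hvar2 : (0:ℝ) ≤ ⟪r₂ • (ps - pb) - gp πp ps, pp - ps⟫ := by
      have h := varineq_max hQconv (hgrad2 ps) hpsQ hpsmax hppQ
      have hn : r₂ • (ps - pb) - gp πp ps = -(gp πp ps - r₂ • (ps - pb)) := by module
      rw [hn, inner_neg_left]
      linarith
    have hproj2 : ⟪p - σ • (r₂ • (p - pb) - gp πp p) - pp, ps - pp⟫ ≤ 0 := by
      have hz : p - σ • (r₂ • (p - pb) - gp πp p) = p + σ • (gp πp p - r₂ • (p - pb)) := by
        module
      rw [hz]
      have h := (hprojQ (p + σ • (gp πp p - r₂ • (p - pb)))).2 ps hpsQ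
      rwa [← hpp] at h
    have hlip2 : ‖(r₂ • (pp - pb) - gp πp pp) - (r₂ • (p - pb) - gp πp p)‖
        ≤ (ℓ₂ + r₂) * ‖pp - p‖ := by
      have hd : (r₂ • (pp - pb) - gp πp pp) - (r₂ • (p - pb) - gp πp p)
          = r₂ • (pp - p) - (gp πp pp - gp πp p) := by module
      rw [hd]
      have h1 := norm_sub_le (r₂ • (pp - p)) (gp πp pp - gp πp p)
      have h2 := hlipp πp hπpP πp hπpP pp hppQ p hp
      simp only [sub_self, norm_zero, zero_add] at h2
      have h3 : ‖r₂ • (pp - p)‖ = r₂ * ‖pp - p‖ := by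
        rw [norm_smul, Real.norm_eq_abs, abs_of_pos (by linarith)]
      linarith [h1, h2]
    have hkey2 := key_ineq hσ (by linarith : (0:ℝ) < r₂ - ℓ₂)
      (by linarith : (0:ℝ) ≤ ℓ₂ + r₂) hmono2 hvar2 hproj2 hlip2
    have hkey2' : σ * (r₂ - ℓ₂) * ‖pp - ps‖ ≤ (σ * ℓ₂ + σ * r₂ + 1) * ‖pp - p‖ := by
      have h := mul_le_mul_of_nonneg_left hkey2 hσ.le
      have hσ1 : σ * (1 / σ) = 1 := by field_simp
      have he : σ * ((ℓ₂ + r₂ + 1 / σ) * ‖pp - p‖) = (σ * ℓ₂ + σ * r₂ + 1) * ‖pp - p‖ := by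
        linear_combination ‖pp - p‖ * hσ1
      rw [he] at h
      linarith [h]
    rw [div_mul_eq_mul_div, le_div_iff₀ (mul_pos hσ (by linarith : (0:ℝ) < r₂ - ℓ₂))]
    have hextra : 0 ≤ σ * (r₂ - ℓ₂) * ‖pp - p‖ :=
      mul_nonneg (mul_nonneg hσ.le (by linarith)) (norm_nonneg _)
    nlinarith [hkey2', hextra]
end

section
/- Fix π ∈ Π, p ∈ 𝒫, π̄ ∈ E₁, p̄ ∈ E₂, and let π⁺ := Proj_Π(π − τ∇_πχ(π,p,π̄,p̄)) and p⁺ := Proj_𝒫(p + σ∇_pχ(π⁺,p,π̄,p̄)). Then ‖p(π̄,p̄) − p‖ ≤ κ₈‖p − p°(p,π̄,p̄)‖, and ‖p⁺ − p°(p,π̄,p̄)‖ ≤ ℓ₂σκ₆‖π − π⁺‖. -/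
set_option maxHeartbeats 1600000
set_option linter.unusedSectionVars false
set_option linter.unusedVariables false

open scoped RealInnerProductSpace

section Helpers

variable {E : Type*} [NormedAddCommGroup E] [InnerProductSpace ℝ E] [CompleteSpace E]

lemma seg_mem' {K : Set E} (hK : Convex ℝ K) {a b : E} (ha : a ∈ K) (hb : b ∈ K) {t : ℝ}
    (h0 : 0 ≤ t) (h1 : t ≤ 1) : a + t • (b - a) ∈ K := by
  have h := hK ha hb (by linarith : (0:ℝ) ≤ 1 - t) h0 (by ring)
  convert h using 1
  module

lemma grad_line (F : E → ℝ) (g : E → E) (hg : ∀ x, HasGradientAt F (g x) x) (a d : E) (t : ℝ) :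
    HasDerivAt (fun s : ℝ => F (a + s • d)) ⟪g (a + t • d), d⟫ t := by
  have h1 : HasDerivAt (fun s : ℝ => a + s • d) d t := by
    simpa using ((hasDerivAt_id t).smul_const d).const_add a
  have h2 := ((hg (a + t • d)).hasFDerivAt).comp_hasDerivAt t h1
  simp [InnerProductSpace.toDual_apply_apply] at h2
  exact h2

lemma grad_neg {F : E → ℝ} {g : E → E} (hg : ∀ x, HasGradientAt F (g x) x) :
    ∀ x, HasGradientAt (fun y => -F y) (-(g x)) x := by
  intro x
  rw [hasGradientAt_iff_hasFDerivAt]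
  have := (hg x).hasFDerivAt.neg
  rw [map_neg]
  exact this

lemma grad_sub' {E₂ : Type*} [NormedAddCommGroup E₂] [InnerProductSpace ℝ E₂] [CompleteSpace E₂]
    (F G : E₂ → ℝ) (g h : E₂ → E₂) (hg : ∀ x, HasGradientAt F (g x) x)
    (hh : ∀ x, HasGradientAt G (h x) x) :
    ∀ x, HasGradientAt (fun z => F z - G z) (g x - h x) x := by
  intro x
  rw [hasGradientAt_iff_hasFDerivAt]
  have := (hg x).hasFDerivAt.sub (hh x).hasFDerivAt
  rw [map_sub]
  exact this

lemma seg_lower (F : E → ℝ) (g : E → E) (hg : ∀ x, HasGradientAt F (g x) x) (a d : E) (c : ℝ)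
    (h : ∀ s ∈ Set.Ioo (0:ℝ) 1, 0 ≤ ⟪g (a + s • d) - g a, d⟫ + c * s * ‖d‖ ^ 2) :
    F a + ⟪g a, d⟫ - c / 2 * ‖d‖ ^ 2 ≤ F (a + d) := by
  set ω : ℝ → ℝ := fun s => F (a + s • d) - s * ⟪g a, d⟫ + c / 2 * s ^ 2 * ‖d‖ ^ 2 with hω
  have hder : ∀ s : ℝ, HasDerivAt ω (⟪g (a + s • d), d⟫ - ⟪g a, d⟫ + c * s * ‖d‖ ^ 2) s := by
    intro s
    have h1 := grad_line F g hg a d s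
    have h2 : HasDerivAt (fun s : ℝ => s * ⟪g a, d⟫) ⟪g a, d⟫ s := by
      simpa using (hasDerivAt_id s).mul_const ⟪g a, d⟫
    have h3 : HasDerivAt (fun s : ℝ => c / 2 * s ^ 2 * ‖d‖ ^ 2) (c * s * ‖d‖ ^ 2) s := by
      have := ((hasDerivAt_pow 2 s).const_mul (c / 2)).mul_const (‖d‖ ^ 2)
      refine this.congr_deriv ?_
      ring
    exact (h1.sub h2).add h3
  have mono : MonotoneOn ω (Set.Icc 0 1) := by
    apply monotoneOn_of_deriv_nonneg (convex_Icc 0 1)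
    · exact Continuous.continuousOn
        (Differentiable.continuous (fun s => (hder s).differentiableAt))
    · intro s _
      exact (hder s).differentiableAt.differentiableWithinAt
    · intro s hs
      rw [interior_Icc] at hs
      rw [(hder s).deriv]
      have := h s hs
      rw [inner_sub_left] at this
      linarith
  have h01 := mono (Set.left_mem_Icc.2 zero_le_one) (Set.right_mem_Icc.2 zero_le_one) zero_le_one
  simp only [hω, zero_smul, add_zero, one_smul, zero_mul, sub_zero, one_pow, mul_one, zero_pow] at h01
  norm_num at h01
  linarith

lemma seg_upper (F : E → ℝ) (g : E → E) (hg : ∀ x, HasGradientAt F (g x) x) (a d : E) (c : ℝ)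
    (h : ∀ s ∈ Set.Ioo (0:ℝ) 1, ⟪g (a + s • d) - g a, d⟫ ≤ c * s * ‖d‖ ^ 2) :
    F (a + d) ≤ F a + ⟪g a, d⟫ + c / 2 * ‖d‖ ^ 2 := by
  have := seg_lower (fun y => -F y) (fun x => -(g x)) (grad_neg hg) a d c (by
    intro s hs
    have h1 := h s hs
    have e : (⟪-g (a + s • d) - -g a, d⟫ : ℝ) = -⟪g (a + s • d) - g a, d⟫ := by
      rw [← inner_neg_left]; congr 1; abel
    rw [e]
    linarith)
  have e2 : (⟪-g a, d⟫ : ℝ) = -⟪g a, d⟫ := by rw [inner_neg_left]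
  rw [e2] at this
  linarith

lemma min_VI (F : E → ℝ) (g : E → E) (hg : ∀ x, HasGradientAt F (g x) x) {K : Set E}
    (hK : Convex ℝ K) {a : E} (ha : a ∈ K) (hmin : ∀ y ∈ K, F a ≤ F y) {y : E} (hy : y ∈ K) :
    0 ≤ ⟪g a, y - a⟫ := by
  have hd : HasDerivAt (fun s : ℝ => F (a + s • (y - a))) ⟪g a, y - a⟫ 0 := by
    have := grad_line F g hg a (y - a) 0
    simpa using this
  rw [hasDerivAt_iff_tendsto_slope] at hd
  have h2 : Filter.Tendsto (slope (fun s : ℝ => F (a + s • (y - a))) 0) (nhdsWithin 0 (Set.Ioi 0))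
      (nhds ⟪g a, y - a⟫) :=
    hd.mono_left (nhdsWithin_mono _ (fun t ht => ne_of_gt ht))
  refine ge_of_tendsto h2 ?_
  filter_upwards [Ioo_mem_nhdsGT_of_mem (Set.mem_Ico.2 ⟨le_refl 0, zero_lt_one⟩)] with t ht
  have hmem : a + t • (y - a) ∈ K := seg_mem' hK ha hy (le_of_lt ht.1) (le_of_lt ht.2)
  have hF := hmin _ hmem
  rw [slope_def_field]
  have e0 : a + (0:ℝ) • (y - a) = a := by simp
  rw [e0, sub_zero]
  have : (0:ℝ) ≤ F (a + t • (y - a)) - F a := by linarith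
  exact div_nonneg this (le_of_lt ht.1)

lemma proj_nonexp {K : Set E} (proj : E → E)
    (hproj : ∀ z : E, proj z ∈ K ∧ ∀ y ∈ K, ⟪z - proj z, y - proj z⟫ ≤ 0) (x y : E) :
    ‖proj x - proj y‖ ≤ ‖x - y‖ := by
  have h1 := (hproj x).2 (proj y) (hproj y).1
  have h2 := (hproj y).2 (proj x) (hproj x).1
  have key : ‖proj x - proj y‖ ^ 2 ≤ ⟪x - y, proj x - proj y⟫ := by
    have e : (⟪x - y, proj x - proj y⟫ : ℝ) - ‖proj x - proj y‖ ^ 2 =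
        -⟪x - proj x, proj y - proj x⟫ - ⟪y - proj y, proj x - proj y⟫ := by
      rw [← @real_inner_self_eq_norm_sq]
      simp only [inner_sub_left, inner_sub_right]
      ring
    linarith
  have hcs := real_inner_le_norm (x - y) (proj x - proj y)
  rcases eq_or_ne (proj x - proj y) 0 with h | h
  · rw [h]; simp [norm_nonneg]
  · have hpos : 0 < ‖proj x - proj y‖ := norm_pos_iff.2 h
    nlinarith

lemma seg_strong_upper {Q : Set E} (hQconv : Convex ℝ Q) (F : E → ℝ) (g : E → E)
    (hg : ∀ x, HasGradientAt F (g x) x) {a b : E} (ha : a ∈ Q) (hb : b ∈ Q) (μ : ℝ)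
    (hmono : ∀ x ∈ Q, ⟪g x - g a, x - a⟫ ≤ -μ * ‖x - a‖ ^ 2) :
    F b ≤ F a + ⟪g a, b - a⟫ - μ / 2 * ‖b - a‖ ^ 2 := by
  have hcond : ∀ s ∈ Set.Ioo (0:ℝ) 1, ⟪g (a + s • (b - a)) - g a, b - a⟫
      ≤ (-μ) * s * ‖b - a‖ ^ 2 := by
    intro s hs
    have hx : a + s • (b - a) ∈ Q := seg_mem' hQconv ha hb hs.1.le hs.2.le
    have h1 := hmono _ hx
    have e1 : a + s • (b - a) - a = s • (b - a) := by abel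
    rw [e1, real_inner_smul_right, norm_smul, Real.norm_eq_abs, abs_of_pos hs.1] at h1
    have h2 : s * ⟪g (a + s • (b - a)) - g a, b - a⟫ ≤ s * ((-μ) * s * ‖b - a‖ ^ 2) := by
      nlinarith [h1]
    exact le_of_mul_le_mul_left h2 hs.1
  have := seg_upper F g hg a (b - a) (-μ) hcond
  rw [add_sub_cancel] at this
  linarith

lemma seg_lip_lower {Q : Set E} (hQconv : Convex ℝ Q) (F : E → ℝ) (g : E → E)
    (hg : ∀ x, HasGradientAt F (g x) x) {a b : E} (ha : a ∈ Q) (hb : b ∈ Q) (C : ℝ)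
    (hlip : ∀ x ∈ Q, ‖g x - g a‖ ≤ C * ‖x - a‖) :
    F a + ⟪g a, b - a⟫ - C / 2 * ‖b - a‖ ^ 2 ≤ F b := by
  have hcond : ∀ s ∈ Set.Ioo (0:ℝ) 1, 0 ≤ ⟪g (a + s • (b - a)) - g a, b - a⟫
      + C * s * ‖b - a‖ ^ 2 := by
    intro s hs
    have hx : a + s • (b - a) ∈ Q := seg_mem' hQconv ha hb hs.1.le hs.2.le
    have h1 := hlip _ hx
    have e1 : a + s • (b - a) - a = s • (b - a) := by abel
    rw [e1, norm_smul, Real.norm_eq_abs, abs_of_pos hs.1] at h1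
    have h2 := abs_real_inner_le_norm (g (a + s • (b - a)) - g a) (b - a)
    have h3 := neg_abs_le (⟪g (a + s • (b - a)) - g a, b - a⟫ : ℝ)
    nlinarith [norm_nonneg (b - a), norm_nonneg (g (a + s • (b - a)) - g a)]
  have := seg_lower F g hg a (b - a) C hcond
  rw [add_sub_cancel] at this
  linarith

end Helpers


section Aux
variable {E₁ : Type*} [NormedAddCommGroup E₁] [InnerProductSpace ℝ E₁] [CompleteSpace E₁]
variable {E₂ : Type*} [NormedAddCommGroup E₂] [InnerProductSpace ℝ E₂] [CompleteSpace E₂]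

lemma quad_fderiv (c : ℝ) (b x : E₁) :
    HasFDerivAt (fun z : E₁ => c / 2 * ‖z - b‖ ^ 2) (InnerProductSpace.toDual ℝ E₁ (c • (x - b))) x := by
  have h1 : HasFDerivAt (fun z : E₁ => z - b) (ContinuousLinearMap.id ℝ E₁) x := by
    simpa using (hasFDerivAt_id x).sub_const b
  have h2 := h1.norm_sq.const_mul (c / 2)
  refine h2.congr_fderiv ?_
  ext y
  simp [InnerProductSpace.toDual_apply_apply, inner_smul_left, real_inner_comm, two_smul, inner_add_left]
  ring

lemma grad_chi_pi (f : E₁ → E₂ → ℝ) (r₁ r₂ : ℝ) (p : E₂) (πb : E₁) (pb : E₂) (x : E₁) (g : E₁)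
    (hg : HasGradientAt (fun π' => f π' p) g x) :
    HasGradientAt (fun π' => chi f r₁ r₂ π' p πb pb) (g + r₁ • (x - πb)) x := by
  rw [hasGradientAt_iff_hasFDerivAt]
  have h1 := hg.hasFDerivAt
  have h2 := quad_fderiv r₁ πb x
  have h3 := (h1.add h2).sub_const (r₂ / 2 * ‖p - pb‖ ^ 2)
  rw [map_add]
  exact h3

lemma grad_chi_p (f : E₁ → E₂ → ℝ) (r₁ r₂ : ℝ) (π : E₁) (πb : E₁) (pb : E₂) (x : E₂) (g : E₂)
    (hg : HasGradientAt (fun p' => f π p') g x) :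
    HasGradientAt (fun p' => chi f r₁ r₂ π p' πb pb) (g - r₂ • (x - pb)) x := by
  rw [hasGradientAt_iff_hasFDerivAt]
  have h1 := hg.hasFDerivAt
  have h2 := quad_fderiv r₂ pb x
  have he : (fun p' => chi f r₁ r₂ π p' πb pb) =
      fun p' => (f π p' - r₂ / 2 * ‖p' - pb‖ ^ 2) + r₁ / 2 * ‖π - πb‖ ^ 2 := by
    funext p'; simp only [chi]; ring
  rw [he]
  have h3 := (h1.sub h2).add_const (r₁ / 2 * ‖π - πb‖ ^ 2)
  rw [map_sub]
  exact h3

lemma cross_lip (P : Set E₁) (Q : Set E₂) (hPconv : Convex ℝ P) (hQconv : Convex ℝ Q)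
    (f : E₁ → E₂ → ℝ) (gπ : E₁ → E₂ → E₁) (gp : E₁ → E₂ → E₂)
    (hgπ : ∀ π p, HasGradientAt (fun π' => f π' p) (gπ π p) π)
    (hgp : ∀ π p, HasGradientAt (fun p' => f π p') (gp π p) p)
    (ℓ₁ ℓ₂ : ℝ) (hℓ₁ : 0 < ℓ₁) (hℓ₂ : 0 < ℓ₂)
    (hlipπ : ∀ π ∈ P, ∀ π' ∈ P, ∀ p ∈ Q, ∀ p' ∈ Q,
      ‖gπ π p - gπ π' p'‖ ≤ ℓ₁ * (‖π - π'‖ + ‖p - p'‖))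
    (hlipp : ∀ π ∈ P, ∀ π' ∈ P, ∀ p ∈ Q, ∀ p' ∈ Q,
      ‖gp π p - gp π' p'‖ ≤ ℓ₂ * (‖π - π'‖ + ‖p - p'‖))
    {a b : E₁} (ha : a ∈ P) (hb : b ∈ P) {q q' : E₂} (hq : q ∈ Q) (hq' : q' ∈ Q) :
    ⟪gπ a q - gπ a q', b - a⟫ ≤ ℓ₂ * ‖q - q'‖ * ‖b - a‖ := by
  set w := b - a with hwdef
  rcases eq_or_ne w 0 with hw0 | hw0
  · rw [hw0, inner_zero_right]
    simp only [norm_zero, mul_zero]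
    exact le_refl 0
  have hw : (0:ℝ) < ‖w‖ := norm_pos_iff.2 hw0
  -- key estimate for each ε
  have key : ∀ ε : ℝ, 0 < ε → ε ≤ 1 →
      ⟪gπ a q - gπ a q', w⟫ ≤ ℓ₂ * ‖q - q'‖ * ‖w‖ + 2 * ℓ₁ * ε * ‖w‖ ^ 2 := by
    intro ε hε0 hε1
    have hgd : ∀ x : E₁, HasGradientAt (fun z => f z q - f z q') (gπ x q - gπ x q') x :=
      grad_sub' _ _ _ _ (fun x => hgπ x q) (fun x => hgπ x q')
    set u : ℝ → ℝ := fun s => f (a + s • (ε • w)) q - f (a + s • (ε • w)) q' with hu_def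
    have hu : ∀ s : ℝ, HasDerivAt u
        ⟪gπ (a + s • (ε • w)) q - gπ (a + s • (ε • w)) q', ε • w⟫ s :=
      fun s => grad_line _ _ hgd a (ε • w) s
    obtain ⟨ξ, hξ, hmvt⟩ := exists_hasDerivAt_eq_slope u _ one_pos
      (Continuous.continuousOn (Differentiable.continuous (fun s => (hu s).differentiableAt)))
      (fun s _ => hu s)
    have hgd2 : ∀ y : E₂, HasGradientAt (fun z => f (a + ε • w) z - f a z)
        (gp (a + ε • w) y - gp a y) y :=
      grad_sub' _ _ _ _ (fun y => hgp (a + ε • w) y) (fun y => hgp a y)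
    set v : ℝ → ℝ := fun t => f (a + ε • w) (q' + t • (q - q')) - f a (q' + t • (q - q')) with hv_def
    have hv : ∀ t : ℝ, HasDerivAt v
        ⟪gp (a + ε • w) (q' + t • (q - q')) - gp a (q' + t • (q - q')), q - q'⟫ t :=
      fun t => grad_line _ _ hgd2 q' (q - q') t
    obtain ⟨η, hη, hmvt2⟩ := exists_hasDerivAt_eq_slope v _ one_pos
      (Continuous.continuousOn (Differentiable.continuous (fun t => (hv t).differentiableAt)))
      (fun t _ => hv t)
    have huv : u 1 - u 0 = v 1 - v 0 := by
      simp only [hu_def, hv_def, one_smul, zero_smul, add_zero, smul_zero]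
      simp only [add_sub_cancel]
      ring
    -- memberships
    have haεw : a + ε • w ∈ P := seg_mem' hPconv ha hb (le_of_lt hε0) hε1
    have hqη : q' + η • (q - q') ∈ Q := seg_mem' hQconv hq' hq (le_of_lt hη.1) (le_of_lt hη.2)
    have haξ : a + ξ • (ε • w) ∈ P := by
      rw [smul_smul]
      exact seg_mem' hPconv ha hb (le_of_lt (mul_pos hξ.1 hε0))
        (by nlinarith [hξ.1, hξ.2, hε0, hε1] : ξ * ε ≤ 1)
    -- bound on v' η
    have hvb : ⟪gp (a + ε • w) (q' + η • (q - q')) - gp a (q' + η • (q - q')), q - q'⟫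
        ≤ ℓ₂ * (ε * ‖w‖) * ‖q - q'‖ := by
      have hcs := real_inner_le_norm
        (gp (a + ε • w) (q' + η • (q - q')) - gp a (q' + η • (q - q'))) (q - q')
      have hnorm := hlipp _ haεw _ ha _ hqη _ hqη
      have he : a + ε • w - a = ε • w := by abel
      rw [he] at hnorm
      have : ‖gp (a + ε • w) (q' + η • (q - q')) - gp a (q' + η • (q - q'))‖
          ≤ ℓ₂ * (ε * ‖w‖) := by
        rw [norm_smul] at hnorm
        simp [abs_of_pos hε0] at hnorm
        simpa using hnorm
      nlinarith [norm_nonneg (q - q')]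
    -- ε * inner at aξ ≤ bound
    have hstep : ⟪gπ (a + ξ • (ε • w)) q - gπ (a + ξ • (ε • w)) q', w⟫ ≤ ℓ₂ * ‖q - q'‖ * ‖w‖ := by
      have h1 : ⟪gπ (a + ξ • (ε • w)) q - gπ (a + ξ • (ε • w)) q', ε • w⟫
          = u 1 - u 0 := by
        have := hmvt
        simp only [div_one, sub_zero] at this
        linarith [this]
      rw [real_inner_smul_right] at h1
      have h2 : v 1 - v 0 ≤ ℓ₂ * (ε * ‖w‖) * ‖q - q'‖ := by
        have := hmvt2
        simp only [div_one, sub_zero] at this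
        rw [← this]
        exact hvb
      rw [huv] at h1
      have h3 : ε * ⟪gπ (a + ξ • (ε • w)) q - gπ (a + ξ • (ε • w)) q', w⟫
          ≤ ε * (ℓ₂ * ‖q - q'‖ * ‖w‖) := by nlinarith [h1, h2]
      exact le_of_mul_le_mul_left h3 hε0
    -- compare inner at a with inner at aξ
    set aξ := a + ξ • (ε • w) with haξdef
    have hdist : ‖a - aξ‖ ≤ ε * ‖w‖ := by
      have : a - aξ = -((ξ * ε) • w) := by rw [haξdef, smul_smul]; abel
      rw [this, norm_neg, norm_smul, Real.norm_eq_abs, abs_of_pos (mul_pos hξ.1 hε0)]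
      nlinarith [mul_nonneg (mul_nonneg (sub_nonneg.mpr hξ.2.le) hε0.le) (norm_nonneg w)]
    have hb1 : ‖gπ a q - gπ aξ q‖ ≤ ℓ₁ * (ε * ‖w‖) := by
      have := hlipπ _ ha _ haξ _ hq _ hq
      simp only [sub_self, norm_zero, add_zero] at this
      calc ‖gπ a q - gπ aξ q‖ ≤ ℓ₁ * ‖a - aξ‖ := by simpa using this
        _ ≤ ℓ₁ * (ε * ‖w‖) := by nlinarith
    have hb2 : ‖gπ a q' - gπ aξ q'‖ ≤ ℓ₁ * (ε * ‖w‖) := by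
      have := hlipπ _ ha _ haξ _ hq' _ hq'
      simp only [sub_self, norm_zero, add_zero] at this
      calc ‖gπ a q' - gπ aξ q'‖ ≤ ℓ₁ * ‖a - aξ‖ := by simpa using this
        _ ≤ ℓ₁ * (ε * ‖w‖) := by nlinarith
    have hsplit : ⟪gπ a q - gπ a q', w⟫ = ⟪gπ aξ q - gπ aξ q', w⟫
        + ⟪gπ a q - gπ aξ q, w⟫ + ⟪gπ aξ q' - gπ a q', w⟫ := by
      rw [← inner_add_left, ← inner_add_left]
      congr 1
      abel
    have t1 : ⟪gπ a q - gπ aξ q, w⟫ ≤ ℓ₁ * (ε * ‖w‖) * ‖w‖ :=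
      (real_inner_le_norm _ _).trans (mul_le_mul_of_nonneg_right hb1 (norm_nonneg w))
    have t2 : ⟪gπ aξ q' - gπ a q', w⟫ ≤ ℓ₁ * (ε * ‖w‖) * ‖w‖ := by
      refine (real_inner_le_norm _ _).trans ?_
      rw [norm_sub_rev]
      exact mul_le_mul_of_nonneg_right hb2 (norm_nonneg w)
    rw [hsplit]
    nlinarith [hstep, t1, t2]
  -- take ε → 0
  refine le_of_forall_pos_le_add ?_
  intro δ hδ
  have hpos : (0:ℝ) < 2 * ℓ₁ * ‖w‖ ^ 2 :=
    mul_pos (by linarith : (0:ℝ) < 2 * ℓ₁) (pow_pos hw 2)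
  set ε := min 1 (δ / (2 * ℓ₁ * ‖w‖ ^ 2)) with hεdef
  have hε0 : 0 < ε := lt_min one_pos (div_pos hδ hpos)
  have hε1 : ε ≤ 1 := min_le_left _ _
  have h2 := key ε hε0 hε1
  have h3 : 2 * ℓ₁ * ε * ‖w‖ ^ 2 ≤ δ := by
    have hεle : ε ≤ δ / (2 * ℓ₁ * ‖w‖ ^ 2) := min_le_right _ _
    rw [le_div_iff₀ hpos] at hεle
    nlinarith
  linarith

end Aux
/-- `‖p(π̄,p̄) − p‖ ≤ κ₈‖p − p°(p,π̄,p̄)‖` and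
`‖p⁺ − p°(p,π̄,p̄)‖ ≤ ℓ₂σκ₆‖π − π⁺‖`. -/
theorem dual_error_bounds
    {E₁ : Type*} [NormedAddCommGroup E₁] [InnerProductSpace ℝ E₁] [FiniteDimensional ℝ E₁]
    {E₂ : Type*} [NormedAddCommGroup E₂] [InnerProductSpace ℝ E₂] [FiniteDimensional ℝ E₂]
    (P : Set E₁) (Q : Set E₂)
    (hPne : P.Nonempty) (hPcpt : IsCompact P) (hPconv : Convex ℝ P)
    (hQne : Q.Nonempty) (hQcpt : IsCompact Q) (hQconv : Convex ℝ Q)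
    (f : E₁ → E₂ → ℝ) (hf : ContDiff ℝ 1 (fun q : E₁ × E₂ => f q.1 q.2))
    (gπ : E₁ → E₂ → E₁) (gp : E₁ → E₂ → E₂)
    (hgπ : ∀ π p, HasGradientAt (fun π' => f π' p) (gπ π p) π)
    (hgp : ∀ π p, HasGradientAt (fun p' => f π p') (gp π p) p)
    (ℓ₁ ℓ₂ : ℝ) (hℓ₁ : 0 < ℓ₁) (hℓ₂ : 0 < ℓ₂)
    (hlipπ : ∀ π ∈ P, ∀ π' ∈ P, ∀ p ∈ Q, ∀ p' ∈ Q,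
      ‖gπ π p - gπ π' p'‖ ≤ ℓ₁ * (‖π - π'‖ + ‖p - p'‖))
    (hlipp : ∀ π ∈ P, ∀ π' ∈ P, ∀ p ∈ Q, ∀ p' ∈ Q,
      ‖gp π p - gp π' p'‖ ≤ ℓ₂ * (‖π - π'‖ + ‖p - p'‖))
    (r₁ r₂ : ℝ) (hr₁ : ℓ₁ < r₁) (hr₂ : (ℓ₂ / (r₁ - ℓ₁) + 2) * ℓ₂ < r₂)
    (τ σ : ℝ) (hτ : 0 < τ) (hσ : 0 < σ)
    -- metric projections onto `Π` and `𝒫`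
    (projP : E₁ → E₁)
    (hprojP : ∀ z : E₁, projP z ∈ P ∧ ∀ y ∈ P, ⟪z - projP z, y - projP z⟫ ≤ 0)
    (projQ : E₂ → E₂)
    (hprojQ : ∀ z : E₂, projQ z ∈ Q ∧ ∀ y ∈ Q, ⟪z - projQ z, y - projQ z⟫ ≤ 0)
    -- `πsel p π̄ p̄` is the unique minimizer of `π' ↦ χ(π',p,π̄,p̄)` over `Π`
    (πsel : E₂ → E₁ → E₂ → E₁)
    (hπsel : ∀ (p : E₂) (πb : E₁) (pb : E₂), πsel p πb pb ∈ P ∧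
      ∀ π' ∈ P, chi f r₁ r₂ (πsel p πb pb) p πb pb ≤ chi f r₁ r₂ π' p πb pb)
    -- `pbar π̄ p̄` is the unique maximizer over `𝒫` of `p' ↦ min_{π∈Π} χ(π,p',π̄,p̄)`
    (pbar : E₁ → E₂ → E₂)
    (hpbar : ∀ (πb : E₁) (pb : E₂), pbar πb pb ∈ Q ∧
      ∀ p' ∈ Q, chi f r₁ r₂ (πsel p' πb pb) p' πb pb ≤
        chi f r₁ r₂ (πsel (pbar πb pb) πb pb) (pbar πb pb) πb pb) :
    ∀ π ∈ P, ∀ p ∈ Q, ∀ (πb : E₁) (pb : E₂) (πp : E₁) (pp p0 : E₂),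
      πp = projP (π - τ • (gπ π p + r₁ • (π - πb))) →
      pp = projQ (p + σ • (gp πp p - r₂ • (p - pb))) →
      p0 = projQ (p + σ • (gp (πsel p πb pb) p - r₂ • (p - pb))) →
      ‖pbar πb pb - p‖ ≤
        (1 + σ * (ℓ₂ * (ℓ₂ / (r₁ - ℓ₁) + 1) + ℓ₂ + r₂)) / (σ * (r₂ - ℓ₂)) * ‖p - p0‖ ∧
      ‖pp - p0‖ ≤ ℓ₂ * σ * ((2 * τ * r₁ + 1) / (τ * (r₁ - ℓ₁))) * ‖π - πp‖ := by
  intro π hπ p hp πb pb πp pp p0 hπp hpp hp0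
  have hr₁ℓ : (0:ℝ) < r₁ - ℓ₁ := by linarith
  have hκ : (0:ℝ) < ℓ₂ / (r₁ - ℓ₁) := div_pos hℓ₂ hr₁ℓ
  have hμ : (0:ℝ) < r₂ - ℓ₂ := by nlinarith [mul_pos hκ hℓ₂]
  have hr₂pos : (0:ℝ) < r₂ := by linarith
  have hselP : ∀ q : E₂, πsel q πb pb ∈ P := fun q => (hπsel q πb pb).1
  have hgradπ : ∀ (q : E₂) (x : E₁),
      HasGradientAt (fun π' => chi f r₁ r₂ π' q πb pb) (gπ x q + r₁ • (x - πb)) x :=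
    fun q x => grad_chi_pi f r₁ r₂ q πb pb x _ (hgπ x q)
  have hgradp : ∀ (x : E₁) (y : E₂),
      HasGradientAt (fun p' => chi f r₁ r₂ x p' πb pb) (gp x y - r₂ • (y - pb)) y :=
    fun x y => grad_chi_p f r₁ r₂ x πb pb y _ (hgp x y)
  have hselVI : ∀ (q : E₂), ∀ y ∈ P,
      0 ≤ ⟪gπ (πsel q πb pb) q + r₁ • (πsel q πb pb - πb), y - πsel q πb pb⟫ :=
    fun q y hy => min_VI _ _ (hgradπ q) hPconv (hselP q) (hπsel q πb pb).2 hy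
  -- Lipschitz continuity of the argmin map
  have selLip : ∀ q ∈ Q, ∀ q' ∈ Q,
      ‖πsel q πb pb - πsel q' πb pb‖ ≤ ℓ₂ / (r₁ - ℓ₁) * ‖q - q'‖ := by
    intro q hq q' hq'
    have hA := hselP q
    have hB := hselP q'
    rcases eq_or_ne (πsel q πb pb - πsel q' πb pb) 0 with hw0 | hw0
    · rw [hw0]
      simp only [norm_zero]
      exact mul_nonneg hκ.le (norm_nonneg _)
    have hwpos : (0:ℝ) < ‖πsel q πb pb - πsel q' πb pb‖ := norm_pos_iff.2 hw0
    have vi1 := hselVI q (πsel q' πb pb) hB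
    have vi2 := hselVI q' (πsel q πb pb) hA
    have hsum : (0:ℝ) ≤ ⟪(gπ (πsel q' πb pb) q' + r₁ • (πsel q' πb pb - πb))
        - (gπ (πsel q πb pb) q + r₁ • (πsel q πb pb - πb)),
        πsel q πb pb - πsel q' πb pb⟫ := by
      rw [inner_sub_left]
      have e1 : πsel q' πb pb - πsel q πb pb = -(πsel q πb pb - πsel q' πb pb) := by abel
      rw [e1, inner_neg_right] at vi1
      linarith
    have hXY : (gπ (πsel q' πb pb) q' + r₁ • (πsel q' πb pb - πb))
        - (gπ (πsel q πb pb) q + r₁ • (πsel q πb pb - πb))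
        = (gπ (πsel q' πb pb) q' - gπ (πsel q' πb pb) q)
          + (gπ (πsel q' πb pb) q - gπ (πsel q πb pb) q)
          - r₁ • (πsel q πb pb - πsel q' πb pb) := by module
    rw [hXY, inner_sub_left, inner_add_left, real_inner_smul_left,
      real_inner_self_eq_norm_sq] at hsum
    have bound1 : ⟪gπ (πsel q' πb pb) q' - gπ (πsel q' πb pb) q,
        πsel q πb pb - πsel q' πb pb⟫ ≤ ℓ₂ * ‖q' - q‖ * ‖πsel q πb pb - πsel q' πb pb‖ :=
      cross_lip P Q hPconv hQconv f gπ gp hgπ hgp ℓ₁ ℓ₂ hℓ₁ hℓ₂ hlipπ hlipp hB hA hq' hq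
    have bound2 : ⟪gπ (πsel q' πb pb) q - gπ (πsel q πb pb) q,
        πsel q πb pb - πsel q' πb pb⟫
        ≤ ℓ₁ * ‖πsel q πb pb - πsel q' πb pb‖ * ‖πsel q πb pb - πsel q' πb pb‖ := by
      have h1 := hlipπ _ hB _ hA q hq q hq
      simp only [sub_self, norm_zero, add_zero] at h1
      have h2 := real_inner_le_norm (gπ (πsel q' πb pb) q - gπ (πsel q πb pb) q)
        (πsel q πb pb - πsel q' πb pb)
      have h3 : ‖πsel q' πb pb - πsel q πb pb‖ = ‖πsel q πb pb - πsel q' πb pb‖ :=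
        norm_sub_rev _ _
      rw [h3] at h1
      nlinarith [norm_nonneg (πsel q πb pb - πsel q' πb pb)]
    have hfinal : (r₁ - ℓ₁) * ‖πsel q πb pb - πsel q' πb pb‖ ^ 2
        ≤ ℓ₂ * ‖q - q'‖ * ‖πsel q πb pb - πsel q' πb pb‖ := by
      have h3 : ‖q' - q‖ = ‖q - q'‖ := norm_sub_rev _ _
      rw [h3] at bound1
      nlinarith [hsum, bound1, bound2]
    rw [div_mul_eq_mul_div, le_div_iff₀ hr₁ℓ]
    nlinarith [hfinal, hwpos]
  -- ============ PART 2 ============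
  have hπpP : πp ∈ P := by rw [hπp]; exact (hprojP _).1
  have part2 : ‖pp - p0‖ ≤ ℓ₂ * σ * ((2 * τ * r₁ + 1) / (τ * (r₁ - ℓ₁))) * ‖π - πp‖ := by
    have hA := hselP p
    have vi1 := hselVI p πp hπpP
    have viproj := (hprojP (π - τ • (gπ π p + r₁ • (π - πb)))).2 (πsel p πb pb) hA
    rw [← hπp] at viproj
    -- abbreviations as equations
    have hvi1' : ⟪gπ (πsel p πb pb) p + r₁ • (πsel p πb pb - πb), πsel p πb pb - πp⟫ ≤ 0 := by
      have e1 : πp - πsel p πb pb = -(πsel p πb pb - πp) := by abel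
      rw [e1, inner_neg_right] at vi1
      linarith
    -- strong monotonicity
    have hmono : (r₁ - ℓ₁) * ‖πsel p πb pb - πp‖ ^ 2
        ≤ ⟪(gπ (πsel p πb pb) p + r₁ • (πsel p πb pb - πb))
            - (gπ πp p + r₁ • (πp - πb)), πsel p πb pb - πp⟫ := by
      have hXY : (gπ (πsel p πb pb) p + r₁ • (πsel p πb pb - πb))
          - (gπ πp p + r₁ • (πp - πb))
          = (gπ (πsel p πb pb) p - gπ πp p) + r₁ • (πsel p πb pb - πp) := by module
      rw [hXY, inner_add_left, real_inner_smul_left, real_inner_self_eq_norm_sq]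
      have h1 := hlipπ _ hA _ hπpP p hp p hp
      simp only [sub_self, norm_zero, add_zero] at h1
      have h2 := abs_real_inner_le_norm (gπ (πsel p πb pb) p - gπ πp p) (πsel p πb pb - πp)
      have h3 := neg_abs_le (⟪gπ (πsel p πb pb) p - gπ πp p, πsel p πb pb - πp⟫ : ℝ)
      nlinarith [norm_nonneg (πsel p πb pb - πp), norm_nonneg (gπ (πsel p πb pb) p - gπ πp p)]
    -- projection inequality rearranged
    have hproj2 : ⟪π - πp, πsel p πb pb - πp⟫
        ≤ τ * ⟪gπ π p + r₁ • (π - πb), πsel p πb pb - πp⟫ := by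
      have e : (π - τ • (gπ π p + r₁ • (π - πb))) - πp
          = (π - πp) - τ • (gπ π p + r₁ • (π - πb)) := by module
      rw [e, inner_sub_left, real_inner_smul_left] at viproj
      linarith
    -- Lipschitz bound for H π - H πp
    have hHlip : ‖(gπ π p + r₁ • (π - πb)) - (gπ πp p + r₁ • (πp - πb))‖
        ≤ (ℓ₁ + r₁) * ‖π - πp‖ := by
      have hXY : (gπ π p + r₁ • (π - πb)) - (gπ πp p + r₁ • (πp - πb))
          = (gπ π p - gπ πp p) + r₁ • (π - πp) := by module
      rw [hXY]
      have h1 := norm_add_le (gπ π p - gπ πp p) (r₁ • (π - πp))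
      have h2 := hlipπ _ hπ _ hπpP p hp p hp
      simp only [sub_self, norm_zero, add_zero] at h2
      rw [norm_smul, Real.norm_eq_abs, abs_of_pos (by linarith : (0:ℝ) < r₁)] at h1
      nlinarith
    -- combine into step bound
    have hstep : (r₁ - ℓ₁) * ‖πsel p πb pb - πp‖ ^ 2 * τ
        ≤ (τ * (ℓ₁ + r₁) + 1) * (‖π - πp‖ * ‖πsel p πb pb - πp‖) := by
      have d1 : ⟪(gπ (πsel p πb pb) p + r₁ • (πsel p πb pb - πb))
            - (gπ πp p + r₁ • (πp - πb)), πsel p πb pb - πp⟫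
          = ⟪gπ (πsel p πb pb) p + r₁ • (πsel p πb pb - πb), πsel p πb pb - πp⟫
            + ⟪(gπ π p + r₁ • (π - πb)) - (gπ πp p + r₁ • (πp - πb)), πsel p πb pb - πp⟫
            - ⟪gπ π p + r₁ • (π - πb), πsel p πb pb - πp⟫ := by
        simp only [inner_sub_left]
        ring
      have b1 : ⟪(gπ π p + r₁ • (π - πb)) - (gπ πp p + r₁ • (πp - πb)), πsel p πb pb - πp⟫
          ≤ (ℓ₁ + r₁) * ‖π - πp‖ * ‖πsel p πb pb - πp‖ := by
        have := real_inner_le_norm ((gπ π p + r₁ • (π - πb)) - (gπ πp p + r₁ • (πp - πb)))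
          (πsel p πb pb - πp)
        nlinarith [norm_nonneg (πsel p πb pb - πp)]
      have b2 : -⟪π - πp, πsel p πb pb - πp⟫ ≤ ‖π - πp‖ * ‖πsel p πb pb - πp‖ := by
        have h2 := abs_real_inner_le_norm (π - πp) (πsel p πb pb - πp)
        have h3 := neg_abs_le (⟪π - πp, πsel p πb pb - πp⟫ : ℝ)
        linarith
      nlinarith [hmono, hproj2, b1, b2]
    -- nonexpansiveness of the projection
    have hnon : ‖pp - p0‖ ≤ σ * (ℓ₂ * ‖πp - πsel p πb pb‖) := by
      rw [hpp, hp0]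
      have hne := proj_nonexp projQ hprojQ (p + σ • (gp πp p - r₂ • (p - pb)))
        (p + σ • (gp (πsel p πb pb) p - r₂ • (p - pb)))
      have e : (p + σ • (gp πp p - r₂ • (p - pb)))
          - (p + σ • (gp (πsel p πb pb) p - r₂ • (p - pb)))
          = σ • (gp πp p - gp (πsel p πb pb) p) := by module
      rw [e, norm_smul, Real.norm_eq_abs, abs_of_pos hσ] at hne
      have h2 := hlipp _ hπpP _ hA p hp p hp
      simp only [sub_self, norm_zero, add_zero] at h2
      calc ‖_ - _‖ ≤ σ * ‖gp πp p - gp (πsel p πb pb) p‖ := hne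
        _ ≤ σ * (ℓ₂ * ‖πp - πsel p πb pb‖) := by nlinarith
    rcases eq_or_ne (πsel p πb pb - πp) 0 with hw0 | hw0
    · have : ‖πp - πsel p πb pb‖ = 0 := by
        rw [norm_sub_rev, hw0, norm_zero]
      rw [this] at hnon
      simp only [mul_zero] at hnon
      refine hnon.trans ?_
      have hq6 : (0:ℝ) ≤ (2 * τ * r₁ + 1) / (τ * (r₁ - ℓ₁)) :=
        div_nonneg (by nlinarith) (by positivity)
      positivity
    · have hwpos : (0:ℝ) < ‖πsel p πb pb - πp‖ := norm_pos_iff.2 hw0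
      have hwb : ‖πsel p πb pb - πp‖ ≤ (2 * τ * r₁ + 1) / (τ * (r₁ - ℓ₁)) * ‖π - πp‖ := by
        rw [div_mul_eq_mul_div, le_div_iff₀ (mul_pos hτ hr₁ℓ)]
        have hprod : (0:ℝ) ≤ ‖π - πp‖ * ‖πsel p πb pb - πp‖ :=
          mul_nonneg (norm_nonneg _) (norm_nonneg _)
        have hcoef : (τ * (ℓ₁ + r₁) + 1) * (‖π - πp‖ * ‖πsel p πb pb - πp‖)
            ≤ (2 * τ * r₁ + 1) * (‖π - πp‖ * ‖πsel p πb pb - πp‖) :=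
          mul_le_mul_of_nonneg_right (by nlinarith [mul_pos hτ hr₁ℓ]) hprod
        have h6 : (‖πsel p πb pb - πp‖ * (τ * (r₁ - ℓ₁))) * ‖πsel p πb pb - πp‖
            ≤ ((2 * τ * r₁ + 1) * ‖π - πp‖) * ‖πsel p πb pb - πp‖ := by
          nlinarith [hstep, hcoef]
        exact le_of_mul_le_mul_right h6 hwpos
      have : ‖πp - πsel p πb pb‖ = ‖πsel p πb pb - πp‖ := norm_sub_rev _ _
      rw [this] at hnon
      calc ‖pp - p0‖ ≤ σ * (ℓ₂ * ‖πsel p πb pb - πp‖) := hnon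
        _ ≤ σ * (ℓ₂ * ((2 * τ * r₁ + 1) / (τ * (r₁ - ℓ₁)) * ‖π - πp‖)) := by
            have := mul_le_mul_of_nonneg_left hwb hℓ₂.le
            nlinarith [this, hσ.le]
        _ = ℓ₂ * σ * ((2 * τ * r₁ + 1) / (τ * (r₁ - ℓ₁))) * ‖π - πp‖ := by ring

  -- ============ PART 1 ============
  have part1 : ‖pbar πb pb - p‖ ≤
      (1 + σ * (ℓ₂ * (ℓ₂ / (r₁ - ℓ₁) + 1) + ℓ₂ + r₂)) / (σ * (r₂ - ℓ₂)) * ‖p - p0‖ := by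
    have hphatQ : pbar πb pb ∈ Q := (hpbar πb pb).1
    have hA := hselP p
    have hAh := hselP (pbar πb pb)
    -- strong monotonicity of the p-gradient for fixed first argument
    have monoG : ∀ A : E₁, A ∈ P → ∀ a ∈ Q, ∀ x ∈ Q,
        ⟪(gp A x - r₂ • (x - pb)) - (gp A a - r₂ • (a - pb)), x - a⟫
          ≤ -(r₂ - ℓ₂) * ‖x - a‖ ^ 2 := by
      intro A hAP a ha x hx
      have hXY : (gp A x - r₂ • (x - pb)) - (gp A a - r₂ • (a - pb))
          = (gp A x - gp A a) - r₂ • (x - a) := by module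
      rw [hXY, inner_sub_left, real_inner_smul_left, real_inner_self_eq_norm_sq]
      have h1 := hlipp A hAP A hAP x hx a ha
      simp only [sub_self, norm_zero, zero_add] at h1
      have h2 := real_inner_le_norm (gp A x - gp A a) (x - a)
      nlinarith [norm_nonneg (x - a)]
    have A1 := seg_strong_upper hQconv (fun y => chi f r₁ r₂ (πsel p πb pb) y πb pb)
      (fun y => gp (πsel p πb pb) y - r₂ • (y - pb)) (hgradp _) hp hphatQ (r₂ - ℓ₂)
      (fun x hx => monoG _ hA p hp x hx)
    have A2 := seg_strong_upper hQconv
      (fun y => chi f r₁ r₂ (πsel (pbar πb pb) πb pb) y πb pb)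
      (fun y => gp (πsel (pbar πb pb) πb pb) y - r₂ • (y - pb)) (hgradp _) hphatQ hp (r₂ - ℓ₂)
      (fun x hx => monoG _ hAh (pbar πb pb) hphatQ x hx)
    have hchain1 : chi f r₁ r₂ (πsel (pbar πb pb) πb pb) (pbar πb pb) πb pb
        ≤ chi f r₁ r₂ (πsel p πb pb) (pbar πb pb) πb pb :=
      (hπsel (pbar πb pb) πb pb).2 _ hA
    have hchain2 : chi f r₁ r₂ (πsel p πb pb) p πb pb
        ≤ chi f r₁ r₂ (πsel (pbar πb pb) πb pb) p πb pb := (hπsel p πb pb).2 _ hAh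
    have hnrev : ‖p - pbar πb pb‖ = ‖pbar πb pb - p‖ := norm_sub_rev _ _
    have hinnrev : ⟪gp (πsel (pbar πb pb) πb pb) (pbar πb pb) - r₂ • (pbar πb pb - pb),
        p - pbar πb pb⟫
        = -⟪gp (πsel (pbar πb pb) πb pb) (pbar πb pb) - r₂ • (pbar πb pb - pb),
            pbar πb pb - p⟫ := by
      rw [← inner_neg_right]
      congr 1
      abel
    have strong : (r₂ - ℓ₂) * ‖pbar πb pb - p‖ ^ 2
        ≤ ⟪gp (πsel p πb pb) p - r₂ • (p - pb), pbar πb pb - p⟫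
          - ⟪gp (πsel (pbar πb pb) πb pb) (pbar πb pb) - r₂ • (pbar πb pb - pb),
              pbar πb pb - p⟫ := by
      rw [hnrev, hinnrev] at A2
      linarith [A1, A2, hchain1, hchain2]
    -- variational inequality at the maximizer
    have vihat : ∀ y ∈ Q, ⟪gp (πsel (pbar πb pb) πb pb) (pbar πb pb)
        - r₂ • (pbar πb pb - pb), y - pbar πb pb⟫ ≤ 0 := by
      intro y hy
      have hDnn : (0:ℝ) ≤ ‖y - pbar πb pb‖ ^ 2 := sq_nonneg _
      have hKnn : (0:ℝ) ≤ (ℓ₂ + r₂) / 2 * ‖y - pbar πb pb‖ ^ 2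
          + ℓ₂ * (ℓ₂ / (r₁ - ℓ₁)) * ‖y - pbar πb pb‖ ^ 2 := by nlinarith [mul_pos hℓ₂ hκ]
      have key : ∀ t : ℝ, 0 < t → t ≤ 1 →
          ⟪gp (πsel (pbar πb pb) πb pb) (pbar πb pb) - r₂ • (pbar πb pb - pb),
            y - pbar πb pb⟫
          ≤ ((ℓ₂ + r₂) / 2 * ‖y - pbar πb pb‖ ^ 2
              + ℓ₂ * (ℓ₂ / (r₁ - ℓ₁)) * ‖y - pbar πb pb‖ ^ 2) * t := by
        intro t ht0 ht1
        have hptQ : pbar πb pb + t • (y - pbar πb pb) ∈ Q :=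
          seg_mem' hQconv hphatQ hy ht0.le ht1
        have hπtP := hselP (pbar πb pb + t • (y - pbar πb pb))
        have hlipG : ∀ x ∈ Q,
            ‖(gp (πsel (pbar πb pb + t • (y - pbar πb pb)) πb pb) x - r₂ • (x - pb))
              - (gp (πsel (pbar πb pb + t • (y - pbar πb pb)) πb pb) (pbar πb pb)
                  - r₂ • (pbar πb pb - pb))‖
            ≤ (ℓ₂ + r₂) * ‖x - pbar πb pb‖ := by
          intro x hx
          have hXY : (gp (πsel (pbar πb pb + t • (y - pbar πb pb)) πb pb) x - r₂ • (x - pb))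
              - (gp (πsel (pbar πb pb + t • (y - pbar πb pb)) πb pb) (pbar πb pb)
                  - r₂ • (pbar πb pb - pb))
              = (gp (πsel (pbar πb pb + t • (y - pbar πb pb)) πb pb) x
                  - gp (πsel (pbar πb pb + t • (y - pbar πb pb)) πb pb) (pbar πb pb))
                - r₂ • (x - pbar πb pb) := by module
          rw [hXY]
          have h1 := norm_sub_le
            (gp (πsel (pbar πb pb + t • (y - pbar πb pb)) πb pb) x
              - gp (πsel (pbar πb pb + t • (y - pbar πb pb)) πb pb) (pbar πb pb))
            (r₂ • (x - pbar πb pb))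
          have h2 := hlipp _ hπtP _ hπtP x hx (pbar πb pb) hphatQ
          simp only [sub_self, norm_zero, zero_add] at h2
          rw [norm_smul, Real.norm_eq_abs, abs_of_pos hr₂pos] at h1
          linarith
        have lower := seg_lip_lower hQconv
          (fun z => chi f r₁ r₂ (πsel (pbar πb pb + t • (y - pbar πb pb)) πb pb) z πb pb)
          (fun z => gp (πsel (pbar πb pb + t • (y - pbar πb pb)) πb pb) z - r₂ • (z - pb))
          (hgradp _) hphatQ hptQ (ℓ₂ + r₂) hlipG
        have c1 : chi f r₁ r₂ (πsel (pbar πb pb + t • (y - pbar πb pb)) πb pb)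
            (pbar πb pb + t • (y - pbar πb pb)) πb pb
            ≤ chi f r₁ r₂ (πsel (pbar πb pb) πb pb) (pbar πb pb) πb pb :=
          (hpbar πb pb).2 _ hptQ
        have c2 : chi f r₁ r₂ (πsel (pbar πb pb) πb pb) (pbar πb pb) πb pb
            ≤ chi f r₁ r₂ (πsel (pbar πb pb + t • (y - pbar πb pb)) πb pb) (pbar πb pb) πb pb :=
          (hπsel (pbar πb pb) πb pb).2 _ (hselP _)
        have ept : pbar πb pb + t • (y - pbar πb pb) - pbar πb pb = t • (y - pbar πb pb) := by
          abel
        rw [ept, real_inner_smul_right, norm_smul, Real.norm_eq_abs, abs_of_pos ht0] at lower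
        have hGt : t * ⟪gp (πsel (pbar πb pb + t • (y - pbar πb pb)) πb pb) (pbar πb pb)
            - r₂ • (pbar πb pb - pb), y - pbar πb pb⟫
            ≤ (ℓ₂ + r₂) / 2 * (t * ‖y - pbar πb pb‖) ^ 2 := by
          linarith [lower, c1, c2]
        have hdiff : ⟪(gp (πsel (pbar πb pb) πb pb) (pbar πb pb) - r₂ • (pbar πb pb - pb))
            - (gp (πsel (pbar πb pb + t • (y - pbar πb pb)) πb pb) (pbar πb pb)
                - r₂ • (pbar πb pb - pb)), y - pbar πb pb⟫
            ≤ ℓ₂ * (ℓ₂ / (r₁ - ℓ₁)) * (t * ‖y - pbar πb pb‖) * ‖y - pbar πb pb‖ := by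
          have hXY : (gp (πsel (pbar πb pb) πb pb) (pbar πb pb) - r₂ • (pbar πb pb - pb))
              - (gp (πsel (pbar πb pb + t • (y - pbar πb pb)) πb pb) (pbar πb pb)
                  - r₂ • (pbar πb pb - pb))
              = gp (πsel (pbar πb pb) πb pb) (pbar πb pb)
                - gp (πsel (pbar πb pb + t • (y - pbar πb pb)) πb pb) (pbar πb pb) := by
            module
          rw [hXY]
          have hcs := real_inner_le_norm
            (gp (πsel (pbar πb pb) πb pb) (pbar πb pb)
              - gp (πsel (pbar πb pb + t • (y - pbar πb pb)) πb pb) (pbar πb pb))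
            (y - pbar πb pb)
          have h2 := hlipp _ hAh _ hπtP (pbar πb pb) hphatQ (pbar πb pb) hphatQ
          simp only [sub_self, norm_zero, add_zero] at h2
          have h3 := selLip (pbar πb pb) hphatQ (pbar πb pb + t • (y - pbar πb pb)) hptQ
          have h4 : ‖pbar πb pb - (pbar πb pb + t • (y - pbar πb pb))‖
              = t * ‖y - pbar πb pb‖ := by
            rw [show pbar πb pb - (pbar πb pb + t • (y - pbar πb pb))
              = -(t • (y - pbar πb pb)) by abel, norm_neg, norm_smul, Real.norm_eq_abs,
              abs_of_pos ht0]
          rw [h4] at h3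
          have m1 := mul_le_mul_of_nonneg_right h2 (norm_nonneg (y - pbar πb pb))
          have m2 := mul_le_mul_of_nonneg_right
            (mul_le_mul_of_nonneg_left h3 hℓ₂.le) (norm_nonneg (y - pbar πb pb))
          nlinarith [hcs, m1, m2]
        have hsum : t * ⟪gp (πsel (pbar πb pb) πb pb) (pbar πb pb) - r₂ • (pbar πb pb - pb),
            y - pbar πb pb⟫
            ≤ (((ℓ₂ + r₂) / 2 * ‖y - pbar πb pb‖ ^ 2
              + ℓ₂ * (ℓ₂ / (r₁ - ℓ₁)) * ‖y - pbar πb pb‖ ^ 2) * t) * t := by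
          rw [inner_sub_left] at hdiff
          nlinarith [hGt, hdiff, ht0]
        have := le_of_mul_le_mul_left (by linarith [hsum] :
          t * ⟪gp (πsel (pbar πb pb) πb pb) (pbar πb pb) - r₂ • (pbar πb pb - pb),
            y - pbar πb pb⟫
          ≤ t * (((ℓ₂ + r₂) / 2 * ‖y - pbar πb pb‖ ^ 2
              + ℓ₂ * (ℓ₂ / (r₁ - ℓ₁)) * ‖y - pbar πb pb‖ ^ 2) * t)) ht0
        linarith [this]
      refine le_of_forall_pos_le_add fun ε hε => ?_
      have hK1 : (0:ℝ) < (ℓ₂ + r₂) / 2 * ‖y - pbar πb pb‖ ^ 2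
          + ℓ₂ * (ℓ₂ / (r₁ - ℓ₁)) * ‖y - pbar πb pb‖ ^ 2 + 1 := by linarith
      have ht0 : (0:ℝ) < min 1 (ε / ((ℓ₂ + r₂) / 2 * ‖y - pbar πb pb‖ ^ 2
          + ℓ₂ * (ℓ₂ / (r₁ - ℓ₁)) * ‖y - pbar πb pb‖ ^ 2 + 1)) :=
        lt_min one_pos (div_pos hε hK1)
      have hkey := key _ ht0 (min_le_left _ _)
      have htle : min 1 (ε / ((ℓ₂ + r₂) / 2 * ‖y - pbar πb pb‖ ^ 2
          + ℓ₂ * (ℓ₂ / (r₁ - ℓ₁)) * ‖y - pbar πb pb‖ ^ 2 + 1))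
          ≤ ε / ((ℓ₂ + r₂) / 2 * ‖y - pbar πb pb‖ ^ 2
          + ℓ₂ * (ℓ₂ / (r₁ - ℓ₁)) * ‖y - pbar πb pb‖ ^ 2 + 1) := min_le_right _ _
      have hfin : ((ℓ₂ + r₂) / 2 * ‖y - pbar πb pb‖ ^ 2
          + ℓ₂ * (ℓ₂ / (r₁ - ℓ₁)) * ‖y - pbar πb pb‖ ^ 2)
          * (ε / ((ℓ₂ + r₂) / 2 * ‖y - pbar πb pb‖ ^ 2
          + ℓ₂ * (ℓ₂ / (r₁ - ℓ₁)) * ‖y - pbar πb pb‖ ^ 2 + 1)) ≤ ε := by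
        rw [← mul_div_assoc, div_le_iff₀ hK1]
        nlinarith [hKnn, hε]
      have hmul := mul_le_mul_of_nonneg_left htle hKnn
      linarith [hkey, hmul, hfin]
    -- Lipschitz-type bound for the difference of prox-gradient maps
    have GLip : ‖(gp (πsel p πb pb) p - r₂ • (p - pb))
        - (gp (πsel (pbar πb pb) πb pb) (pbar πb pb) - r₂ • (pbar πb pb - pb))‖
        ≤ (ℓ₂ * (ℓ₂ / (r₁ - ℓ₁) + 1) + ℓ₂ + r₂) * ‖pbar πb pb - p‖ := by
      have hXY : (gp (πsel p πb pb) p - r₂ • (p - pb))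
          - (gp (πsel (pbar πb pb) πb pb) (pbar πb pb) - r₂ • (pbar πb pb - pb))
          = (gp (πsel p πb pb) p - gp (πsel (pbar πb pb) πb pb) (pbar πb pb))
            - r₂ • (p - pbar πb pb) := by module
      rw [hXY]
      have h1 := norm_sub_le (gp (πsel p πb pb) p - gp (πsel (pbar πb pb) πb pb) (pbar πb pb))
        (r₂ • (p - pbar πb pb))
      have h2 := hlipp _ hA _ hAh p hp (pbar πb pb) hphatQ
      have h3 := selLip p hp (pbar πb pb) hphatQ
      rw [norm_smul, Real.norm_eq_abs, abs_of_pos hr₂pos, hnrev] at h1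
      rw [hnrev] at h2
      nlinarith [norm_nonneg (pbar πb pb - p), hℓ₂.le]
    have hp0Q : p0 ∈ Q := by rw [hp0]; exact (hprojQ _).1
    have hvi0 : ∀ y ∈ Q, ⟪(p + σ • (gp (πsel p πb pb) p - r₂ • (p - pb))) - p0, y - p0⟫ ≤ 0 := by
      intro y hy
      rw [hp0]
      exact (hprojQ _).2 y hy
    have t1 : σ * ⟪gp (πsel p πb pb) p - r₂ • (p - pb), pbar πb pb - p0⟫
        ≤ ‖p - p0‖ * ‖pbar πb pb - p‖ := by
      have h := hvi0 (pbar πb pb) hphatQ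
      have e : (p + σ • (gp (πsel p πb pb) p - r₂ • (p - pb))) - p0
          = (p - p0) + σ • (gp (πsel p πb pb) p - r₂ • (p - pb)) := by module
      rw [e, inner_add_left, real_inner_smul_left] at h
      have hsplit : ⟪p - p0, pbar πb pb - p0⟫
          = ⟪p - p0, pbar πb pb - p⟫ + ‖p - p0‖ ^ 2 := by
        rw [show pbar πb pb - p0 = (pbar πb pb - p) + (p - p0) by abel, inner_add_right,
          real_inner_self_eq_norm_sq]
      have habs := abs_real_inner_le_norm (p - p0) (pbar πb pb - p)
      have hneg := neg_abs_le (⟪p - p0, pbar πb pb - p⟫ : ℝ)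
      nlinarith [sq_nonneg ‖p - p0‖]
    have t2 : ⟪(gp (πsel p πb pb) p - r₂ • (p - pb))
        - (gp (πsel (pbar πb pb) πb pb) (pbar πb pb) - r₂ • (pbar πb pb - pb)), p0 - p⟫
        ≤ ((ℓ₂ * (ℓ₂ / (r₁ - ℓ₁) + 1) + ℓ₂ + r₂) * ‖pbar πb pb - p‖) * ‖p - p0‖ := by
      have hcs := real_inner_le_norm ((gp (πsel p πb pb) p - r₂ • (p - pb))
        - (gp (πsel (pbar πb pb) πb pb) (pbar πb pb) - r₂ • (pbar πb pb - pb))) (p0 - p)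
      rw [norm_sub_rev p0 p] at hcs
      have := mul_le_mul_of_nonneg_right GLip (norm_nonneg (p - p0))
      linarith
    have t3 := vihat p0 hp0Q
    have decomp : ⟪gp (πsel p πb pb) p - r₂ • (p - pb), pbar πb pb - p⟫
          - ⟪gp (πsel (pbar πb pb) πb pb) (pbar πb pb) - r₂ • (pbar πb pb - pb),
              pbar πb pb - p⟫
        = ⟪gp (πsel p πb pb) p - r₂ • (p - pb), pbar πb pb - p0⟫
          + ⟪(gp (πsel p πb pb) p - r₂ • (p - pb))
              - (gp (πsel (pbar πb pb) πb pb) (pbar πb pb) - r₂ • (pbar πb pb - pb)), p0 - p⟫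
          + ⟪gp (πsel (pbar πb pb) πb pb) (pbar πb pb) - r₂ • (pbar πb pb - pb),
              p0 - pbar πb pb⟫ := by
      simp only [inner_sub_left, inner_sub_right]
      ring
    have keyineq : σ * (r₂ - ℓ₂) * ‖pbar πb pb - p‖ ^ 2
        ≤ (1 + σ * (ℓ₂ * (ℓ₂ / (r₁ - ℓ₁) + 1) + ℓ₂ + r₂))
          * (‖p - p0‖ * ‖pbar πb pb - p‖) := by
      have hσs := mul_le_mul_of_nonneg_left strong hσ.le
      rw [decomp] at hσs
      have hσt2 := mul_le_mul_of_nonneg_left t2 hσ.le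
      have hσt3 := mul_le_mul_of_nonneg_left t3 hσ.le
      nlinarith [hσs, t1, hσt2, hσt3]
    -- conclude
    rcases eq_or_ne (pbar πb pb - p) 0 with hd0 | hd0
    · rw [hd0, norm_zero]
      have hLpos : (0:ℝ) < ℓ₂ * (ℓ₂ / (r₁ - ℓ₁) + 1) + ℓ₂ + r₂ := by
        nlinarith [mul_pos hℓ₂ hκ]
      have hnum : (0:ℝ) ≤ 1 + σ * (ℓ₂ * (ℓ₂ / (r₁ - ℓ₁) + 1) + ℓ₂ + r₂) := by
        nlinarith [mul_pos hσ hLpos]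
      exact mul_nonneg (div_nonneg hnum (mul_pos hσ hμ).le) (norm_nonneg _)
    · have hdpos : (0:ℝ) < ‖pbar πb pb - p‖ := norm_pos_iff.2 hd0
      rw [div_mul_eq_mul_div, le_div_iff₀ (mul_pos hσ hμ)]
      have h6 : (‖pbar πb pb - p‖ * (σ * (r₂ - ℓ₂))) * ‖pbar πb pb - p‖
          ≤ ((1 + σ * (ℓ₂ * (ℓ₂ / (r₁ - ℓ₁) + 1) + ℓ₂ + r₂)) * ‖p - p0‖)
            * ‖pbar πb pb - p‖ := by
        nlinarith [keyineq]
      exact le_of_mul_le_mul_right h6 hdpos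


  exact ⟨part1, part2⟩
end

section
/- Fix π ∈ Π, p ∈ 𝒫, π̄ ∈ E₁, p̄ ∈ E₂, and set π⁺ := Proj_Π(π − τ∇_πχ(π,p,π̄,p̄)), p⁺ := Proj_𝒫(p + σ∇_pχ(π⁺,p,π̄,p̄)), π̄⁺ := π̄ + β(π⁺−π̄), p̄⁺ := p̄ + μ(p⁺−p̄). Then χ(π,p,π̄,p̄) ≥ χ(π⁺,p⁺,π̄⁺,p̄⁺) + (1/τ − (ℓ₁+r₁)/2)‖π⁺−π‖² + ⟨∇_pχ(π⁺,p,π̄,p̄), p−p⁺⟩ + ((r₂−ℓ₂)/2)‖p⁺−p‖² + ((2−β)/(2β))·r₁‖π̄⁺−π̄‖² + ((μ−2)/(2μ))·r₂‖p̄⁺−p̄‖². -/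
open scoped RealInnerProductSpace
open Set

section Helpers

variable {E : Type*} [NormedAddCommGroup E] [InnerProductSpace ℝ E] [CompleteSpace E]

lemma hasGradientAt_add_aux {f g : E → ℝ} {f' g' : E} {x : E}
    (hf : HasGradientAt f f' x) (hg : HasGradientAt g g' x) :
    HasGradientAt (fun y => f y + g y) (f' + g') x := by
  rw [hasGradientAt_iff_hasFDerivAt] at *
  have h := hf.add hg
  rwa [← map_add] at h

lemma hasGradientAt_quad_aux (c : ℝ) (w x : E) :
    HasGradientAt (fun y : E => c / 2 * ‖y - w‖ ^ 2) (c • (x - w)) x := by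
  rw [hasGradientAt_iff_hasFDerivAt]
  have h1 : HasFDerivAt (fun y : E => y - w) (ContinuousLinearMap.id ℝ E) x := by
    simpa using (hasFDerivAt_id x).sub_const w
  have h2 := ((h1.inner ℝ h1).const_mul (c / 2))
  have heq : (fun y : E => c / 2 * ⟪y - w, y - w⟫) = fun y : E => c / 2 * ‖y - w‖ ^ 2 := by
    funext y; rw [real_inner_self_eq_norm_sq]
  rw [heq] at h2
  refine h2.congr_fderiv ?_
  ext v
  simp only [InnerProductSpace.toDual_apply_apply, ContinuousLinearMap.coe_comp',
    Function.comp_apply, ContinuousLinearMap.coe_smul', Pi.smul_apply,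
    ContinuousLinearMap.prod_apply, ContinuousLinearMap.coe_id', id_eq,
    fderivInnerCLM_apply, smul_eq_mul, real_inner_smul_left, inner_sub_left,
    inner_sub_right, real_inner_comm v x, real_inner_comm v w]
  ring

/-- Descent lemma along a segment, for a function with Lipschitz-type gradient bound. -/
lemma descent_lemma_aux (g : E → ℝ) (G : E → E) (a b : E) (L : ℝ)
    (hg : ∀ t ∈ Icc (0:ℝ) 1, HasGradientAt g (G (a + t • (b - a))) (a + t • (b - a)))
    (hlip : ∀ t ∈ Icc (0:ℝ) 1, ‖G (a + t • (b - a)) - G a‖ ≤ L * (t * ‖b - a‖)) :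
    g b ≤ g a + ⟪G a, b - a⟫ + L / 2 * ‖b - a‖ ^ 2 := by
  set d := b - a with hd
  set φ : ℝ → ℝ := fun t => g (a + t • d) - t * ⟪G a, d⟫ - L / 2 * ‖d‖ ^ 2 * t ^ 2 with hφ
  have hγ : ∀ t : ℝ, HasDerivAt (fun s : ℝ => a + s • d) d t := by
    intro t
    simpa using ((hasDerivAt_id t).smul_const d).const_add a
  have hder : ∀ t ∈ Icc (0:ℝ) 1,
      HasDerivAt φ (⟪G (a + t • d), d⟫ - ⟪G a, d⟫ - L * ‖d‖ ^ 2 * t) t := by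
    intro t ht
    have hF := hg t ht
    rw [hasGradientAt_iff_hasFDerivAt] at hF
    have h1 : HasDerivAt (fun s : ℝ => g (a + s • d)) ⟪G (a + t • d), d⟫ t := by
      have := hF.comp_hasDerivAt t (hγ t)
      simp only [Function.comp_def, InnerProductSpace.toDual_apply_apply] at this
      exact this
    have h2 : HasDerivAt (fun s : ℝ => s * ⟪G a, d⟫) ⟪G a, d⟫ t := by
      simpa using (hasDerivAt_id t).mul_const ⟪G a, d⟫
    have h3 : HasDerivAt (fun s : ℝ => L / 2 * ‖d‖ ^ 2 * s ^ 2) (L * ‖d‖ ^ 2 * t) t := by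
      have := (hasDerivAt_pow 2 t).const_mul (L / 2 * ‖d‖ ^ 2)
      refine this.congr_deriv ?_
      push_cast; ring
    exact (h1.sub h2).sub h3
  have hanti : AntitoneOn φ (Icc 0 1) := by
    apply antitoneOn_of_deriv_nonpos (convex_Icc 0 1)
    · intro t ht
      exact (hder t ht).continuousAt.continuousWithinAt
    · intro t ht
      rw [interior_Icc] at ht
      exact (hder t (Ioo_subset_Icc_self ht)).differentiableAt.differentiableWithinAt
    · intro t ht
      rw [interior_Icc] at ht
      rw [(hder t (Ioo_subset_Icc_self ht)).deriv]
      have h4 : ⟪G (a + t • d), d⟫ - ⟪G a, d⟫ ≤ L * (t * ‖d‖) * ‖d‖ := by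
        rw [← inner_sub_left]
        calc ⟪G (a + t • d) - G a, d⟫ ≤ ‖G (a + t • d) - G a‖ * ‖d‖ := real_inner_le_norm _ _
          _ ≤ L * (t * ‖d‖) * ‖d‖ :=
            mul_le_mul_of_nonneg_right (hlip t (Ioo_subset_Icc_self ht)) (norm_nonneg d)
      have h5 : L * (t * ‖d‖) * ‖d‖ = L * ‖d‖ ^ 2 * t := by ring
      linarith
  have h01 := hanti (left_mem_Icc.mpr zero_le_one) (right_mem_Icc.mpr zero_le_one) zero_le_one
  have e0 : φ 0 = g a := by simp [hφ]
  have e1 : φ 1 = g b - ⟪G a, d⟫ - L / 2 * ‖d‖ ^ 2 := by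
    have hb : a + (1:ℝ) • d = b := by rw [hd]; simp
    simp only [hφ, hb, one_pow, one_mul, mul_one]
  rw [e0, e1] at h01
  linarith

lemma seg_mem_aux {s : Set E} (hs : Convex ℝ s) {a b : E} (ha : a ∈ s) (hb : b ∈ s)
    {t : ℝ} (ht : t ∈ Icc (0:ℝ) 1) : a + t • (b - a) ∈ s := by
  have h := hs ha hb (by linarith [ht.2] : (0:ℝ) ≤ 1 - t) ht.1 (by ring)
  have : a + t • (b - a) = (1 - t) • a + t • b := by module
  rwa [this]

end Helpers

/-- one-step descent estimate for `χ` along the single-loop update. -/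
theorem chi_one_step_descent
    {E₁ : Type*} [NormedAddCommGroup E₁] [InnerProductSpace ℝ E₁] [FiniteDimensional ℝ E₁]
    {E₂ : Type*} [NormedAddCommGroup E₂] [InnerProductSpace ℝ E₂] [FiniteDimensional ℝ E₂]
    (P : Set E₁) (Q : Set E₂)
    (hPne : P.Nonempty) (hPcpt : IsCompact P) (hPconv : Convex ℝ P)
    (hQne : Q.Nonempty) (hQcpt : IsCompact Q) (hQconv : Convex ℝ Q)
    (f : E₁ → E₂ → ℝ) (hf : ContDiff ℝ 1 (fun q : E₁ × E₂ => f q.1 q.2))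
    (gπ : E₁ → E₂ → E₁) (gp : E₁ → E₂ → E₂)
    (hgπ : ∀ π p, HasGradientAt (fun π' => f π' p) (gπ π p) π)
    (hgp : ∀ π p, HasGradientAt (fun p' => f π p') (gp π p) p)
    (ℓ₁ ℓ₂ : ℝ) (hℓ₁ : 0 < ℓ₁) (hℓ₂ : 0 < ℓ₂)
    (hlipπ : ∀ π ∈ P, ∀ π' ∈ P, ∀ p ∈ Q, ∀ p' ∈ Q,
      ‖gπ π p - gπ π' p'‖ ≤ ℓ₁ * (‖π - π'‖ + ‖p - p'‖))
    (hlipp : ∀ π ∈ P, ∀ π' ∈ P, ∀ p ∈ Q, ∀ p' ∈ Q,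
      ‖gp π p - gp π' p'‖ ≤ ℓ₂ * (‖π - π'‖ + ‖p - p'‖))
    (r₁ r₂ : ℝ) (hr₁ : 0 < r₁) (hr₂ : 0 < r₂)
    (τ σ β μ : ℝ) (hτ : 0 < τ) (hσ : 0 < σ)
    (hβ : 0 < β) (hβ1 : β < 1) (hμ : 0 < μ) (hμ1 : μ < 1)
    -- metric projections onto `Π` and `𝒫`
    (projP : E₁ → E₁)
    (hprojP : ∀ z : E₁, projP z ∈ P ∧ ∀ y ∈ P, ⟪z - projP z, y - projP z⟫ ≤ 0)
    (projQ : E₂ → E₂)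
    (hprojQ : ∀ z : E₂, projQ z ∈ Q ∧ ∀ y ∈ Q, ⟪z - projQ z, y - projQ z⟫ ≤ 0) :
    ∀ π ∈ P, ∀ p ∈ Q, ∀ (πb : E₁) (pb : E₂) (πp : E₁) (pp : E₂) (πbp : E₁) (pbp : E₂),
      πp = projP (π - τ • (gπ π p + r₁ • (π - πb))) →
      pp = projQ (p + σ • (gp πp p - r₂ • (p - pb))) →
      πbp = πb + β • (πp - πb) →
      pbp = pb + μ • (pp - pb) →
      chi f r₁ r₂ π p πb pb ≥
        chi f r₁ r₂ πp pp πbp pbp + (1 / τ - (ℓ₁ + r₁) / 2) * ‖πp - π‖ ^ 2 +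
          ⟪gp πp p - r₂ • (p - pb), p - pp⟫ + (r₂ - ℓ₂) / 2 * ‖pp - p‖ ^ 2 +
          (2 - β) / (2 * β) * r₁ * ‖πbp - πb‖ ^ 2 +
          (μ - 2) / (2 * μ) * r₂ * ‖pbp - pb‖ ^ 2 := by
  intro π hπ p hp πb pb πp pp πbp pbp hπp hpp hπbp hpbp
  have hπpP : πp ∈ P := by rw [hπp]; exact (hprojP _).1
  have hppQ : pp ∈ Q := by rw [hpp]; exact (hprojQ _).1
  -- Step A: descent in π
  have hdescA : (fun x : E₁ => f x p + r₁ / 2 * ‖x - πb‖ ^ 2) πp ≤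
      (fun x : E₁ => f x p + r₁ / 2 * ‖x - πb‖ ^ 2) π +
        ⟪(fun x : E₁ => gπ x p + r₁ • (x - πb)) π, πp - π⟫ +
        (ℓ₁ + r₁) / 2 * ‖πp - π‖ ^ 2 := by
    apply descent_lemma_aux _ (fun x : E₁ => gπ x p + r₁ • (x - πb)) π πp (ℓ₁ + r₁)
    · intro t ht
      exact hasGradientAt_add_aux (hgπ _ p) (hasGradientAt_quad_aux r₁ πb _)
    · intro t ht
      set x := π + t • (πp - π) with hx
      have hxP : x ∈ P := seg_mem_aux hPconv hπ hπpP ht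
      have h1 := hlipπ x hxP π hπ p hp p hp
      simp only [sub_self, norm_zero, add_zero] at h1
      have hxπ : x - π = t • (πp - π) := by rw [hx]; abel
      have hnx : ‖x - π‖ = t * ‖πp - π‖ := by
        rw [hxπ, norm_smul, Real.norm_eq_abs, abs_of_nonneg ht.1]
      have hre : (gπ x p + r₁ • (x - πb)) - (gπ π p + r₁ • (π - πb)) =
          (gπ x p - gπ π p) + r₁ • (x - π) := by module
      rw [hre]
      calc ‖(gπ x p - gπ π p) + r₁ • (x - π)‖
          ≤ ‖gπ x p - gπ π p‖ + ‖r₁ • (x - π)‖ := norm_add_le _ _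
        _ ≤ ℓ₁ * (t * ‖πp - π‖) + r₁ * (t * ‖πp - π‖) := by
            have h2 : ‖r₁ • (x - π)‖ = r₁ * (t * ‖πp - π‖) := by
              rw [norm_smul, Real.norm_eq_abs, abs_of_pos hr₁, hnx]
            rw [hnx] at h1
            linarith
        _ = (ℓ₁ + r₁) * (t * ‖πp - π‖) := by ring
  simp only at hdescA
  -- projection inequality
  have hz := (hprojP (π - τ • (gπ π p + r₁ • (π - πb)))).2 π hπ
  rw [← hπp] at hz
  have hre2 : π - τ • (gπ π p + r₁ • (π - πb)) - πp =
      (π - πp) - τ • (gπ π p + r₁ • (π - πb)) := by module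
  rw [hre2, inner_sub_left, real_inner_smul_left, real_inner_self_eq_norm_sq] at hz
  have hnrev : ‖π - πp‖ = ‖πp - π‖ := norm_sub_rev _ _
  rw [hnrev] at hz
  have hproj : 1 / τ * ‖πp - π‖ ^ 2 ≤ ⟪gπ π p + r₁ • (π - πb), π - πp⟫ := by
    rw [one_div_mul_eq_div, div_le_iff₀ hτ]
    linarith
  have hflip : ⟪gπ π p + r₁ • (π - πb), πp - π⟫ = -⟪gπ π p + r₁ • (π - πb), π - πp⟫ := by
    rw [show πp - π = -(π - πp) from by abel, inner_neg_right]
  have hA : f π p + r₁ / 2 * ‖π - πb‖ ^ 2 ≥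
      f πp p + r₁ / 2 * ‖πp - πb‖ ^ 2 + (1 / τ - (ℓ₁ + r₁) / 2) * ‖πp - π‖ ^ 2 := by
    rw [hflip] at hdescA
    nlinarith [hdescA, hproj]
  -- Step B: descent in p
  have hdescB : (fun y : E₂ => f πp y) pp ≤
      (fun y : E₂ => f πp y) p + ⟪(fun y : E₂ => gp πp y) p, pp - p⟫ +
        ℓ₂ / 2 * ‖pp - p‖ ^ 2 := by
    apply descent_lemma_aux _ (fun y : E₂ => gp πp y) p pp ℓ₂
    · intro t ht
      exact hgp πp _
    · intro t ht
      set y := p + t • (pp - p) with hy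
      have hyQ : y ∈ Q := seg_mem_aux hQconv hp hppQ ht
      have h1 := hlipp πp hπpP πp hπpP y hyQ p hp
      simp only [sub_self, norm_zero, zero_add] at h1
      have hyp : y - p = t • (pp - p) := by rw [hy]; abel
      have hny : ‖y - p‖ = t * ‖pp - p‖ := by
        rw [hyp, norm_smul, Real.norm_eq_abs, abs_of_nonneg ht.1]
      rw [hny] at h1
      exact h1
  simp only at hdescB
  have hi4 : ⟪gp πp p, pp - p⟫ = -⟪gp πp p, p - pp⟫ := by
    rw [show pp - p = -(p - pp) from by abel, inner_neg_right]
  have hmrev : ‖pp - p‖ = ‖p - pp‖ := norm_sub_rev _ _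
  have hB : f πp pp ≤ f πp p - ⟪gp πp p, p - pp⟫ + ℓ₂ / 2 * ‖p - pp‖ ^ 2 := by
    rw [hi4, hmrev] at hdescB
    linarith
  -- inner product identities
  have hB0 : r₂ / 2 * ‖p - pb‖ ^ 2 =
      r₂ / 2 * ‖pp - pb‖ ^ 2 + r₂ * ⟪pp - pb, p - pp⟫ + r₂ / 2 * ‖p - pp‖ ^ 2 := by
    rw [show p - pb = (pp - pb) + (p - pp) from by abel, norm_add_sq_real]
    ring
  have hi2 : ⟪gp πp p - r₂ • (p - pb), p - pp⟫ =
      ⟪gp πp p, p - pp⟫ - r₂ * ⟪pp - pb, p - pp⟫ - r₂ * ‖p - pp‖ ^ 2 := by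
    rw [inner_sub_left, real_inner_smul_left,
      show p - pb = (pp - pb) + (p - pp) from by abel, inner_add_left,
      real_inner_self_eq_norm_sq]
    ring
  -- C and D steps
  have hC1 : ‖πbp - πb‖ ^ 2 = β ^ 2 * ‖πp - πb‖ ^ 2 := by
    rw [hπbp, add_sub_cancel_left, norm_smul, mul_pow, Real.norm_eq_abs, sq_abs]
  have hC2 : ‖πp - πbp‖ ^ 2 = (1 - β) ^ 2 * ‖πp - πb‖ ^ 2 := by
    rw [hπbp, show πp - (πb + β • (πp - πb)) = (1 - β) • (πp - πb) from by module,
      norm_smul, mul_pow, Real.norm_eq_abs, sq_abs]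
  have hC : r₁ / 2 * ‖πp - πb‖ ^ 2 - r₁ / 2 * ‖πp - πbp‖ ^ 2 =
      (2 - β) / (2 * β) * r₁ * ‖πbp - πb‖ ^ 2 := by
    rw [hC1, hC2]; field_simp; ring
  have hD1 : ‖pbp - pb‖ ^ 2 = μ ^ 2 * ‖pp - pb‖ ^ 2 := by
    rw [hpbp, add_sub_cancel_left, norm_smul, mul_pow, Real.norm_eq_abs, sq_abs]
  have hD2 : ‖pp - pbp‖ ^ 2 = (1 - μ) ^ 2 * ‖pp - pb‖ ^ 2 := by
    rw [hpbp, show pp - (pb + μ • (pp - pb)) = (1 - μ) • (pp - pb) from by module,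
      norm_smul, mul_pow, Real.norm_eq_abs, sq_abs]
  have hD : -(r₂ / 2 * ‖pp - pb‖ ^ 2) + r₂ / 2 * ‖pp - pbp‖ ^ 2 =
      (μ - 2) / (2 * μ) * r₂ * ‖pbp - pb‖ ^ 2 := by
    rw [hD1, hD2]; field_simp; ring
  -- Combine everything
  simp only [chi]
  rw [show ‖pp - p‖ = ‖p - pp‖ from norm_sub_rev _ _]
  linarith [hA, hB, hB0, hi2, hC, hD]
end
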